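/- arXiv:1907.11470 — 6 statements merged into one kernel-verified Lean document; each statement's English description precedes it below -/
import Mathlib

section
/- Let {C_{γ,δ}(t)}_{t>0} be a general fractional cosine operator function of order γ ∈ (1,2) and type δ ∈ [0,1] on a Banach space X. Then for every x ∈ X, lim_{s→0+} Γ(2γ+δ(2−γ)−1) · J_s^γ C_{γ,δ}(s)x / s^{2γ+δ(2−γ)−2} = x. -/
open MeasureTheory Filter Topology

/-- Riemann–Liouville fractional integral of order `α` of a vector-valued function. -/
noncomputable def RLv {X : Type*} [NormedAddCommGroup X] [NormedSpace ℝ X] (α : ℝ)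
    (f : ℝ → X) (t : ℝ) : X :=
  (Real.Gamma α)⁻¹ • ∫ s in (0:ℝ)..t, (t - s) ^ (α - 1) • f s

/-- A general fractional cosine operator function of order `γ ∈ (1,2)` and type `δ ∈ [0,1]`:
strong continuity on `(0,∞)`, the limit condition at `0+`, commutativity, and the
functional equation (iv). -/
structure GenFracCosine {X : Type*} [NormedAddCommGroup X] [NormedSpace ℝ X]
    (γ δ : ℝ) (C : ℝ → X →L[ℝ] X) : Prop where
  strongCont : ∀ x : X, ContinuousOn (fun t => C t x) (Set.Ioi 0)
  limit : ∀ x : X, Filter.Tendsto (fun t : ℝ => (t ^ (γ + δ * (2 - γ) - 2))⁻¹ • C t x)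
      (𝓝[>] (0:ℝ)) (𝓝 ((Real.Gamma (γ + δ * (2 - γ) - 1))⁻¹ • x))
  comm : ∀ t s : ℝ, 0 < t → 0 < s → ∀ x : X, C t (C s x) = C s (C t x)
  funEq : ∀ t s : ℝ, 0 < t → 0 < s → ∀ x : X,
    C s (RLv γ (fun τ => C τ x) t) - RLv γ (fun τ => C τ (C t x)) s
      = (s ^ (γ + δ * (2 - γ) - 2) / Real.Gamma (γ + δ * (2 - γ) - 1)) •
          RLv γ (fun τ => C τ x) t
        - (t ^ (γ + δ * (2 - γ) - 2) / Real.Gamma (γ + δ * (2 - γ) - 1)) •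
          RLv γ (fun τ => C τ x) s

/-- `InGen γ δ C x y` means `x ∈ D(A)` and `A x = y`, where `A` is the generator of the
general fractional cosine operator function `C`. -/
def InGen {X : Type*} [NormedAddCommGroup X] [NormedSpace ℝ X]
    (γ δ : ℝ) (C : ℝ → X →L[ℝ] X) (x y : X) : Prop :=
  Filter.Tendsto (fun t : ℝ => Real.Gamma (2 * γ + δ * (2 - γ) - 1) •
      (t ^ (2 * γ + δ * (2 - γ) - 2))⁻¹ •
        (C t x - (t ^ (γ + δ * (2 - γ) - 2) / Real.Gamma (γ + δ * (2 - γ) - 1)) • x))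
    (𝓝[>] (0:ℝ)) (𝓝 y)

lemma real_beta_scaled {p q s : ℝ} (hp : 0 < p) (hq : 0 < q) (hs : 0 < s) :
    ∫ τ in (0:ℝ)..s, τ ^ (p - 1) * (s - τ) ^ (q - 1)
      = s ^ (p + q - 1) * (Real.Gamma p * Real.Gamma q / Real.Gamma (p + q)) := by
  have hcs := Complex.betaIntegral_scaled (p : ℂ) (q : ℂ) hs
  have hbeta := Complex.Gamma_mul_Gamma_eq_betaIntegral
    (s := (p:ℂ)) (t := (q:ℂ)) (by simpa using hp) (by simpa using hq)
  have hGpq : Real.Gamma (p + q) ≠ 0 := (Real.Gamma_pos_of_pos (by linarith)).ne'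
  have hGpqC : Complex.Gamma ((p:ℂ) + q) ≠ 0 := by
    rw [← Complex.ofReal_add, Complex.Gamma_ofReal]
    exact_mod_cast hGpq
  have hbeta' : Complex.betaIntegral p q
      = ((Real.Gamma p * Real.Gamma q / Real.Gamma (p + q) : ℝ) : ℂ) := by
    rw [← Complex.ofReal_add, Complex.Gamma_ofReal, Complex.Gamma_ofReal,
      Complex.Gamma_ofReal] at hbeta
    have hne : ((Real.Gamma (p + q) : ℝ) : ℂ) ≠ 0 := by exact_mod_cast hGpq
    rw [Complex.ofReal_div, Complex.ofReal_mul, eq_div_iff hne, mul_comm]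
    exact hbeta.symm
  have hcast : ∀ τ ∈ Set.uIcc (0:ℝ) s,
      ((τ ^ (p - 1) * (s - τ) ^ (q - 1) : ℝ) : ℂ)
        = (τ : ℂ) ^ ((p:ℂ) - 1) * ((s : ℂ) - τ) ^ ((q:ℂ) - 1) := by
    intro τ hτ
    rw [Set.uIcc_of_le hs.le] at hτ
    push_cast
    rw [Complex.ofReal_cpow hτ.1, Complex.ofReal_cpow (by linarith [hτ.2] : (0:ℝ) ≤ s - τ)]
    push_cast
    ring_nf
  have key : ((∫ τ in (0:ℝ)..s, τ ^ (p - 1) * (s - τ) ^ (q - 1) : ℝ) : ℂ)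
      = ((s ^ (p + q - 1) * (Real.Gamma p * Real.Gamma q / Real.Gamma (p + q)) : ℝ) : ℂ) := by
    rw [← intervalIntegral.integral_ofReal, intervalIntegral.integral_congr hcast, hcs, hbeta']
    have he : (p:ℂ) + q - 1 = ((p + q - 1 : ℝ) : ℂ) := by push_cast; ring
    rw [he, ← Complex.ofReal_cpow hs.le]
    norm_cast
  exact_mod_cast key

lemma aux_tendsto {X : Type*} [NormedAddCommGroup X] [NormedSpace ℝ X] [CompleteSpace X]
    {p q : ℝ} (hp : 0 < p) (hq : 1 < q) {g : ℝ → X} {L : X}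
    (hg : ContinuousOn g (Set.Ioi 0))
    (hlim : Filter.Tendsto g (𝓝[>] (0:ℝ)) (𝓝 L)) :
    Filter.Tendsto
      (fun s : ℝ => (s ^ (p + q - 1))⁻¹ •
        ∫ τ in (0:ℝ)..s, (τ ^ (p - 1) * (s - τ) ^ (q - 1)) • g τ)
      (𝓝[>] (0:ℝ)) (𝓝 ((Real.Gamma p * Real.Gamma q / Real.Gamma (p + q)) • L)) := by
  set B : ℝ := Real.Gamma p * Real.Gamma q / Real.Gamma (p + q) with hBdef
  have hB : 0 < B := div_pos (mul_pos (Real.Gamma_pos_of_pos hp)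
    (Real.Gamma_pos_of_pos (by linarith))) (Real.Gamma_pos_of_pos (by linarith))
  rw [Metric.tendsto_nhdsWithin_nhds]
  intro ε hε
  set ε' : ℝ := ε / (2 * B) with hε'def
  have hε' : 0 < ε' := div_pos hε (by positivity)
  obtain ⟨d, hd, hdprop⟩ := Metric.tendsto_nhdsWithin_nhds.mp hlim ε' hε'
  refine ⟨d, hd, fun {s} hs hsd => ?_⟩
  have hs0 : 0 < s := hs
  -- bound on g on (0, s]
  have hgb : ∀ τ ∈ Set.Ioc (0:ℝ) s, ‖g τ - L‖ ≤ ε' := by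
    intro τ hτ
    have : dist (g τ) L < ε' := hdprop hτ.1 (by
      rw [Real.dist_eq, sub_zero, abs_of_pos hτ.1]
      calc τ ≤ s := hτ.2
        _ = |s| := (abs_of_pos hs0).symm
        _ < d := by rwa [Real.dist_eq, sub_zero] at hsd)
    rw [dist_eq_norm] at this
    exact this.le
  have hgM : ∀ τ ∈ Set.Ioc (0:ℝ) s, ‖g τ‖ ≤ ‖L‖ + ε' := by
    intro τ hτ
    calc ‖g τ‖ = ‖g τ - L + L‖ := by rw [sub_add_cancel]
      _ ≤ ‖g τ - L‖ + ‖L‖ := norm_add_le _ _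
      _ ≤ ε' + ‖L‖ := by linarith [hgb τ hτ]
      _ = ‖L‖ + ε' := by ring
  set K : ℝ → ℝ := fun τ => τ ^ (p - 1) * (s - τ) ^ (q - 1) with hKdef
  have hKnn : ∀ τ ∈ Set.Ioc (0:ℝ) s, 0 ≤ K τ := by
    intro τ hτ
    exact mul_nonneg (Real.rpow_nonneg hτ.1.le _)
      (Real.rpow_nonneg (by linarith [hτ.2]) _)
  have hKint : IntervalIntegrable K volume 0 s := by
    apply (intervalIntegral.intervalIntegrable_rpow' (by linarith : (-1:ℝ) < p - 1)).mul_continuousOn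
    apply ContinuousOn.rpow_const
    · exact (continuous_const.sub continuous_id).continuousOn
    · intro τ _; right; linarith
  have hKI : ∫ τ in (0:ℝ)..s, K τ = s ^ (p + q - 1) * B := real_beta_scaled hp (by linarith) hs0
  -- integrability of the vector integrand
  have hgm : AEStronglyMeasurable g (volume.restrict (Set.Ioc (0:ℝ) s)) :=
    (hg.mono (fun τ hτ => hτ.1)).aestronglyMeasurable measurableSet_Ioc
  have hKcont : ContinuousOn K (Set.Ioc (0:ℝ) s) := by
    apply ContinuousOn.mul
    · exact ContinuousOn.rpow_const continuousOn_id (fun τ hτ => Or.inl hτ.1.ne')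
    · exact ContinuousOn.rpow_const (continuous_const.sub continuous_id).continuousOn
        (fun τ _ => Or.inr (by linarith))
  have hKm : AEStronglyMeasurable K (volume.restrict (Set.Ioc (0:ℝ) s)) :=
    hKcont.aestronglyMeasurable measurableSet_Ioc
  have hint : IntervalIntegrable (fun τ => K τ • g τ) volume 0 s := by
    rw [intervalIntegrable_iff_integrableOn_Ioc_of_le hs0.le]
    have hKg : IntegrableOn K (Set.Ioc 0 s) :=
      (intervalIntegrable_iff_integrableOn_Ioc_of_le hs0.le).mp hKint
    apply Integrable.mono' (hKg.mul_const (‖L‖ + ε')) (hKm.smul hgm)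
    refine (ae_restrict_iff' measurableSet_Ioc).mpr (Filter.Eventually.of_forall fun τ hτ => ?_)
    show ‖K τ • g τ‖ ≤ _
    rw [norm_smul, Real.norm_eq_abs, abs_of_nonneg (hKnn τ hτ)]
    exact mul_le_mul_of_nonneg_left (hgM τ hτ) (hKnn τ hτ)
  have hKLint : IntervalIntegrable (fun τ => K τ • L) volume 0 s :=
    (intervalIntegrable_iff_integrableOn_Ioc_of_le hs0.le).mpr
      (((intervalIntegrable_iff_integrableOn_Ioc_of_le hs0.le).mp hKint).smul_const L)
  have hIL : ∫ τ in (0:ℝ)..s, K τ • L = (s ^ (p + q - 1) * B) • L := by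
    rw [intervalIntegral.integral_smul_const, hKI]
  have hsub : (∫ τ in (0:ℝ)..s, K τ • g τ) - (s ^ (p + q - 1) * B) • L
      = ∫ τ in (0:ℝ)..s, K τ • (g τ - L) := by
    rw [← hIL, ← intervalIntegral.integral_sub hint hKLint]
    simp [smul_sub]
  have hnorm : ‖∫ τ in (0:ℝ)..s, K τ • (g τ - L)‖ ≤ s ^ (p + q - 1) * B * ε' := by
    have hb := intervalIntegral.norm_integral_le_abs_of_norm_le
      (f := fun τ => K τ • (g τ - L)) (g := fun τ => K τ * ε')
      (by
        rw [Set.uIoc_of_le hs0.le]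
        refine (ae_restrict_iff' measurableSet_Ioc).mpr
          (Filter.Eventually.of_forall fun τ hτ => ?_)
        rw [norm_smul, Real.norm_eq_abs, abs_of_nonneg (hKnn τ hτ)]
        exact mul_le_mul_of_nonneg_left (hgb τ hτ) (hKnn τ hτ))
      (hKint.mul_const ε')
    refine hb.trans_eq ?_
    rw [intervalIntegral.integral_mul_const, hKI,
      abs_of_nonneg (mul_nonneg (mul_nonneg (Real.rpow_nonneg hs0.le _) hB.le) hε'.le)]
  have hsX : 0 < s ^ (p + q - 1) := Real.rpow_pos_of_pos hs0 _
  rw [dist_eq_norm]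
  have hrw : (s ^ (p + q - 1))⁻¹ • (∫ τ in (0:ℝ)..s, K τ • g τ) - B • L
      = (s ^ (p + q - 1))⁻¹ •
          ((∫ τ in (0:ℝ)..s, K τ • g τ) - (s ^ (p + q - 1) * B) • L) := by
    rw [smul_sub, smul_smul]
    congr 2
    field_simp
  calc ‖(s ^ (p + q - 1))⁻¹ • (∫ τ in (0:ℝ)..s, K τ • g τ) - B • L‖
      = (s ^ (p + q - 1))⁻¹ * ‖∫ τ in (0:ℝ)..s, K τ • (g τ - L)‖ := by
        rw [hrw, hsub, norm_smul, Real.norm_eq_abs, abs_of_pos (inv_pos.mpr hsX)]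
    _ ≤ (s ^ (p + q - 1))⁻¹ * (s ^ (p + q - 1) * B * ε') := by
        exact mul_le_mul_of_nonneg_left hnorm (inv_pos.mpr hsX).le
    _ = B * ε' := by field_simp
    _ = ε / 2 := by rw [hε'def]; field_simp
    _ < ε := by linarith

theorem stmt4 {X : Type*} [NormedAddCommGroup X] [NormedSpace ℝ X] [CompleteSpace X]
    (γ δ : ℝ) (hγ1 : 1 < γ) (hγ2 : γ < 2) (hδ0 : 0 ≤ δ) (hδ1 : δ ≤ 1)
    (C : ℝ → X →L[ℝ] X) (hC : GenFracCosine γ δ C) :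
    ∀ x : X, Filter.Tendsto
      (fun s : ℝ => Real.Gamma (2 * γ + δ * (2 - γ) - 1) •
        (s ^ (2 * γ + δ * (2 - γ) - 2))⁻¹ • RLv γ (fun τ => C τ x) s)
      (𝓝[>] (0:ℝ)) (𝓝 x) := by
  intro x
  set β : ℝ := γ + δ * (2 - γ) - 1 with hβ
  have hβpos : 0 < β := by
    have h1 : 0 ≤ δ * (2 - γ) := mul_nonneg hδ0 (by linarith)
    rw [hβ]; linarith
  have e1 : γ + δ * (2 - γ) - 2 = β - 1 := by rw [hβ]; ring
  have e2 : 2 * γ + δ * (2 - γ) - 1 = β + γ := by rw [hβ]; ring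
  have e3 : 2 * γ + δ * (2 - γ) - 2 = β + γ - 1 := by rw [hβ]; ring
  simp only [e2, e3]
  have hlim := hC.limit x
  simp only [e1] at hlim
  have hg : ContinuousOn (fun τ : ℝ => (τ ^ (β - 1))⁻¹ • C τ x) (Set.Ioi 0) := by
    apply ContinuousOn.smul
    · exact (ContinuousOn.rpow_const continuousOn_id
        (fun τ hτ => Or.inl (ne_of_gt hτ))).inv₀
        (fun τ hτ => (Real.rpow_pos_of_pos hτ _).ne')
    · exact hC.strongCont x
  have htend := aux_tendsto hβpos hγ1 hg hlim
  have hΓβ : (0:ℝ) < Real.Gamma β := Real.Gamma_pos_of_pos hβpos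
  have hΓγ : (0:ℝ) < Real.Gamma γ := Real.Gamma_pos_of_pos (by linarith)
  have hΓβγ : (0:ℝ) < Real.Gamma (β + γ) := Real.Gamma_pos_of_pos (by linarith)
  have hx : (Real.Gamma (β + γ) * (Real.Gamma γ)⁻¹) •
      ((Real.Gamma β * Real.Gamma γ / Real.Gamma (β + γ)) •
        ((Real.Gamma (γ + δ * (2 - γ) - 1))⁻¹ • x)) = x := by
    rw [← hβ, smul_smul, smul_smul]
    have hc : Real.Gamma (β + γ) * (Real.Gamma γ)⁻¹ *
        (Real.Gamma β * Real.Gamma γ / Real.Gamma (β + γ)) * (Real.Gamma β)⁻¹ = 1 := by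
      field_simp
    rw [hc, one_smul]
  have hfinal := htend.const_smul (Real.Gamma (β + γ) * (Real.Gamma γ)⁻¹)
  rw [hx] at hfinal
  refine Filter.Tendsto.congr' ?_ hfinal
  filter_upwards [self_mem_nhdsWithin] with s hs
  have hs0 : (0:ℝ) < s := hs
  have hI : (∫ τ in (0:ℝ)..s, (τ ^ (β - 1) * (s - τ) ^ (γ - 1)) •
        ((τ ^ (β - 1))⁻¹ • C τ x))
      = ∫ τ in (0:ℝ)..s, (s - τ) ^ (γ - 1) • C τ x := by
    apply intervalIntegral.integral_congr_ae
    rw [Set.uIoc_of_le hs0.le]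
    refine Filter.Eventually.of_forall fun τ hτ => ?_
    rw [smul_smul]
    congr 1
    field_simp [(Real.rpow_pos_of_pos hτ.1 (β - 1)).ne']
  simp only [RLv]
  rw [hI]
  simp only [smul_smul]
  congr 1
  ring
end

section
/- Let {C_{γ,δ}(t)}_{t>0} be a general fractional cosine operator function of order γ ∈ (1,2) and type δ ∈ [0,1] with generator A. Then for every x ∈ X and t > 0, J_t^γ C_{γ,δ}(t)x ∈ D(A) and C_{γ,δ}(t)x = t^{γ+δ(2−γ)−2} x / Γ(γ+δ(2−γ)−1) + A J_t^γ C_{γ,δ}(t)x. -/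
open MeasureTheory Filter Topology

lemma realBeta {a b : ℝ} (ha : 0 < a) (hb : 0 < b) :
    ∫ x in (0:ℝ)..1, x ^ (a - 1) * (1 - x) ^ (b - 1)
      = Real.Gamma a * Real.Gamma b / Real.Gamma (a + b) := by
  have h := Complex.Gamma_mul_Gamma_eq_betaIntegral (s := a) (t := b) (by simpa) (by simpa)
  have key : Complex.betaIntegral a b
      = ((∫ x in (0:ℝ)..1, x ^ (a - 1) * (1 - x) ^ (b - 1) : ℝ) : ℂ) := by
    rw [Complex.betaIntegral, ← intervalIntegral.integral_ofReal]
    refine intervalIntegral.integral_congr fun x hx => ?_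
    rw [Set.uIcc_of_le (by norm_num : (0:ℝ) ≤ 1)] at hx
    rw [Complex.ofReal_mul, Complex.ofReal_cpow hx.1,
      Complex.ofReal_cpow (by linarith [hx.2] : (0:ℝ) ≤ 1 - x)]
    push_cast
    ring
  rw [key] at h
  have hG : Real.Gamma (a + b) ≠ 0 := (Real.Gamma_pos_of_pos (by linarith)).ne'
  have h2 := congrArg Complex.re h
  simp only [← Complex.ofReal_mul, Complex.Gamma_ofReal, ← Complex.ofReal_add,
    Complex.ofReal_re] at h2
  field_simp
  linarith [h2]

lemma rpow_cont (p : ℝ) (hp : 0 < p) : Continuous fun y : ℝ => y ^ p :=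
  continuous_iff_continuousAt.2 fun x => Real.continuousAt_rpow_const x p (Or.inr hp.le)

lemma kernelIntble {γ μ : ℝ} (hγ : 1 < γ) (hμ : 0 < μ) (s : ℝ) :
    IntervalIntegrable (fun τ => (s - τ) ^ (γ - 1) * τ ^ (μ - 1)) volume 0 s := by
  have h1 : IntervalIntegrable (fun τ : ℝ => τ ^ (μ - 1)) volume 0 s :=
    intervalIntegral.intervalIntegrable_rpow' (by linarith)
  exact h1.continuousOn_mul
    (((rpow_cont (γ - 1) (by linarith)).comp (continuous_const.sub continuous_id)).continuousOn)

lemma kernelScale {γ μ s : ℝ} (hγ : 1 < γ) (hμ : 0 < μ) (hs : 0 < s) :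
    ∫ τ in (0:ℝ)..s, (s - τ) ^ (γ - 1) * τ ^ (μ - 1)
      = s ^ (γ + μ - 1) * (Real.Gamma μ * Real.Gamma γ / Real.Gamma (μ + γ)) := by
  have hcomp := intervalIntegral.integral_comp_mul_left
    (a := 0) (b := 1) (fun τ => (s - τ) ^ (γ - 1) * τ ^ (μ - 1)) (c := s) hs.ne'
  simp only [mul_zero, mul_one] at hcomp
  have heq : ∫ x in (0:ℝ)..1, (s - s * x) ^ (γ - 1) * (s * x) ^ (μ - 1)
      = s ^ (γ - 1) * s ^ (μ - 1) *
        ∫ x in (0:ℝ)..1, x ^ (μ - 1) * (1 - x) ^ (γ - 1) := by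
    rw [← intervalIntegral.integral_const_mul]
    refine intervalIntegral.integral_congr fun x hx => ?_
    rw [Set.uIcc_of_le (by norm_num : (0:ℝ) ≤ 1)] at hx
    rw [show s - s * x = s * (1 - x) by ring,
      Real.mul_rpow hs.le (by linarith [hx.2]), Real.mul_rpow hs.le hx.1]
    ring
  rw [heq, realBeta hμ (by linarith)] at hcomp
  have : (∫ τ in (0:ℝ)..s, (s - τ) ^ (γ - 1) * τ ^ (μ - 1))
      = s * (s ^ (γ - 1) * s ^ (μ - 1) * (Real.Gamma μ * Real.Gamma γ / Real.Gamma (μ + γ))) := by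
    rw [hcomp, smul_eq_mul, ← mul_assoc, mul_inv_cancel₀ hs.ne', one_mul]
  rw [this]
  rw [show s * (s ^ (γ-1) * s ^ (μ-1) * (Real.Gamma μ * Real.Gamma γ / Real.Gamma (μ + γ)))
    = (s ^ (1:ℝ) * s ^ (γ-1) * s ^ (μ-1)) * (Real.Gamma μ * Real.Gamma γ / Real.Gamma (μ + γ))
    by rw [Real.rpow_one]; ring, ← Real.rpow_add hs, ← Real.rpow_add hs]
  congr 2
  ring

lemma keyLim {X : Type*} [NormedAddCommGroup X] [NormedSpace ℝ X] [CompleteSpace X]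
    (γ δ : ℝ) (hγ1 : 1 < γ) (hγ2 : γ < 2) (hδ0 : 0 ≤ δ)
    (C : ℝ → X →L[ℝ] X) (hC : GenFracCosine γ δ C) (u : X) :
    Filter.Tendsto (fun s : ℝ => Real.Gamma (2 * γ + δ * (2 - γ) - 1) •
        (s ^ (2 * γ + δ * (2 - γ) - 2))⁻¹ • RLv γ (fun τ => C τ u) s)
      (𝓝[>] (0:ℝ)) (𝓝 u) := by
  have hδγ : 0 ≤ δ * (2 - γ) := mul_nonneg hδ0 (by linarith)
  set μ := γ + δ * (2 - γ) - 1 with hμdef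
  have hμ : 0 < μ := by simp only [hμdef]; linarith
  have hΓγ : 0 < Real.Gamma γ := Real.Gamma_pos_of_pos (by linarith)
  have hΓμ : 0 < Real.Gamma μ := Real.Gamma_pos_of_pos hμ
  have hΓe : 0 < Real.Gamma (μ + γ) := Real.Gamma_pos_of_pos (by linarith)
  have he1 : 2 * γ + δ * (2 - γ) - 1 = μ + γ := by simp only [hμdef]; ring
  have he2 : 2 * γ + δ * (2 - γ) - 2 = γ + μ - 1 := by simp only [hμdef]; ring
  set c : X := (Real.Gamma μ)⁻¹ • u with hcdef
  have hβ : γ + δ * (2 - γ) - 2 = μ - 1 := by simp only [hμdef]; ring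
  have h0 : Filter.Tendsto (fun τ : ℝ => (τ ^ (μ - 1))⁻¹ • C τ u) (𝓝[>] (0:ℝ)) (𝓝 c) := by
    have := hC.limit u
    rw [hβ] at this
    exact this
  rw [Metric.tendsto_nhds]
  intro ε hε
  set ε' : ℝ := ε / (2 * Real.Gamma μ) with hε'def
  have hε' : 0 < ε' := by positivity
  have hev : ∀ᶠ τ in 𝓝[>] (0:ℝ), dist ((τ ^ (μ - 1))⁻¹ • C τ u) c < ε' :=
    Metric.tendsto_nhds.1 h0 ε' hε'
  obtain ⟨δ₀, hδ₀pos, hδ₀⟩ := mem_nhdsGT_iff_exists_Ioo_subset.1 hev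
  rw [Set.mem_Ioi] at hδ₀pos
  filter_upwards [mem_nhdsGT_iff_exists_Ioo_subset.2
    ⟨δ₀, Set.mem_Ioi.2 hδ₀pos, subset_rfl⟩] with s hs
  obtain ⟨hs0, hsδ⟩ := hs
  -- notation
  set g : ℝ → X := fun τ => (τ ^ (μ - 1))⁻¹ • C τ u with hgdef
  set k : ℝ → ℝ := fun τ => (s - τ) ^ (γ - 1) * τ ^ (μ - 1) with hkdef
  set h : ℝ → X := fun τ => (s - τ) ^ (γ - 1) • C τ u with hhdef
  have huIoc : Set.uIoc (0:ℝ) s = Set.Ioc 0 s := Set.uIoc_of_le hs0.le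
  have hknn : ∀ τ ∈ Set.Ioc (0:ℝ) s, 0 ≤ k τ := fun τ hτ =>
    mul_nonneg (Real.rpow_nonneg (by linarith [hτ.2]) _) (Real.rpow_nonneg hτ.1.le _)
  have hheq : ∀ τ ∈ Set.Ioc (0:ℝ) s, h τ = k τ • g τ := by
    intro τ hτ
    have hne : τ ^ (μ - 1) ≠ 0 := (Real.rpow_pos_of_pos hτ.1 _).ne'
    simp only [hhdef, hkdef, hgdef, mul_smul, smul_inv_smul₀ hne]
  have hgb : ∀ τ ∈ Set.Ioc (0:ℝ) s, ‖g τ - c‖ ≤ ε' := by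
    intro τ hτ
    have : τ ∈ Set.Ioo (0:ℝ) δ₀ := ⟨hτ.1, lt_of_le_of_lt hτ.2 hsδ⟩
    have := hδ₀ this
    rw [Set.mem_setOf_eq, dist_eq_norm] at this
    exact this.le
  have hk_int : IntervalIntegrable k volume 0 s := kernelIntble hγ1 hμ s
  have hkc_int : IntervalIntegrable (fun τ => k τ • c) volume 0 s := by
    have := hk_int
    rw [intervalIntegrable_iff] at this ⊢
    exact this.smul_const c
  have hh_cont : ContinuousOn h (Set.Ioc 0 s) := by
    have h1 : ContinuousOn (fun τ : ℝ => (s - τ) ^ (γ - 1)) (Set.Ioc 0 s) :=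
      ((rpow_cont (γ - 1) (by linarith)).comp (continuous_const.sub continuous_id)).continuousOn
    exact h1.smul ((hC.strongCont u).mono Set.Ioc_subset_Ioi_self)
  have hh_meas : MeasureTheory.AEStronglyMeasurable h
      (MeasureTheory.volume.restrict (Set.Ioc (0:ℝ) s)) :=
    hh_cont.aestronglyMeasurable measurableSet_Ioc
  have hh_int : IntervalIntegrable h volume 0 s := by
    rw [intervalIntegrable_iff, huIoc]
    have hb_int : MeasureTheory.IntegrableOn (fun τ => (‖c‖ + ε') * k τ) (Set.Ioc (0:ℝ) s)
        volume := by
      have := (hk_int.const_mul (‖c‖ + ε'))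
      rwa [intervalIntegrable_iff, huIoc] at this
    refine MeasureTheory.Integrable.mono' hb_int hh_meas ?_
    refine (MeasureTheory.ae_restrict_iff' measurableSet_Ioc).2 (Filter.Eventually.of_forall ?_)
    intro τ hτ
    rw [hheq τ hτ]
    rw [norm_smul, Real.norm_eq_abs, abs_of_nonneg (hknn τ hτ)]
    have : ‖g τ‖ ≤ ‖c‖ + ε' := by
      have := hgb τ hτ
      have h2 := norm_sub_norm_le (g τ) c
      linarith
    calc k τ * ‖g τ‖ ≤ k τ * (‖c‖ + ε') := by
          exact mul_le_mul_of_nonneg_left this (hknn τ hτ)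
      _ = (‖c‖ + ε') * k τ := by ring
  have hK : ∫ τ in (0:ℝ)..s, k τ
      = s ^ (γ + μ - 1) * (Real.Gamma μ * Real.Gamma γ / Real.Gamma (μ + γ)) :=
    kernelScale hγ1 hμ hs0
  have hKnn : 0 ≤ ∫ τ in (0:ℝ)..s, k τ := by
    rw [hK]; positivity
  -- the central estimate
  have hsub : (∫ τ in (0:ℝ)..s, (h τ - k τ • c))
      = (∫ τ in (0:ℝ)..s, h τ) - (∫ τ in (0:ℝ)..s, k τ) • c := by
    rw [intervalIntegral.integral_sub hh_int hkc_int, intervalIntegral.integral_smul_const]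
  have hnorm : ‖(∫ τ in (0:ℝ)..s, h τ) - (∫ τ in (0:ℝ)..s, k τ) • c‖
      ≤ ε' * ∫ τ in (0:ℝ)..s, k τ := by
    rw [← hsub]
    have hb : ‖∫ τ in (0:ℝ)..s, (h τ - k τ • c)‖ ≤ |∫ τ in (0:ℝ)..s, ε' * k τ| := by
      refine le_trans (intervalIntegral.norm_integral_le_of_norm_le hs0.le
        (Filter.Eventually.of_forall ?_) (hk_int.const_mul ε')) (le_abs_self _)
      intro τ hτ
      rw [hheq τ hτ, ← smul_sub, norm_smul, Real.norm_eq_abs, abs_of_nonneg (hknn τ hτ)]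
      calc k τ * ‖g τ - c‖ ≤ k τ * ε' := mul_le_mul_of_nonneg_left (hgb τ hτ) (hknn τ hτ)
        _ = ε' * k τ := by ring
    rw [intervalIntegral.integral_const_mul, abs_of_nonneg (mul_nonneg hε'.le hKnn)] at hb
    exact hb
  -- final algebra
  set sp : ℝ := s ^ (γ + μ - 1) with hspdef
  have hsp : 0 < sp := Real.rpow_pos_of_pos hs0 _
  set a : ℝ := Real.Gamma (μ + γ) * (sp⁻¹ * (Real.Gamma γ)⁻¹) with hadef
  have ha : 0 < a := by positivity
  have haK : a * ∫ τ in (0:ℝ)..s, k τ = Real.Gamma μ := by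
    rw [hK, hadef]
    field_simp
  have hfs : Real.Gamma (2 * γ + δ * (2 - γ) - 1) •
      (s ^ (2 * γ + δ * (2 - γ) - 2))⁻¹ • RLv γ (fun τ => C τ u) s
      = a • ∫ τ in (0:ℝ)..s, h τ := by
    rw [he1, he2, RLv, ← hspdef, hadef, smul_smul, smul_smul, mul_assoc]
  have hu : u = a • ((∫ τ in (0:ℝ)..s, k τ) • c) := by
    rw [smul_smul, haK, hcdef, smul_inv_smul₀ hΓμ.ne']
  rw [dist_eq_norm, hfs]
  calc ‖(a • ∫ τ in (0:ℝ)..s, h τ) - u‖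
      = ‖a • ((∫ τ in (0:ℝ)..s, h τ) - (∫ τ in (0:ℝ)..s, k τ) • c)‖ := by
        rw [smul_sub, ← hu]
    _ = a * ‖(∫ τ in (0:ℝ)..s, h τ) - (∫ τ in (0:ℝ)..s, k τ) • c‖ := by
        rw [norm_smul, Real.norm_eq_abs, abs_of_pos ha]
    _ ≤ a * (ε' * ∫ τ in (0:ℝ)..s, k τ) := mul_le_mul_of_nonneg_left hnorm ha.le
    _ = ε' * (a * ∫ τ in (0:ℝ)..s, k τ) := by ring
    _ = ε' * Real.Gamma μ := by rw [haK]
    _ = ε / 2 := by rw [hε'def]; field_simp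
    _ < ε := by linarith

theorem stmt5 {X : Type*} [NormedAddCommGroup X] [NormedSpace ℝ X] [CompleteSpace X]
    (γ δ : ℝ) (hγ1 : 1 < γ) (hγ2 : γ < 2) (hδ0 : 0 ≤ δ) (hδ1 : δ ≤ 1)
    (C : ℝ → X →L[ℝ] X) (hC : GenFracCosine γ δ C) :
    ∀ x : X, ∀ t : ℝ, 0 < t → ∃ y : X,
      InGen γ δ C (RLv γ (fun τ => C τ x) t) y ∧
      C t x = (t ^ (γ + δ * (2 - γ) - 2) / Real.Gamma (γ + δ * (2 - γ) - 1)) • x + y := by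
  intro x t ht
  set q : ℝ := t ^ (γ + δ * (2 - γ) - 2) / Real.Gamma (γ + δ * (2 - γ) - 1) with hqdef
  refine ⟨C t x - q • x, ?_, by abel⟩
  rw [InGen]
  have hkt := keyLim γ δ hγ1 hγ2 hδ0 C hC (C t x)
  have hkx := (keyLim γ δ hγ1 hγ2 hδ0 C hC x).const_smul q
  have hlim := hkt.sub hkx
  refine Filter.Tendsto.congr' ?_ hlim
  filter_upwards [self_mem_nhdsWithin] with s hs
  rw [Set.mem_Ioi] at hs
  have hfe := hC.funEq t s ht hs x
  have h2 : C s (RLv γ (fun τ => C τ x) t)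
      - (s ^ (γ + δ * (2 - γ) - 2) / Real.Gamma (γ + δ * (2 - γ) - 1)) •
          RLv γ (fun τ => C τ x) t
      = RLv γ (fun τ => C τ (C t x)) s - q • RLv γ (fun τ => C τ x) s := by
    rw [hqdef]
    rw [sub_eq_sub_iff_sub_eq_sub] at hfe
    exact hfe
  rw [h2, smul_sub, smul_sub, smul_comm q, smul_comm q]
end

section
/- Let {C_{γ,δ}(t)}_{t>0} be a general fractional cosine operator function of order γ ∈ (1,2) and type δ ∈ [0,1] with generator A. Then for every x ∈ D(A) and t > 0, C_{γ,δ}(t)x = t^{γ+δ(2−γ)−2} x / Γ(γ+δ(2−γ)−1) + J_t^γ C_{γ,δ}(t) A x. -/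
open MeasureTheory Filter Topology Set

lemma aux_power_integral {γ a s : ℝ} (hγ : 0 < γ) (ha : -1 < a) (hs : 0 < s) :
    ∫ τ in (0:ℝ)..s, (s - τ) ^ (γ - 1) * τ ^ a
      = s ^ (γ + a) * (Real.Gamma γ * Real.Gamma (a + 1) / Real.Gamma (γ + a + 1)) := by
  have ha1 : (0:ℝ) < a + 1 := by linarith
  have hG : (0:ℝ) < Real.Gamma (γ + a + 1) := Real.Gamma_pos_of_pos (by linarith)
  have hbeta := Complex.Gamma_mul_Gamma_eq_betaIntegral
    (s := (a:ℂ) + 1) (t := (γ:ℂ)) (by simpa using ha1) (by simpa using hγ)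
  have hscaled := Complex.betaIntegral_scaled ((a:ℂ) + 1) (γ:ℂ) hs
  have h1 : ((∫ τ in (0:ℝ)..s, (s - τ) ^ (γ - 1) * τ ^ a : ℝ) : ℂ)
      = ∫ τ in (0:ℝ)..s, (τ:ℂ) ^ ((a:ℂ) + 1 - 1) * ((s:ℂ) - τ) ^ ((γ:ℂ) - 1) := by
    rw [← intervalIntegral.integral_ofReal]
    apply intervalIntegral.integral_congr
    intro τ hτ
    rw [Set.uIcc_of_le hs.le] at hτ
    have h0τ : (0:ℝ) ≤ τ := hτ.1
    have hτs : (0:ℝ) ≤ s - τ := by linarith [hτ.2]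
    dsimp only
    rw [show (a:ℂ) + 1 - 1 = ((a:ℝ):ℂ) by ring,
      show (s:ℂ) - (τ:ℂ) = ((s - τ : ℝ) : ℂ) by push_cast; ring,
      show (γ:ℂ) - 1 = ((γ - 1 : ℝ) : ℂ) by push_cast; ring,
      ← Complex.ofReal_cpow h0τ, ← Complex.ofReal_cpow hτs]
    push_cast
    ring
  -- Gamma values as reals
  have hGc : Complex.Gamma ((a:ℂ) + 1 + (γ:ℂ)) = ((Real.Gamma (γ + a + 1) : ℝ) : ℂ) := by
    rw [show (a:ℂ) + 1 + (γ:ℂ) = ((γ + a + 1 : ℝ) : ℂ) by push_cast; ring, Complex.Gamma_ofReal]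
  have hGa : Complex.Gamma ((a:ℂ) + 1) = ((Real.Gamma (a+1) : ℝ) : ℂ) := by
    rw [show (a:ℂ) + 1 = ((a + 1 : ℝ) : ℂ) by push_cast; ring, Complex.Gamma_ofReal]
  have hGg : Complex.Gamma ((γ:ℂ)) = ((Real.Gamma γ : ℝ) : ℂ) := Complex.Gamma_ofReal γ
  have hbne : Complex.betaIntegral ((a:ℂ) + 1) (γ:ℂ)
      = ((Real.Gamma (a+1) * Real.Gamma γ / Real.Gamma (γ + a + 1) : ℝ) : ℂ) := by
    have hne : Complex.Gamma ((a:ℂ) + 1 + (γ:ℂ)) ≠ 0 := by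
      rw [hGc]; exact_mod_cast hG.ne'
    rw [hGc, hGa, hGg] at hbeta
    have hne' : ((Real.Gamma (γ + a + 1) : ℝ) : ℂ) ≠ 0 := by exact_mod_cast hG.ne'
    push_cast
    rw [eq_div_iff hne']
    linear_combination -hbeta
  have hpow : ((s:ℂ)) ^ ((a:ℂ) + 1 + (γ:ℂ) - 1) = ((s ^ (γ + a) : ℝ) : ℂ) := by
    rw [show (a:ℂ) + 1 + (γ:ℂ) - 1 = ((γ + a : ℝ) : ℂ) by push_cast; ring,
      Complex.ofReal_cpow hs.le]
  have := h1.trans (hscaled.trans (by rw [hpow, hbne, ← Complex.ofReal_mul]))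
  have h2 := Complex.ofReal_inj.mp this
  rw [h2]; ring

lemma cont_sub_rpow (t c : ℝ) (hc : 0 < c) : Continuous fun τ : ℝ => (t - τ) ^ c := by
  rw [continuous_iff_continuousAt]
  intro x
  exact (Real.continuousAt_rpow_const _ _ (Or.inr hc.le)).comp (by fun_prop)

lemma aux_intervalIntegrable {X : Type*} [NormedAddCommGroup X] [NormedSpace ℝ X]
    {γ a t M : ℝ} (hγ : 1 < γ) (ha : -1 < a) (ht : 0 < t)
    {h : ℝ → X} (hcont : ContinuousOn h (Set.Ioc 0 t))
    (hbnd : ∀ τ ∈ Set.Ioc 0 t, ‖h τ‖ ≤ M * τ ^ a) :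
    IntervalIntegrable (fun τ => (t - τ) ^ (γ - 1) • h τ) volume 0 t := by
  rw [intervalIntegrable_iff_integrableOn_Ioc_of_le ht.le]
  have hmeas : AEStronglyMeasurable (fun τ => (t - τ) ^ (γ - 1) • h τ)
      (volume.restrict (Set.Ioc 0 t)) := by
    apply ContinuousOn.aestronglyMeasurable _ measurableSet_Ioc
    exact ((cont_sub_rpow t (γ - 1) (by linarith)).continuousOn).smul hcont
  have hint : IntegrableOn (fun τ : ℝ => t ^ (γ - 1) * M * τ ^ a) (Set.Ioc 0 t) volume := by
    have := (intervalIntegral.intervalIntegrable_rpow' (a := 0) (b := t) ha).const_mul (t ^ (γ - 1) * M)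
    rwa [intervalIntegrable_iff_integrableOn_Ioc_of_le ht.le] at this
  refine hint.mono' hmeas ?_
  rw [ae_restrict_iff' measurableSet_Ioc]
  filter_upwards with τ hτ
  have h1 : (0:ℝ) ≤ t - τ := by linarith [hτ.2]
  have h2 : (t - τ) ^ (γ - 1) ≤ t ^ (γ - 1) :=
    Real.rpow_le_rpow h1 (by linarith [hτ.1]) (by linarith)
  rw [norm_smul, Real.norm_eq_abs, abs_of_nonneg (Real.rpow_nonneg h1 _)]
  calc (t - τ) ^ (γ - 1) * ‖h τ‖ ≤ t ^ (γ - 1) * (M * τ ^ a) := by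
        apply mul_le_mul h2 (hbnd τ hτ) (norm_nonneg _) (Real.rpow_nonneg ht.le _)
    _ = t ^ (γ - 1) * M * τ ^ a := by ring

lemma aux_opbound {X : Type*} [NormedAddCommGroup X] [NormedSpace ℝ X] [CompleteSpace X]
    {a T : ℝ} (hT : 0 < T) {C : ℝ → X →L[ℝ] X}
    (hcont : ∀ x : X, ContinuousOn (fun t => C t x) (Set.Ioi 0))
    (hlim : ∀ x : X, ∃ l : X, Tendsto (fun t : ℝ => (t ^ a)⁻¹ • C t x) (𝓝[>] (0:ℝ)) (𝓝 l)) :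
    ∃ M : ℝ, ∀ τ ∈ Set.Ioc (0:ℝ) T, ‖C τ‖ ≤ M * τ ^ a := by
  have key : ∀ x : X, ∃ B : ℝ, ∀ τ ∈ Set.Ioc (0:ℝ) T, ‖(τ ^ a)⁻¹ • C τ x‖ ≤ B := by
    intro x
    obtain ⟨l, hl⟩ := hlim x
    have hev := hl.norm.eventually_lt_const (lt_add_one ‖l‖)
    rw [eventually_nhdsWithin_iff, Metric.eventually_nhds_iff] at hev
    obtain ⟨ε, hε, hball⟩ := hev
    -- compact part
    have hcompact : IsCompact (Set.Icc (min ε T) T) := isCompact_Icc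
    have hcont2 : ContinuousOn (fun τ : ℝ => (τ ^ a)⁻¹ • C τ x) (Set.Icc (min ε T) T) := by
      have hpos : ∀ τ ∈ Set.Icc (min ε T) T, (0:ℝ) < τ := fun τ hτ =>
        lt_of_lt_of_le (lt_min hε hT) hτ.1
      have c1 : ContinuousOn (fun τ : ℝ => (τ ^ a)⁻¹) (Set.Icc (min ε T) T) := by
        apply ContinuousOn.inv₀
        · intro τ hτ
          exact (Real.continuousAt_rpow_const _ _ (Or.inl (hpos τ hτ).ne')).continuousWithinAt
        · intro τ hτ
          exact (Real.rpow_pos_of_pos (hpos τ hτ) a).ne'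
      exact c1.smul ((hcont x).mono (fun τ hτ => hpos τ hτ))
    obtain ⟨B, hB⟩ := hcompact.exists_bound_of_continuousOn hcont2
    refine ⟨max (‖l‖ + 1) B, fun τ hτ => ?_⟩
    rcases lt_or_ge τ ε with h | h
    · refine le_trans (le_of_lt ?_) (le_max_left _ _)
      apply hball
      · rw [Real.dist_eq, sub_zero, abs_of_pos hτ.1]; exact h
      · exact hτ.1
    · exact le_trans (hB τ ⟨le_trans (min_le_left _ _) h, hτ.2⟩) (le_max_right _ _)
  -- Banach–Steinhaus over subtype
  have bs : ∃ M : ℝ, ∀ i : Set.Ioc (0:ℝ) T, ‖((i : ℝ) ^ a)⁻¹ • C i‖ ≤ M := by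
    apply banach_steinhaus
    intro x
    obtain ⟨B, hB⟩ := key x
    exact ⟨B, fun i => by simpa using hB i i.2⟩
  obtain ⟨M, hM⟩ := bs
  refine ⟨M, fun τ hτ => ?_⟩
  have hpow : (0:ℝ) < τ ^ a := Real.rpow_pos_of_pos hτ.1 a
  have : (τ ^ a)⁻¹ * ‖C τ‖ ≤ M := by
    have h2 := hM ⟨τ, hτ⟩
    rwa [show ((⟨τ, hτ⟩ : Set.Ioc (0:ℝ) T) : ℝ) = τ from rfl,
      norm_smul (β := X →L[ℝ] X) ((τ ^ a)⁻¹) (C τ), Real.norm_eq_abs,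
      abs_of_pos (inv_pos.mpr hpow)] at h2
  calc ‖C τ‖ = τ ^ a * ((τ ^ a)⁻¹ * ‖C τ‖) := by field_simp
    _ ≤ τ ^ a * M := by apply mul_le_mul_of_nonneg_left this hpow.le
    _ = M * τ ^ a := mul_comm _ _
lemma aux_W {X : Type*} [NormedAddCommGroup X] [NormedSpace ℝ X] [CompleteSpace X]
    {γ a : ℝ} (hγ : 1 < γ) (ha : -1 < a) {C : ℝ → X →L[ℝ] X} {x L : X}
    (hcont : ContinuousOn (fun τ => C τ x) (Set.Ioi 0))
    (hw : Tendsto (fun τ : ℝ => (τ ^ a)⁻¹ • C τ x) (𝓝[>] (0:ℝ)) (𝓝 L)) :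
    Tendsto (fun s : ℝ => (s ^ (γ + a))⁻¹ • ∫ τ in (0:ℝ)..s, (s - τ) ^ (γ - 1) • C τ x)
      (𝓝[>] (0:ℝ)) (𝓝 ((Real.Gamma γ * Real.Gamma (a + 1) / Real.Gamma (γ + a + 1)) • L)) := by
  set B0 := Real.Gamma γ * Real.Gamma (a + 1) / Real.Gamma (γ + a + 1) with hB0
  have hB0pos : 0 < B0 := by
    apply div_pos (mul_pos (Real.Gamma_pos_of_pos (by linarith))
      (Real.Gamma_pos_of_pos (by linarith))) (Real.Gamma_pos_of_pos (by linarith))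
  rw [Metric.tendsto_nhdsWithin_nhds]
  intro ε hε
  set ε' := ε / (B0 + 1) with hε'def
  have hε' : 0 < ε' := div_pos hε (by linarith)
  have hev : ∀ᶠ τ in 𝓝[>] (0:ℝ), dist ((τ ^ a)⁻¹ • C τ x) L < ε' :=
    (Metric.tendsto_nhds.mp hw) ε' hε'
  rw [eventually_nhdsWithin_iff, Metric.eventually_nhds_iff] at hev
  obtain ⟨η, hη, hball⟩ := hev
  refine ⟨η, hη, ?_⟩
  intro s hs hdist
  have hs0 : (0:ℝ) < s := hs
  have hsη : s < η := by rwa [Real.dist_eq, sub_zero, abs_of_pos hs0] at hdist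
  have hwb : ∀ τ ∈ Set.Ioc (0:ℝ) s, ‖(τ ^ a)⁻¹ • C τ x - L‖ < ε' := by
    intro τ hτ
    have h1 : dist τ 0 < η := by
      rw [Real.dist_eq, sub_zero, abs_of_pos hτ.1]; linarith [hτ.2]
    have := hball h1 hτ.1
    rwa [dist_eq_norm] at this
  have hfactor : ∀ τ ∈ Set.Ioc (0:ℝ) s, C τ x - (τ ^ a) • L = (τ ^ a) • ((τ ^ a)⁻¹ • C τ x - L) := by
    intro τ hτ
    have hp : (τ ^ a) ≠ 0 := (Real.rpow_pos_of_pos hτ.1 a).ne'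
    rw [smul_sub, smul_smul, mul_inv_cancel₀ hp, one_smul]
  have hCb : ∀ τ ∈ Set.Ioc (0:ℝ) s, ‖C τ x‖ ≤ (‖L‖ + ε') * τ ^ a := by
    intro τ hτ
    have hp : (0:ℝ) < τ ^ a := Real.rpow_pos_of_pos hτ.1 a
    have h2 : ‖C τ x - (τ ^ a) • L‖ ≤ ε' * τ ^ a := by
      rw [hfactor τ hτ, norm_smul, Real.norm_eq_abs, abs_of_pos hp, mul_comm]
      exact mul_le_mul_of_nonneg_right (hwb τ hτ).le hp.le
    calc ‖C τ x‖ ≤ ‖C τ x - (τ ^ a) • L‖ + ‖(τ ^ a) • L‖ := by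
          simpa using norm_add_le (C τ x - (τ ^ a) • L) ((τ ^ a) • L)
      _ ≤ ε' * τ ^ a + τ ^ a * ‖L‖ := by
          refine add_le_add h2 ?_
          rw [norm_smul, Real.norm_eq_abs, abs_of_pos hp]
      _ = (‖L‖ + ε') * τ ^ a := by ring
  have hint1 : IntervalIntegrable (fun τ => (s - τ) ^ (γ - 1) • C τ x) volume 0 s :=
    aux_intervalIntegrable hγ ha hs0 (hcont.mono (fun τ hτ => hτ.1)) hCb
  have hintS : IntervalIntegrable (fun τ => (s - τ) ^ (γ - 1) * τ ^ a) volume 0 s := by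
    have := aux_intervalIntegrable (X := ℝ) hγ ha hs0 (M := 1)
      (h := fun τ => τ ^ a) (by
        apply ContinuousOn.rpow_const continuousOn_id
        intro τ hτ; exact Or.inl hτ.1.ne') (by
        intro τ hτ
        rw [Real.norm_eq_abs, abs_of_pos (Real.rpow_pos_of_pos hτ.1 a), one_mul])
    simpa [smul_eq_mul] using this
  have hint2 : IntervalIntegrable (fun τ => ((s - τ) ^ (γ - 1) * τ ^ a) • L) volume 0 s :=
    ⟨hintS.1.smul_const L, hintS.2.smul_const L⟩
  have hsp : (0:ℝ) < s ^ (γ + a) := Real.rpow_pos_of_pos hs0 _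
  have key : ((s ^ (γ + a))⁻¹ • ∫ τ in (0:ℝ)..s, (s - τ) ^ (γ - 1) • C τ x) - B0 • L
      = (s ^ (γ + a))⁻¹ •
        ∫ τ in (0:ℝ)..s, ((s - τ) ^ (γ - 1) • C τ x - ((s - τ) ^ (γ - 1) * τ ^ a) • L) := by
    rw [intervalIntegral.integral_sub hint1 hint2, intervalIntegral.integral_smul_const,
      aux_power_integral (by linarith) ha hs0, smul_sub, smul_smul]
    congr 2
    field_simp
    exact hB0
  have hnorm : ‖((s ^ (γ + a))⁻¹ • ∫ τ in (0:ℝ)..s, (s - τ) ^ (γ - 1) • C τ x) - B0 • L‖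
      ≤ (s ^ (γ + a))⁻¹ * (ε' * (s ^ (γ + a) * B0)) := by
    rw [key, norm_smul, Real.norm_eq_abs, abs_of_pos (inv_pos.mpr hsp)]
    apply mul_le_mul_of_nonneg_left _ (inv_pos.mpr hsp).le
    have hb : ∀ᵐ τ ∂(volume.restrict (Set.uIoc (0:ℝ) s)),
        ‖(s - τ) ^ (γ - 1) • C τ x - ((s - τ) ^ (γ - 1) * τ ^ a) • L‖
          ≤ ε' * ((s - τ) ^ (γ - 1) * τ ^ a) := by
      rw [uIoc_of_le hs0.le, ae_restrict_iff' measurableSet_Ioc]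
      filter_upwards with τ hτ
      have hst : (0:ℝ) ≤ s - τ := by linarith [hτ.2]
      have hstp : (0:ℝ) ≤ (s - τ) ^ (γ - 1) := Real.rpow_nonneg hst _
      have hp : (0:ℝ) < τ ^ a := Real.rpow_pos_of_pos hτ.1 a
      have heq : (s - τ) ^ (γ - 1) • C τ x - ((s - τ) ^ (γ - 1) * τ ^ a) • L
          = (s - τ) ^ (γ - 1) • (C τ x - (τ ^ a) • L) := by
        rw [smul_sub, ← smul_smul]
      rw [heq, norm_smul, Real.norm_eq_abs, abs_of_nonneg hstp, hfactor τ hτ, norm_smul,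
        Real.norm_eq_abs, abs_of_pos hp]
      calc (s - τ) ^ (γ - 1) * (τ ^ a * ‖(τ ^ a)⁻¹ • C τ x - L‖)
          ≤ (s - τ) ^ (γ - 1) * (τ ^ a * ε') := by
            apply mul_le_mul_of_nonneg_left _ hstp
            exact mul_le_mul_of_nonneg_left (hwb τ hτ).le hp.le
        _ = ε' * ((s - τ) ^ (γ - 1) * τ ^ a) := by ring
    have := intervalIntegral.norm_integral_le_abs_of_norm_le hb (hintS.const_mul ε')
    calc ‖∫ τ in (0:ℝ)..s, ((s - τ) ^ (γ - 1) • C τ x - ((s - τ) ^ (γ - 1) * τ ^ a) • L)‖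
        ≤ |∫ τ in (0:ℝ)..s, ε' * ((s - τ) ^ (γ - 1) * τ ^ a)| := this
      _ = ε' * (s ^ (γ + a) * B0) := by
          rw [intervalIntegral.integral_const_mul, aux_power_integral (by linarith) ha hs0]
          rw [abs_of_nonneg (by positivity)]
  rw [dist_eq_norm]
  calc ‖((s ^ (γ + a))⁻¹ • ∫ τ in (0:ℝ)..s, (s - τ) ^ (γ - 1) • C τ x) - B0 • L‖
      ≤ (s ^ (γ + a))⁻¹ * (ε' * (s ^ (γ + a) * B0)) := hnorm
    _ = ε' * B0 := by field_simp
    _ < ε' * (B0 + 1) := by nlinarith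
    _ = ε := by rw [hε'def]; field_simp
lemma aux_DC {X : Type*} [NormedAddCommGroup X] [NormedSpace ℝ X] [CompleteSpace X]
    {γ a t M : ℝ} (hγ : 1 < γ) (ha : -1 < a) (ht : 0 < t) {C : ℝ → X →L[ℝ] X} {y : X}
    {z : ℝ → X}
    (hcontC : ∀ v : X, ContinuousOn (fun τ => C τ v) (Set.Ioi 0))
    (hM : ∀ τ ∈ Set.Ioc (0:ℝ) t, ‖C τ‖ ≤ M * τ ^ a)
    (hz : Tendsto z (𝓝[>] (0:ℝ)) (𝓝 y)) :
    Tendsto (fun s => ∫ τ in (0:ℝ)..t, (t - τ) ^ (γ - 1) • C τ (z s)) (𝓝[>] (0:ℝ))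
      (𝓝 (∫ τ in (0:ℝ)..t, (t - τ) ^ (γ - 1) • C τ y)) := by
  have hM0 : 0 ≤ M := by
    have h1 := hM t ⟨ht, le_refl t⟩
    have h2 : (0:ℝ) < t ^ a := Real.rpow_pos_of_pos ht a
    nlinarith [norm_nonneg (C t)]
  have hIoc : Set.uIoc (0:ℝ) t = Set.Ioc 0 t := uIoc_of_le ht.le
  apply intervalIntegral.tendsto_integral_filter_of_dominated_convergence
    (bound := fun τ => (t ^ (γ - 1) * M * (‖y‖ + 1)) * τ ^ a)
  · filter_upwards with s
    rw [hIoc]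
    apply ContinuousOn.aestronglyMeasurable _ measurableSet_Ioc
    exact ((cont_sub_rpow t (γ - 1) (by linarith)).continuousOn).smul
      ((hcontC (z s)).mono (fun τ hτ => hτ.1))
  · have hev : ∀ᶠ s in 𝓝[>] (0:ℝ), ‖z s‖ < ‖y‖ + 1 :=
      hz.norm.eventually_lt_const (lt_add_one ‖y‖)
    filter_upwards [hev] with s hsb
    filter_upwards with τ hτ
    rw [hIoc] at hτ
    have hst : (0:ℝ) ≤ t - τ := by linarith [hτ.2]
    have h2 : (t - τ) ^ (γ - 1) ≤ t ^ (γ - 1) :=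
      Real.rpow_le_rpow hst (by linarith [hτ.1]) (by linarith)
    have hp : (0:ℝ) < τ ^ a := Real.rpow_pos_of_pos hτ.1 a
    rw [norm_smul, Real.norm_eq_abs, abs_of_nonneg (Real.rpow_nonneg hst _)]
    have hCz : ‖C τ (z s)‖ ≤ M * τ ^ a * (‖y‖ + 1) := by
      calc ‖C τ (z s)‖ ≤ ‖C τ‖ * ‖z s‖ := (C τ).le_opNorm _
        _ ≤ (M * τ ^ a) * (‖y‖ + 1) := by
            apply mul_le_mul (hM τ hτ) hsb.le (norm_nonneg _)
            positivity
    calc (t - τ) ^ (γ - 1) * ‖C τ (z s)‖ ≤ t ^ (γ - 1) * (M * τ ^ a * (‖y‖ + 1)) := by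
          apply mul_le_mul h2 hCz (norm_nonneg _) (Real.rpow_nonneg ht.le _)
      _ = (t ^ (γ - 1) * M * (‖y‖ + 1)) * τ ^ a := by ring
  · exact (intervalIntegral.intervalIntegrable_rpow' ha).const_mul _
  · filter_upwards with τ hτ
    exact ((((C τ).continuous.tendsto y).comp hz)).const_smul _

theorem stmt6 {X : Type*} [NormedAddCommGroup X] [NormedSpace ℝ X] [CompleteSpace X]
    (γ δ : ℝ) (hγ1 : 1 < γ) (hγ2 : γ < 2) (hδ0 : 0 ≤ δ) (hδ1 : δ ≤ 1)
    (C : ℝ → X →L[ℝ] X) (hC : GenFracCosine γ δ C) :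
    ∀ x y : X, InGen γ δ C x y → ∀ t : ℝ, 0 < t →
      C t x = (t ^ (γ + δ * (2 - γ) - 2) / Real.Gamma (γ + δ * (2 - γ) - 1)) • x
        + RLv γ (fun τ => C τ y) t := by
  intro x y hxy t ht
  unfold InGen at hxy
  have hδγ : 0 ≤ δ * (2 - γ) := mul_nonneg hδ0 (by linarith)
  set a := γ + δ * (2 - γ) - 2 with ha_def
  have ha : -1 < a := by rw [ha_def]; linarith
  have hγa : 0 < γ + a := by rw [ha_def]; linarith
  have hGa1 : 0 < Real.Gamma (a + 1) := Real.Gamma_pos_of_pos (by linarith)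
  have hGga1 : 0 < Real.Gamma (γ + a + 1) := Real.Gamma_pos_of_pos (by linarith)
  have hGg : 0 < Real.Gamma γ := Real.Gamma_pos_of_pos (by linarith)
  have e1 : 2 * γ + δ * (2 - γ) - 1 = γ + a + 1 := by rw [ha_def]; ring
  have e2 : 2 * γ + δ * (2 - γ) - 2 = γ + a := by rw [ha_def]; ring
  have e3 : γ + δ * (2 - γ) - 1 = a + 1 := by rw [ha_def]; ring
  rw [e1, e2, e3] at hxy
  rw [e3]
  -- the limit hypothesis in terms of `a`
  have hlim : Tendsto (fun s : ℝ => (s ^ a)⁻¹ • C s x) (𝓝[>] (0:ℝ))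
      (𝓝 ((Real.Gamma (a + 1))⁻¹ • x)) := by
    have h := hC.limit x
    rwa [← ha_def, e3] at h
  have hlim_all : ∀ v : X, ∃ l : X, Tendsto (fun s : ℝ => (s ^ a)⁻¹ • C s v)
      (𝓝[>] (0:ℝ)) (𝓝 l) := by
    intro v
    refine ⟨(Real.Gamma (a + 1))⁻¹ • v, ?_⟩
    have h := hC.limit v
    rwa [← ha_def, e3] at h
  obtain ⟨M, hM⟩ := aux_opbound (a := a) ht hC.strongCont hlim_all
  -- interval integrability up to any s ≤ t
  have hInts : ∀ v : X, ∀ s : ℝ, 0 < s → s ≤ t →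
      IntervalIntegrable (fun τ => (s - τ) ^ (γ - 1) • C τ v) volume 0 s := by
    intro v s hs hst
    apply aux_intervalIntegrable hγ1 ha hs ((hC.strongCont v).mono (fun τ hτ => hτ.1))
    intro τ hτ
    calc ‖C τ v‖ ≤ ‖C τ‖ * ‖v‖ := (C τ).le_opNorm v
      _ ≤ (M * τ ^ a) * ‖v‖ :=
          mul_le_mul_of_nonneg_right (hM τ ⟨hτ.1, le_trans hτ.2 hst⟩) (norm_nonneg v)
      _ = (M * ‖v‖) * τ ^ a := by ring
  have hInt : ∀ v : X, IntervalIntegrable (fun τ => (t - τ) ^ (γ - 1) • C τ v) volume 0 t :=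
    fun v => hInts v t ht (le_refl t)
  -- Step A : pull C t out of the fractional integral
  have stepA : ∀ s : ℝ, 0 < s → s ≤ t →
      RLv γ (fun τ => C τ (C t x)) s = C t (RLv γ (fun τ => C τ x) s) := by
    intro s hs hst
    simp only [RLv]
    rw [ContinuousLinearMap.map_smul]
    congr 1
    rw [← ContinuousLinearMap.intervalIntegral_comp_comm (C t) (hInts x s hs hst),
      intervalIntegral.integral_of_le hs.le, intervalIntegral.integral_of_le hs.le]
    apply setIntegral_congr_fun measurableSet_Ioc
    intro τ hτ
    dsimp only
    rw [ContinuousLinearMap.map_smul, hC.comm t τ ht hτ.1 x]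
  -- Step B : the fractional integral applied to z s
  have stepB : ∀ s : ℝ, 0 < s →
      RLv γ (fun τ => C τ (Real.Gamma (γ + a + 1) •
          (s ^ (γ + a))⁻¹ • (C s x - (s ^ a / Real.Gamma (a + 1)) • x))) t
        = Real.Gamma (γ + a + 1) • (s ^ (γ + a))⁻¹ •
            (C s (RLv γ (fun τ => C τ x) t)
              - (s ^ a / Real.Gamma (a + 1)) • RLv γ (fun τ => C τ x) t) := by
    intro s hs
    have int1 : IntervalIntegrable (fun τ => (t - τ) ^ (γ - 1) • C s (C τ x)) volume 0 t := by
      apply aux_intervalIntegrable hγ1 ha ht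
        ((C s).continuous.comp_continuousOn ((hC.strongCont x).mono (fun τ hτ => hτ.1)))
      intro τ hτ
      calc ‖C s (C τ x)‖ ≤ ‖C s‖ * ‖C τ x‖ := (C s).le_opNorm _
        _ ≤ ‖C s‖ * ((M * ‖x‖) * τ ^ a) := by
            apply mul_le_mul_of_nonneg_left _ (norm_nonneg (C s))
            calc ‖C τ x‖ ≤ ‖C τ‖ * ‖x‖ := (C τ).le_opNorm x
              _ ≤ (M * τ ^ a) * ‖x‖ :=
                  mul_le_mul_of_nonneg_right (hM τ hτ) (norm_nonneg x)
              _ = (M * ‖x‖) * τ ^ a := by ring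
        _ = (‖C s‖ * (M * ‖x‖)) * τ ^ a := by ring
    have int2 : IntervalIntegrable
        (fun τ => (s ^ a / Real.Gamma (a + 1)) • ((t - τ) ^ (γ - 1) • C τ x)) volume 0 t :=
      ⟨((hInt x).1.smul _), ((hInt x).2.smul _)⟩
    have hB1 : ∫ τ in (0:ℝ)..t, (t - τ) ^ (γ - 1) • C τ (Real.Gamma (γ + a + 1) •
          (s ^ (γ + a))⁻¹ • (C s x - (s ^ a / Real.Gamma (a + 1)) • x))
        = Real.Gamma (γ + a + 1) • (s ^ (γ + a))⁻¹ •
            ((∫ τ in (0:ℝ)..t, (t - τ) ^ (γ - 1) • C s (C τ x))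
              - (s ^ a / Real.Gamma (a + 1)) • ∫ τ in (0:ℝ)..t, (t - τ) ^ (γ - 1) • C τ x) := by
      have step1 : ∫ τ in (0:ℝ)..t, (t - τ) ^ (γ - 1) • C τ (Real.Gamma (γ + a + 1) •
            (s ^ (γ + a))⁻¹ • (C s x - (s ^ a / Real.Gamma (a + 1)) • x))
          = ∫ τ in (0:ℝ)..t, Real.Gamma (γ + a + 1) • ((s ^ (γ + a))⁻¹ •
              ((t - τ) ^ (γ - 1) • C s (C τ x)
                - (s ^ a / Real.Gamma (a + 1)) • ((t - τ) ^ (γ - 1) • C τ x))) := by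
        rw [intervalIntegral.integral_of_le ht.le, intervalIntegral.integral_of_le ht.le]
        apply setIntegral_congr_fun measurableSet_Ioc
        intro τ hτ
        dsimp only
        rw [ContinuousLinearMap.map_smul, ContinuousLinearMap.map_smul,
          ContinuousLinearMap.map_sub, ContinuousLinearMap.map_smul, ← hC.comm s τ hs hτ.1 x]
        module
      rw [step1, intervalIntegral.integral_smul, intervalIntegral.integral_smul,
        intervalIntegral.integral_sub int1 int2, intervalIntegral.integral_smul]
    simp only [RLv]
    rw [hB1, ContinuousLinearMap.map_smul,
      ← ContinuousLinearMap.intervalIntegral_comp_comm (C s) (hInt x)]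
    have hCs2 : ∫ τ in (0:ℝ)..t, C s ((t - τ) ^ (γ - 1) • C τ x)
        = ∫ τ in (0:ℝ)..t, (t - τ) ^ (γ - 1) • C s (C τ x) := by
      rw [intervalIntegral.integral_of_le ht.le, intervalIntegral.integral_of_le ht.le]
      apply setIntegral_congr_fun measurableSet_Ioc
      intro τ hτ
      dsimp only
      rw [ContinuousLinearMap.map_smul]
    rw [hCs2]
    module
  -- the functional equation rearranged
  have key : ∀ s : ℝ, 0 < s → s ≤ t →
      RLv γ (fun τ => C τ (Real.Gamma (γ + a + 1) •
          (s ^ (γ + a))⁻¹ • (C s x - (s ^ a / Real.Gamma (a + 1)) • x))) t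
        = C t (Real.Gamma (γ + a + 1) • (s ^ (γ + a))⁻¹ • RLv γ (fun τ => C τ x) s)
          - (t ^ a / Real.Gamma (a + 1)) •
            (Real.Gamma (γ + a + 1) • (s ^ (γ + a))⁻¹ • RLv γ (fun τ => C τ x) s) := by
    intro s hs hst
    have fe := hC.funEq t s ht hs x
    rw [← ha_def, e3] at fe
    rw [stepA s hs hst] at fe
    have h4 : C s (RLv γ (fun τ => C τ x) t)
          - (s ^ a / Real.Gamma (a + 1)) • RLv γ (fun τ => C τ x) t
        = C t (RLv γ (fun τ => C τ x) s)
          - (t ^ a / Real.Gamma (a + 1)) • RLv γ (fun τ => C τ x) s := by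
      calc C s (RLv γ (fun τ => C τ x) t)
            - (s ^ a / Real.Gamma (a + 1)) • RLv γ (fun τ => C τ x) t
          = (C s (RLv γ (fun τ => C τ x) t) - C t (RLv γ (fun τ => C τ x) s))
              - (s ^ a / Real.Gamma (a + 1)) • RLv γ (fun τ => C τ x) t
              + C t (RLv γ (fun τ => C τ x) s) := by abel
        _ = ((s ^ a / Real.Gamma (a + 1)) • RLv γ (fun τ => C τ x) t
              - (t ^ a / Real.Gamma (a + 1)) • RLv γ (fun τ => C τ x) s)
              - (s ^ a / Real.Gamma (a + 1)) • RLv γ (fun τ => C τ x) t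
              + C t (RLv γ (fun τ => C τ x) s) := by rw [fe]
        _ = C t (RLv γ (fun τ => C τ x) s)
              - (t ^ a / Real.Gamma (a + 1)) • RLv γ (fun τ => C τ x) s := by abel
    rw [stepB s hs, h4, ContinuousLinearMap.map_smul, ContinuousLinearMap.map_smul]
    module
  -- limit of W
  have hWlim : Tendsto (fun s : ℝ => Real.Gamma (γ + a + 1) •
      (s ^ (γ + a))⁻¹ • RLv γ (fun τ => C τ x) s) (𝓝[>] (0:ℝ)) (𝓝 x) := by
    have h5 := (aux_W hγ1 ha (hC.strongCont x) hlim).const_smul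
      (Real.Gamma (γ + a + 1) * (Real.Gamma γ)⁻¹)
    have hfun : (fun s : ℝ => (Real.Gamma (γ + a + 1) * (Real.Gamma γ)⁻¹) •
          ((s ^ (γ + a))⁻¹ • ∫ τ in (0:ℝ)..s, (s - τ) ^ (γ - 1) • C τ x))
        = fun s : ℝ => Real.Gamma (γ + a + 1) •
          (s ^ (γ + a))⁻¹ • RLv γ (fun τ => C τ x) s := by
      funext s
      simp only [RLv, smul_smul]
      congr 1
      ring
    have hval : (Real.Gamma (γ + a + 1) * (Real.Gamma γ)⁻¹) •
        ((Real.Gamma γ * Real.Gamma (a + 1) / Real.Gamma (γ + a + 1)) •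
          ((Real.Gamma (a + 1))⁻¹ • x)) = x := by
      simp only [smul_smul]
      convert one_smul ℝ x using 2
      field_simp
    rw [hfun, hval] at h5
    exact h5
  -- limit of the right-hand side
  have hRHSlim : Tendsto (fun s : ℝ =>
      C t (Real.Gamma (γ + a + 1) • (s ^ (γ + a))⁻¹ • RLv γ (fun τ => C τ x) s)
        - (t ^ a / Real.Gamma (a + 1)) •
          (Real.Gamma (γ + a + 1) • (s ^ (γ + a))⁻¹ • RLv γ (fun τ => C τ x) s))
      (𝓝[>] (0:ℝ)) (𝓝 (C t x - (t ^ a / Real.Gamma (a + 1)) • x)) :=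
    ((((C t).continuous.tendsto x).comp hWlim)).sub (hWlim.const_smul _)
  -- limit of the left-hand side
  have hLHSlim : Tendsto (fun s : ℝ => RLv γ (fun τ => C τ (Real.Gamma (γ + a + 1) •
      (s ^ (γ + a))⁻¹ • (C s x - (s ^ a / Real.Gamma (a + 1)) • x))) t)
      (𝓝[>] (0:ℝ)) (𝓝 (RLv γ (fun τ => C τ y) t)) := by
    simp only [RLv]
    exact (aux_DC hγ1 ha ht hC.strongCont hM hxy).const_smul _
  have heq : ∀ᶠ s in 𝓝[>] (0:ℝ), RLv γ (fun τ => C τ (Real.Gamma (γ + a + 1) •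
      (s ^ (γ + a))⁻¹ • (C s x - (s ^ a / Real.Gamma (a + 1)) • x))) t
        = C t (Real.Gamma (γ + a + 1) • (s ^ (γ + a))⁻¹ • RLv γ (fun τ => C τ x) s)
          - (t ^ a / Real.Gamma (a + 1)) •
            (Real.Gamma (γ + a + 1) • (s ^ (γ + a))⁻¹ • RLv γ (fun τ => C τ x) s) := by
    filter_upwards [Ioo_mem_nhdsGT_of_mem (show (0:ℝ) ∈ Set.Ico (0:ℝ) t from ⟨le_refl 0, ht⟩)]
      with s hs
    exact key s hs.1 hs.2.le
  have hfinal := tendsto_nhds_unique (Tendsto.congr' heq hLHSlim) hRHSlim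
  rw [hfinal]
  abel
end

section
/- The generator A of a general fractional cosine operator function of order γ ∈ (1,2) and type δ ∈ [0,1] on a Banach space X is a closed linear operator. -/
open MeasureTheory Filter Topology

/-- Real Beta function value. -/
noncomputable def rB (u v : ℝ) : ℝ := (Complex.betaIntegral u v).re

lemma Gamma_mul_Gamma_eq_rB {u v : ℝ} (hu : 0 < u) (hv : 0 < v) :
    Real.Gamma u * Real.Gamma v = Real.Gamma (u + v) * rB u v := by
  have h := Complex.Gamma_mul_Gamma_eq_betaIntegral (s := (u:ℂ)) (t := (v:ℂ))
    (by simpa using hu) (by simpa using hv)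
  rw [← Complex.ofReal_add, Complex.Gamma_ofReal, Complex.Gamma_ofReal,
    Complex.Gamma_ofReal] at h
  have := congrArg Complex.re h
  simpa [Complex.ofReal_mul, rB] using this

lemma rB_pos {u v : ℝ} (hu : 0 < u) (hv : 0 < v) : 0 < rB u v := by
  have h := Gamma_mul_Gamma_eq_rB hu hv
  have h1 := Real.Gamma_pos_of_pos hu
  have h2 := Real.Gamma_pos_of_pos hv
  have h3 := Real.Gamma_pos_of_pos (by linarith : 0 < u + v)
  nlinarith [mul_pos h1 h2]

lemma integral_rpow_mul_sub_rpow {u v s : ℝ} (hu : 0 < u) (hv : 0 < v) (hs : 0 < s) :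
    ∫ τ in (0:ℝ)..s, τ ^ (u - 1) * (s - τ) ^ (v - 1) = s ^ (u + v - 1) * rB u v := by
  have h := Complex.betaIntegral_scaled (u:ℂ) (v:ℂ) hs
  have hcongr : (∫ x in (0:ℝ)..s, (x:ℂ) ^ ((u:ℂ) - 1) * ((s:ℂ) - x) ^ ((v:ℂ) - 1)) =
      ∫ x in (0:ℝ)..s, ((x ^ (u - 1) * (s - x) ^ (v - 1) : ℝ) : ℂ) := by
    rw [intervalIntegral.integral_of_le hs.le, intervalIntegral.integral_of_le hs.le]
    refine setIntegral_congr_fun measurableSet_Ioc fun x hx => ?_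
    push_cast
    rw [Complex.ofReal_cpow hx.1.le, Complex.ofReal_cpow (by linarith [hx.2] : (0:ℝ) ≤ s - x)]
    push_cast
    ring
  rw [hcongr, intervalIntegral.integral_ofReal] at h
  have hpow : ((s:ℂ) ^ ((u:ℂ) + (v:ℂ) - 1)) = ((s ^ (u + v - 1) : ℝ) : ℂ) := by
    rw [Complex.ofReal_cpow hs.le]; push_cast; ring_nf
  rw [hpow] at h
  have := congrArg Complex.re h
  simpa [rB, Complex.re_ofReal_mul] using this
section Aux

variable {X : Type*} [NormedAddCommGroup X] [NormedSpace ℝ X]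

lemma pointwise_bound {a : ℝ} {C : ℝ → X →L[ℝ] X}
    (hcont : ∀ x : X, ContinuousOn (fun t => C t x) (Set.Ioi 0))
    {x : X} {L : X} (hlim : Tendsto (fun t : ℝ => (t ^ a)⁻¹ • C t x) (𝓝[>] (0:ℝ)) (𝓝 L))
    {T : ℝ} (hT : 0 < T) :
    ∃ K, 0 ≤ K ∧ ∀ τ ∈ Set.Ioc (0:ℝ) T, ‖(τ ^ a)⁻¹ • C τ x‖ ≤ K := by
  have hev : ∀ᶠ τ in 𝓝[>] (0:ℝ), ‖(τ ^ a)⁻¹ • C τ x‖ ≤ ‖L‖ + 1 :=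
    hlim.norm.eventually (eventually_le_nhds (lt_add_one ‖L‖))
  obtain ⟨ε, hε, hsub⟩ := mem_nhdsGT_iff_exists_Ioo_subset.mp hev
  rw [Set.mem_Ioi] at hε
  set m : ℝ := min (ε / 2) T with hm
  have hm0 : 0 < m := lt_min (by linarith) hT
  have hcont2 : ContinuousOn (fun τ : ℝ => (τ ^ a)⁻¹ • C τ x) (Set.Icc m T) := by
    intro τ hτ
    have hτ0 : 0 < τ := lt_of_lt_of_le hm0 hτ.1
    have h1 : ContinuousAt (fun τ : ℝ => (τ ^ a)⁻¹) τ := by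
      have := Real.continuousAt_rpow_const τ a (Or.inl hτ0.ne')
      exact this.inv₀ (by positivity)
    have h2 : ContinuousAt (fun τ : ℝ => C τ x) τ := by
      have := (hcont x).continuousAt (Ioi_mem_nhds hτ0 : Set.Ioi (0:ℝ) ∈ 𝓝 τ)
      exact this
    exact (h1.smul h2).continuousWithinAt
  obtain ⟨M, hM⟩ := (isCompact_Icc : IsCompact (Set.Icc m T)).exists_bound_of_continuousOn hcont2
  refine ⟨max (‖L‖ + 1) M, le_max_of_le_left (by positivity), fun τ hτ => ?_⟩
  rcases lt_or_ge τ ε with h | h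
  · exact le_max_of_le_left (hsub ⟨hτ.1, h⟩)
  · refine le_max_of_le_right (hM τ ⟨?_, hτ.2⟩)
    calc m ≤ ε / 2 := min_le_left _ _
    _ ≤ τ := by linarith

lemma norm_C_apply_le {a : ℝ} {C : ℝ → X →L[ℝ] X}
    (hcont : ∀ x : X, ContinuousOn (fun t => C t x) (Set.Ioi 0))
    {x : X} {L : X} (hlim : Tendsto (fun t : ℝ => (t ^ a)⁻¹ • C t x) (𝓝[>] (0:ℝ)) (𝓝 L))
    {T : ℝ} (hT : 0 < T) :
    ∃ K, 0 ≤ K ∧ ∀ τ ∈ Set.Ioc (0:ℝ) T, ‖C τ x‖ ≤ K * τ ^ a := by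
  obtain ⟨K, hK0, hK⟩ := pointwise_bound hcont hlim hT
  refine ⟨K, hK0, fun τ hτ => ?_⟩
  have hτa : (0:ℝ) < τ ^ a := Real.rpow_pos_of_pos hτ.1 a
  have := hK τ hτ
  rw [norm_smul, norm_inv, Real.norm_eq_abs, abs_of_pos hτa] at this
  calc ‖C τ x‖ = τ ^ a * ((τ ^ a)⁻¹ * ‖C τ x‖) := by field_simp
  _ ≤ τ ^ a * K := by exact mul_le_mul_of_nonneg_left this hτa.le
  _ = K * τ ^ a := mul_comm _ _

lemma opnorm_bound [CompleteSpace X] {a : ℝ} {C : ℝ → X →L[ℝ] X}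
    (hcont : ∀ x : X, ContinuousOn (fun t => C t x) (Set.Ioi 0))
    (hlim : ∀ x : X, ∃ L : X,
      Tendsto (fun t : ℝ => (t ^ a)⁻¹ • C t x) (𝓝[>] (0:ℝ)) (𝓝 L))
    {T : ℝ} (hT : 0 < T) :
    ∃ M, 0 ≤ M ∧ ∀ τ ∈ Set.Ioc (0:ℝ) T, ‖C τ‖ ≤ M * τ ^ a := by
  set g : Set.Ioc (0:ℝ) T → X →L[ℝ] X := fun p => ((p : ℝ) ^ a)⁻¹ • C p with hg
  have hpt : ∀ x : X, ∃ K, ∀ p : Set.Ioc (0:ℝ) T, ‖g p x‖ ≤ K := by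
    intro x
    obtain ⟨L, hL⟩ := hlim x
    obtain ⟨K, _, hK⟩ := pointwise_bound hcont hL hT
    exact ⟨K, fun p => by simpa [hg] using hK p p.2⟩
  obtain ⟨M, hM⟩ := banach_steinhaus hpt
  refine ⟨max M 0, le_max_right _ _, fun τ hτ => ?_⟩
  have hτa : (0:ℝ) < τ ^ a := Real.rpow_pos_of_pos hτ.1 a
  have h1 : C τ = (τ ^ a) • g ⟨τ, hτ⟩ := by
    rw [hg]; simp [smul_smul, mul_inv_cancel₀ hτa.ne']
  rw [h1]
  refine (norm_smul_le (τ ^ a) (g ⟨τ, hτ⟩)).trans ?_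
  rw [Real.norm_eq_abs, abs_of_pos hτa, mul_comm]
  exact mul_le_mul_of_nonneg_right ((hM ⟨τ, hτ⟩).trans (le_max_left _ _)) hτa.le

end Aux
section Ker

variable {X : Type*} [NormedAddCommGroup X] [NormedSpace ℝ X]

lemma kernel_contOn {γ a t : ℝ} (hγ : 1 < γ) (ht : 0 < t) :
    ContinuousOn (fun τ : ℝ => (t - τ) ^ (γ - 1) * τ ^ a) (Set.Ioc 0 t) := by
  intro τ hτ
  have h1 : ContinuousAt (fun τ : ℝ => (t - τ) ^ (γ - 1)) τ := by
    refine ContinuousAt.rpow_const (by fun_prop) (Or.inr (by linarith))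
  have h2 : ContinuousAt (fun τ : ℝ => τ ^ a) τ :=
    Real.continuousAt_rpow_const τ a (Or.inl hτ.1.ne')
  exact (h1.mul h2).continuousWithinAt

lemma kernel_integrable {γ a t : ℝ} (hγ : 1 < γ) (ha1 : -1 < a) (ht : 0 < t) :
    IntervalIntegrable (fun τ : ℝ => (t - τ) ^ (γ - 1) * τ ^ a) volume 0 t := by
  have hg : IntervalIntegrable (fun τ : ℝ => t ^ (γ - 1) * τ ^ a) volume 0 t :=
    (intervalIntegral.intervalIntegrable_rpow' ha1).const_mul _
  refine hg.mono_fun ?_ ?_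
  · rw [Set.uIoc_of_le ht.le]
    exact (kernel_contOn hγ ht).aestronglyMeasurable measurableSet_Ioc
  · rw [Set.uIoc_of_le ht.le]
    filter_upwards [ae_restrict_mem measurableSet_Ioc] with τ hτ
    have h1 : (0:ℝ) ≤ (t - τ) ^ (γ - 1) * τ ^ a := by
      have := Real.rpow_nonneg (by linarith [hτ.2] : (0:ℝ) ≤ t - τ) (γ - 1)
      have := Real.rpow_nonneg hτ.1.le a
      positivity
    have h2 : (t - τ) ^ (γ - 1) * τ ^ a ≤ t ^ (γ - 1) * τ ^ a := by
      refine mul_le_mul_of_nonneg_right ?_ (Real.rpow_nonneg hτ.1.le a)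
      exact Real.rpow_le_rpow (by linarith [hτ.2]) (by linarith [hτ.1]) (by linarith)
    rw [Real.norm_eq_abs, Real.norm_eq_abs, abs_of_nonneg h1]
    exact h2.trans (le_abs_self _)

end Ker

section Ker2

variable {X : Type*} [NormedAddCommGroup X] [NormedSpace ℝ X]

lemma vec_integrable {γ a t : ℝ} (hγ : 1 < γ) (ha1 : -1 < a) (ht : 0 < t)
    {f : ℝ → X} (hfc : ContinuousOn f (Set.Ioi 0))
    {K : ℝ} (hK : ∀ τ ∈ Set.Ioc (0:ℝ) t, ‖f τ‖ ≤ K * τ ^ a) :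
    IntervalIntegrable (fun τ : ℝ => (t - τ) ^ (γ - 1) • f τ) volume 0 t := by
  have hg : IntervalIntegrable (fun τ : ℝ => (t ^ (γ - 1) * K) * τ ^ a) volume 0 t :=
    (intervalIntegral.intervalIntegrable_rpow' ha1).const_mul _
  refine hg.mono_fun ?_ ?_
  · rw [Set.uIoc_of_le ht.le]
    refine ContinuousOn.aestronglyMeasurable ?_ measurableSet_Ioc
    intro τ hτ
    have h1 : ContinuousAt (fun τ : ℝ => (t - τ) ^ (γ - 1)) τ :=
      ContinuousAt.rpow_const (by fun_prop) (Or.inr (by linarith))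
    have h2 : ContinuousAt f τ := hfc.continuousAt (Ioi_mem_nhds hτ.1)
    exact (h1.smul h2).continuousWithinAt
  · rw [Set.uIoc_of_le ht.le]
    filter_upwards [ae_restrict_mem measurableSet_Ioc] with τ hτ
    have hb : (0:ℝ) ≤ (t - τ) ^ (γ - 1) := Real.rpow_nonneg (by linarith [hτ.2]) _
    rw [norm_smul, Real.norm_eq_abs, abs_of_nonneg hb, Real.norm_eq_abs]
    calc (t - τ) ^ (γ - 1) * ‖f τ‖ ≤ t ^ (γ - 1) * (K * τ ^ a) := by
          refine mul_le_mul ?_ (hK τ hτ) (norm_nonneg _)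
            (Real.rpow_nonneg ht.le _)
          exact Real.rpow_le_rpow (by linarith [hτ.2]) (by linarith [hτ.1]) (by linarith)
      _ = t ^ (γ - 1) * K * τ ^ a := by ring
      _ ≤ |t ^ (γ - 1) * K * τ ^ a| := le_abs_self _

end Ker2

lemma kernel_integral {γ a t : ℝ} (hγ : 0 < γ) (ha1 : -1 < a) (ht : 0 < t) :
    ∫ τ in (0:ℝ)..t, (t - τ) ^ (γ - 1) * τ ^ a = t ^ (γ + a) * rB (a + 1) γ := by
  have h := integral_rpow_mul_sub_rpow (u := a + 1) (v := γ) (by linarith) hγ ht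
  rw [show a + 1 - 1 = a by ring, show a + 1 + γ - 1 = γ + a by ring] at h
  rw [← h]
  exact intervalIntegral.integral_congr fun τ _ => mul_comm _ _

section KeyLimit

variable {X : Type*} [NormedAddCommGroup X] [NormedSpace ℝ X]

set_option maxHeartbeats 1000000 in
lemma key_limit [CompleteSpace X] {γ a : ℝ} (hγ : 1 < γ) (ha1 : -1 < a) {C : ℝ → X →L[ℝ] X}
    (hcont : ∀ x : X, ContinuousOn (fun t => C t x) (Set.Ioi 0))
    (hlim : ∀ x : X, Tendsto (fun t : ℝ => (t ^ a)⁻¹ • C t x) (𝓝[>] (0:ℝ))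
      (𝓝 ((Real.Gamma (a + 1))⁻¹ • x)))
    (z : X) :
    Tendsto (fun s : ℝ => Real.Gamma (γ + a + 1) • (s ^ (γ + a))⁻¹ •
      RLv γ (fun τ => C τ z) s) (𝓝[>] (0:ℝ)) (𝓝 z) := by
  have hΓγ : 0 < Real.Gamma γ := Real.Gamma_pos_of_pos (by linarith)
  have hΓa : 0 < Real.Gamma (a + 1) := Real.Gamma_pos_of_pos (by linarith)
  have hΓb : 0 < Real.Gamma (γ + a + 1) := Real.Gamma_pos_of_pos (by linarith)
  have hB : 0 < rB (a + 1) γ := rB_pos (by linarith) (by linarith)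
  have hGid : Real.Gamma (a + 1) * Real.Gamma γ
      = Real.Gamma (γ + a + 1) * rB (a + 1) γ := by
    have := Gamma_mul_Gamma_eq_rB (u := a + 1) (v := γ) (by linarith) (by linarith)
    rwa [show a + 1 + γ = γ + a + 1 by ring] at this
  set Kc : ℝ := Real.Gamma (γ + a + 1) * (Real.Gamma γ)⁻¹ * rB (a + 1) γ with hKc
  have hKc0 : 0 < Kc := by positivity
  set L : X := (Real.Gamma (a + 1))⁻¹ • z with hL
  rw [Metric.tendsto_nhdsWithin_nhds]
  intro ε hε
  set ε' : ℝ := ε / (Kc + 1) with hε'def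
  have hε' : 0 < ε' := by positivity
  obtain ⟨δ, hδ, hδ2⟩ := Metric.tendsto_nhdsWithin_nhds.mp (hlim z) ε' hε'
  refine ⟨δ, hδ, ?_⟩
  intro s hs hsd
  have hs0 : 0 < s := hs
  rw [Real.dist_eq, sub_zero, abs_of_pos hs0] at hsd
  set h : ℝ → X := fun τ => (τ ^ a)⁻¹ • C τ z with hh
  have hptw : ∀ τ ∈ Set.Ioc (0:ℝ) s, ‖h τ - L‖ ≤ ε' := by
    intro τ hτ
    have := hδ2 (Set.mem_Ioi.mpr hτ.1)
      (by rw [Real.dist_eq, sub_zero, abs_of_pos hτ.1]; exact lt_of_le_of_lt hτ.2 hsd)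
    rw [dist_eq_norm] at this
    exact this.le
  -- integrability facts
  obtain ⟨K, hK0, hKb⟩ := norm_C_apply_le hcont (hlim z) hs0
  have int1 : IntervalIntegrable (fun τ : ℝ => (s - τ) ^ (γ - 1) • C τ z) volume 0 s :=
    vec_integrable hγ ha1 hs0 (hcont z) hKb
  have intk : IntervalIntegrable (fun τ : ℝ => (s - τ) ^ (γ - 1) * τ ^ a) volume 0 s :=
    kernel_integrable hγ ha1 hs0
  have int2 : IntervalIntegrable (fun τ : ℝ => ((s - τ) ^ (γ - 1) * τ ^ a) • L) volume 0 s :=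
    by rw [intervalIntegrable_iff] at intk ⊢; exact intk.smul_const L
  have hIeq : (∫ τ in (0:ℝ)..s, (s - τ) ^ (γ - 1) • C τ z)
      = ∫ τ in (0:ℝ)..s, ((s - τ) ^ (γ - 1) * τ ^ a) • h τ := by
    rw [intervalIntegral.integral_of_le hs0.le, intervalIntegral.integral_of_le hs0.le]
    refine setIntegral_congr_fun measurableSet_Ioc fun τ hτ => ?_
    have hτa : τ ^ a ≠ 0 := (Real.rpow_pos_of_pos hτ.1 a).ne'
    rw [hh, mul_smul, smul_inv_smul₀ hτa]
  have int1' : IntervalIntegrable (fun τ : ℝ => ((s - τ) ^ (γ - 1) * τ ^ a) • h τ)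
      volume 0 s := by
    refine int1.congr ?_
    rw [Set.uIoc_of_le hs0.le]
    intro τ hτ
    dsimp only
    have hτa : τ ^ a ≠ 0 := (Real.rpow_pos_of_pos hτ.1 a).ne'
    rw [hh, mul_smul, smul_inv_smul₀ hτa]
  have hdiff : (∫ τ in (0:ℝ)..s, ((s - τ) ^ (γ - 1) * τ ^ a) • (h τ - L))
      = (∫ τ in (0:ℝ)..s, ((s - τ) ^ (γ - 1) * τ ^ a) • h τ)
        - ∫ τ in (0:ℝ)..s, ((s - τ) ^ (γ - 1) * τ ^ a) • L := by
    rw [← intervalIntegral.integral_sub int1' int2]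
    congr 1
    funext τ
    rw [smul_sub]
  have hkval : (∫ τ in (0:ℝ)..s, (s - τ) ^ (γ - 1) * τ ^ a)
      = s ^ (γ + a) * rB (a + 1) γ := kernel_integral (by linarith) ha1 hs0
  have hI2 : (∫ τ in (0:ℝ)..s, ((s - τ) ^ (γ - 1) * τ ^ a) • L)
      = (s ^ (γ + a) * rB (a + 1) γ) • L := by
    rw [intervalIntegral.integral_smul_const, hkval]
  -- norm estimate
  have hnorm : ‖(∫ τ in (0:ℝ)..s, ((s - τ) ^ (γ - 1) * τ ^ a) • h τ)
      - (s ^ (γ + a) * rB (a + 1) γ) • L‖ ≤ s ^ (γ + a) * rB (a + 1) γ * ε' := by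
    rw [← hI2, ← hdiff]
    have step1 : ‖∫ τ in (0:ℝ)..s, ((s - τ) ^ (γ - 1) * τ ^ a) • (h τ - L)‖
        ≤ ∫ τ in (0:ℝ)..s, ‖((s - τ) ^ (γ - 1) * τ ^ a) • (h τ - L)‖ :=
      intervalIntegral.norm_integral_le_integral_norm hs0.le
    refine step1.trans ?_
    have intn : IntervalIntegrable
        (fun τ : ℝ => ‖((s - τ) ^ (γ - 1) * τ ^ a) • (h τ - L)‖) volume 0 s :=
      (int1'.sub int2 |>.congr (by
        rw [Set.uIoc_of_le hs0.le]
        intro τ hτ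
        dsimp only
        rw [smul_sub])).norm
    have intr : IntervalIntegrable (fun τ : ℝ => ((s - τ) ^ (γ - 1) * τ ^ a) * ε')
        volume 0 s := intk.mul_const _
    have step2 : (∫ τ in (0:ℝ)..s, ‖((s - τ) ^ (γ - 1) * τ ^ a) • (h τ - L)‖)
        ≤ ∫ τ in (0:ℝ)..s, ((s - τ) ^ (γ - 1) * τ ^ a) * ε' := by
      rw [intervalIntegral.integral_of_le hs0.le, intervalIntegral.integral_of_le hs0.le]
      refine setIntegral_mono_on
        ((intervalIntegrable_iff_integrableOn_Ioc_of_le hs0.le).mp intn)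
        ((intervalIntegrable_iff_integrableOn_Ioc_of_le hs0.le).mp intr)
        measurableSet_Ioc fun τ hτ => ?_
      have hker : (0:ℝ) ≤ (s - τ) ^ (γ - 1) * τ ^ a := by
        have := Real.rpow_nonneg (by linarith [hτ.2] : (0:ℝ) ≤ s - τ) (γ - 1)
        have := Real.rpow_nonneg hτ.1.le a
        positivity
      rw [norm_smul, Real.norm_eq_abs, abs_of_nonneg hker]
      exact mul_le_mul_of_nonneg_left (hptw τ hτ) hker
    refine step2.trans ?_
    rw [intervalIntegral.integral_mul_const, hkval]
  -- final assembly
  have hsa : (0:ℝ) < s ^ (γ + a) := Real.rpow_pos_of_pos hs0 _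
  set c : ℝ := Real.Gamma (γ + a + 1) * (s ^ (γ + a))⁻¹ * (Real.Gamma γ)⁻¹ with hc
  have hc0 : 0 < c := by positivity
  have hFs : Real.Gamma (γ + a + 1) • (s ^ (γ + a))⁻¹ • RLv γ (fun τ => C τ z) s
      = c • ∫ τ in (0:ℝ)..s, ((s - τ) ^ (γ - 1) * τ ^ a) • h τ := by
    rw [RLv, hIeq, smul_smul, smul_smul]
  have hz : c • ((s ^ (γ + a) * rB (a + 1) γ) • L) = z := by
    rw [hL, smul_smul, smul_smul]
    have : c * (s ^ (γ + a) * rB (a + 1) γ) * (Real.Gamma (a + 1))⁻¹ = 1 := by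
      rw [hc]
      field_simp
      nlinarith [hGid, hsa, hΓγ, hΓa, hΓb, hB]
    rw [this, one_smul]
  rw [dist_eq_norm, hFs, ← hz, ← smul_sub, norm_smul, Real.norm_eq_abs, abs_of_pos hc0]
  calc c * ‖(∫ τ in (0:ℝ)..s, ((s - τ) ^ (γ - 1) * τ ^ a) • h τ)
        - (s ^ (γ + a) * rB (a + 1) γ) • L‖
      ≤ c * (s ^ (γ + a) * rB (a + 1) γ * ε') := mul_le_mul_of_nonneg_left hnorm hc0.le
    _ = Kc * ε' := by rw [hc, hKc]; field_simp
    _ < ε := by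
        rw [hε'def, mul_div_assoc']
        rw [div_lt_iff₀ (by positivity : (0:ℝ) < Kc + 1)]
        nlinarith [hKc0, hε]

end KeyLimit

section RLvLemmas

variable {X : Type*} [NormedAddCommGroup X] [NormedSpace ℝ X]

lemma RLv_smul {γ t c : ℝ} (f : ℝ → X) :
    RLv γ (fun τ => c • f τ) t = c • RLv γ f t := by
  unfold RLv
  rw [smul_comm]
  congr 1
  rw [← intervalIntegral.integral_smul]
  congr 1; funext τ; rw [smul_comm]

lemma RLv_sub {γ t : ℝ} {f g : ℝ → X}
    (hf : IntervalIntegrable (fun τ => (t - τ) ^ (γ - 1) • f τ) volume 0 t)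
    (hg : IntervalIntegrable (fun τ => (t - τ) ^ (γ - 1) • g τ) volume 0 t) :
    RLv γ (fun τ => f τ - g τ) t = RLv γ f t - RLv γ g t := by
  unfold RLv
  rw [← smul_sub, ← intervalIntegral.integral_sub hf hg]
  congr 2; funext τ; rw [smul_sub]

lemma C_integrand_integrable {γ a : ℝ} (hγ : 1 < γ) (ha1 : -1 < a)
    {C : ℝ → X →L[ℝ] X}
    (hcont : ∀ x : X, ContinuousOn (fun t => C t x) (Set.Ioi 0))
    (hlim : ∀ x : X, Tendsto (fun t : ℝ => (t ^ a)⁻¹ • C t x) (𝓝[>] (0:ℝ))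
      (𝓝 ((Real.Gamma (a + 1))⁻¹ • x)))
    (w : X) {t : ℝ} (ht : 0 < t) :
    IntervalIntegrable (fun τ : ℝ => (t - τ) ^ (γ - 1) • C τ w) volume 0 t := by
  obtain ⟨K, hK0, hKb⟩ := norm_C_apply_le hcont (hlim w) ht
  exact vec_integrable hγ ha1 ht (hcont w) hKb

lemma RLv_opbound [CompleteSpace X] {γ a : ℝ} (hγ : 1 < γ) (ha1 : -1 < a)
    {C : ℝ → X →L[ℝ] X}
    (hcont : ∀ x : X, ContinuousOn (fun t => C t x) (Set.Ioi 0))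
    (hlim : ∀ x : X, Tendsto (fun t : ℝ => (t ^ a)⁻¹ • C t x) (𝓝[>] (0:ℝ))
      (𝓝 ((Real.Gamma (a + 1))⁻¹ • x)))
    {t : ℝ} (ht : 0 < t) :
    ∃ K, 0 ≤ K ∧ ∀ w : X, ‖RLv γ (fun τ => C τ w) t‖ ≤ K * ‖w‖ := by
  obtain ⟨M, hM0, hM⟩ := opnorm_bound hcont (fun x => ⟨_, hlim x⟩) ht
  have hΓγ : 0 < Real.Gamma γ := Real.Gamma_pos_of_pos (by linarith)
  have hB : 0 < rB (a + 1) γ := rB_pos (by linarith) (by linarith)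
  have hta : (0:ℝ) < t ^ (γ + a) := Real.rpow_pos_of_pos ht _
  refine ⟨(Real.Gamma γ)⁻¹ * (t ^ (γ + a) * rB (a + 1) γ) * M, by positivity, fun w => ?_⟩
  have hptb : ∀ τ ∈ Set.Ioc (0:ℝ) t, ‖C τ w‖ ≤ M * ‖w‖ * τ ^ a := by
    intro τ hτ
    calc ‖C τ w‖ ≤ ‖C τ‖ * ‖w‖ := (C τ).le_opNorm w
      _ ≤ M * τ ^ a * ‖w‖ := by
          exact mul_le_mul_of_nonneg_right (hM τ hτ) (norm_nonneg w)
      _ = M * ‖w‖ * τ ^ a := by ring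
  have int1 : IntervalIntegrable (fun τ : ℝ => (t - τ) ^ (γ - 1) • C τ w) volume 0 t :=
    vec_integrable hγ ha1 ht (hcont w) hptb
  have intk : IntervalIntegrable (fun τ : ℝ => ((t - τ) ^ (γ - 1) * τ ^ a) * (M * ‖w‖))
      volume 0 t := (kernel_integrable hγ ha1 ht).mul_const _
  rw [RLv, norm_smul, Real.norm_eq_abs, abs_of_pos (by positivity : (0:ℝ) < (Real.Gamma γ)⁻¹)]
  have step1 : ‖∫ τ in (0:ℝ)..t, (t - τ) ^ (γ - 1) • C τ w‖
      ≤ ∫ τ in (0:ℝ)..t, ‖(t - τ) ^ (γ - 1) • C τ w‖ :=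
    intervalIntegral.norm_integral_le_integral_norm ht.le
  have step2 : (∫ τ in (0:ℝ)..t, ‖(t - τ) ^ (γ - 1) • C τ w‖)
      ≤ ∫ τ in (0:ℝ)..t, ((t - τ) ^ (γ - 1) * τ ^ a) * (M * ‖w‖) := by
    rw [intervalIntegral.integral_of_le ht.le, intervalIntegral.integral_of_le ht.le]
    refine setIntegral_mono_on
      ((intervalIntegrable_iff_integrableOn_Ioc_of_le ht.le).mp int1.norm)
      ((intervalIntegrable_iff_integrableOn_Ioc_of_le ht.le).mp intk)
      measurableSet_Ioc fun τ hτ => ?_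
    have hb : (0:ℝ) ≤ (t - τ) ^ (γ - 1) := Real.rpow_nonneg (by linarith [hτ.2]) _
    rw [norm_smul, Real.norm_eq_abs, abs_of_nonneg hb]
    calc (t - τ) ^ (γ - 1) * ‖C τ w‖ ≤ (t - τ) ^ (γ - 1) * (M * ‖w‖ * τ ^ a) :=
          mul_le_mul_of_nonneg_left (hptb τ hτ) hb
      _ = ((t - τ) ^ (γ - 1) * τ ^ a) * (M * ‖w‖) := by ring
  have hval : (∫ τ in (0:ℝ)..t, ((t - τ) ^ (γ - 1) * τ ^ a) * (M * ‖w‖))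
      = (t ^ (γ + a) * rB (a + 1) γ) * (M * ‖w‖) := by
    rw [intervalIntegral.integral_mul_const, kernel_integral (by linarith) ha1 ht]
  calc (Real.Gamma γ)⁻¹ * ‖∫ τ in (0:ℝ)..t, (t - τ) ^ (γ - 1) • C τ w‖
      ≤ (Real.Gamma γ)⁻¹ * ((t ^ (γ + a) * rB (a + 1) γ) * (M * ‖w‖)) := by
        refine mul_le_mul_of_nonneg_left ((step1.trans step2).trans_eq hval) (by positivity)
    _ = (Real.Gamma γ)⁻¹ * (t ^ (γ + a) * rB (a + 1) γ) * M * ‖w‖ := by ring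

lemma RLv_tendsto [CompleteSpace X] {γ a : ℝ} (hγ : 1 < γ) (ha1 : -1 < a)
    {C : ℝ → X →L[ℝ] X}
    (hcont : ∀ x : X, ContinuousOn (fun t => C t x) (Set.Ioi 0))
    (hlim : ∀ x : X, Tendsto (fun t : ℝ => (t ^ a)⁻¹ • C t x) (𝓝[>] (0:ℝ))
      (𝓝 ((Real.Gamma (a + 1))⁻¹ • x)))
    {t : ℝ} (ht : 0 < t) {ι : Type*} {l : Filter ι} {w : ι → X} {wl : X}
    (hw : Tendsto w l (𝓝 wl)) :
    Tendsto (fun i => RLv γ (fun τ => C τ (w i)) t) l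
      (𝓝 (RLv γ (fun τ => C τ wl) t)) := by
  obtain ⟨K, hK0, hK⟩ := RLv_opbound hγ ha1 hcont hlim ht
  rw [tendsto_iff_norm_sub_tendsto_zero]
  have hbound : ∀ i, ‖RLv γ (fun τ => C τ (w i)) t - RLv γ (fun τ => C τ wl) t‖
      ≤ K * ‖w i - wl‖ := by
    intro i
    have hsub : RLv γ (fun τ => C τ (w i - wl)) t
        = RLv γ (fun τ => C τ (w i)) t - RLv γ (fun τ => C τ wl) t := by
      have : (fun τ : ℝ => C τ (w i - wl)) = fun τ => C τ (w i) - C τ wl := by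
        funext τ; rw [map_sub]
      rw [this, RLv_sub (C_integrand_integrable hγ ha1 hcont hlim (w i) ht)
        (C_integrand_integrable hγ ha1 hcont hlim wl ht)]
    rw [← hsub]
    exact hK _
  refine squeeze_zero (fun i => norm_nonneg _) hbound ?_
  have := (tendsto_iff_norm_sub_tendsto_zero.mp hw).const_mul K
  simpa using this

end RLvLemmas

section GenId

variable {X : Type*} [NormedAddCommGroup X] [NormedSpace ℝ X]

lemma gen_id [CompleteSpace X] {γ a : ℝ} (hγ : 1 < γ) (ha1 : -1 < a)
    {C : ℝ → X →L[ℝ] X}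
    (hcont : ∀ x : X, ContinuousOn (fun t => C t x) (Set.Ioi 0))
    (hlim : ∀ x : X, Tendsto (fun t : ℝ => (t ^ a)⁻¹ • C t x) (𝓝[>] (0:ℝ))
      (𝓝 ((Real.Gamma (a + 1))⁻¹ • x)))
    (hfunEq : ∀ t s : ℝ, 0 < t → 0 < s → ∀ x : X,
      C s (RLv γ (fun τ => C τ x) t) - RLv γ (fun τ => C τ (C t x)) s
        = (s ^ a / Real.Gamma (a + 1)) • RLv γ (fun τ => C τ x) t
          - (t ^ a / Real.Gamma (a + 1)) • RLv γ (fun τ => C τ x) s)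
    {x y : X}
    (hxy : Tendsto (fun s : ℝ => Real.Gamma (γ + a + 1) • (s ^ (γ + a))⁻¹ •
      (C s x - (s ^ a / Real.Gamma (a + 1)) • x)) (𝓝[>] (0:ℝ)) (𝓝 y))
    {t : ℝ} (ht : 0 < t) :
    C t x - (t ^ a / Real.Gamma (a + 1)) • x = RLv γ (fun τ => C τ y) t := by
  set F : ℝ → X := fun s => Real.Gamma (γ + a + 1) • (s ^ (γ + a))⁻¹ •
      (C s x - (s ^ a / Real.Gamma (a + 1)) • x) with hF
  set G : ℝ → X := fun s => Real.Gamma (γ + a + 1) • (s ^ (γ + a))⁻¹ •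
      RLv γ (fun τ => C τ x) s with hG
  have claimA : ∀ s : ℝ, 0 < s → RLv γ (fun τ => C τ (F s)) t
      = C t (G s) - (t ^ a / Real.Gamma (a + 1)) • G s := by
    intro s hs
    simp only [hF, hG]
    have h1 : (fun τ : ℝ => C τ (Real.Gamma (γ + a + 1) • (s ^ (γ + a))⁻¹ •
        (C s x - (s ^ a / Real.Gamma (a + 1)) • x)))
        = fun τ : ℝ => Real.Gamma (γ + a + 1) • (s ^ (γ + a))⁻¹ •
          (C τ (C s x) - (s ^ a / Real.Gamma (a + 1)) • C τ x) := by
      funext τ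
      rw [ContinuousLinearMap.map_smul, ContinuousLinearMap.map_smul,
        ContinuousLinearMap.map_sub, ContinuousLinearMap.map_smul]
    have hsubint : IntervalIntegrable
        (fun τ : ℝ => (t - τ) ^ (γ - 1) • ((s ^ a / Real.Gamma (a + 1)) • C τ x))
        volume 0 t := by
      have h := (C_integrand_integrable hγ ha1 hcont hlim x ht).smul
        (s ^ a / Real.Gamma (a + 1))
      refine h.congr ?_
      intro τ _
      exact smul_comm _ _ _
    have h2 : RLv γ (fun τ => C τ (Real.Gamma (γ + a + 1) • (s ^ (γ + a))⁻¹ •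
        (C s x - (s ^ a / Real.Gamma (a + 1)) • x))) t
        = Real.Gamma (γ + a + 1) • (s ^ (γ + a))⁻¹ •
          (RLv γ (fun τ => C τ (C s x)) t
            - (s ^ a / Real.Gamma (a + 1)) • RLv γ (fun τ => C τ x) t) := by
      rw [h1]
      rw [RLv_smul (f := fun τ => (s ^ (γ + a))⁻¹ •
        (C τ (C s x) - (s ^ a / Real.Gamma (a + 1)) • C τ x))]
      rw [RLv_smul (f := fun τ =>
        (C τ (C s x) - (s ^ a / Real.Gamma (a + 1)) • C τ x))]
      rw [RLv_sub (C_integrand_integrable hγ ha1 hcont hlim (C s x) ht) hsubint,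
        RLv_smul (f := fun τ => C τ x)]
    have h3 := hfunEq s t hs ht x
    rw [sub_eq_iff_eq_add] at h3
    have h4 : RLv γ (fun τ => C τ (C s x)) t
        = C t (RLv γ (fun τ => C τ x) s)
          - (t ^ a / Real.Gamma (a + 1)) • RLv γ (fun τ => C τ x) s
          + (s ^ a / Real.Gamma (a + 1)) • RLv γ (fun τ => C τ x) t := by
      rw [h3]; abel
    rw [h2, h4, ContinuousLinearMap.map_smul, ContinuousLinearMap.map_smul,
      smul_comm (t ^ a / Real.Gamma (a + 1)) (Real.Gamma (γ + a + 1)),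
      smul_comm (t ^ a / Real.Gamma (a + 1)) ((s ^ (γ + a))⁻¹),
      ← smul_sub, ← smul_sub]
    congr 2
    abel
  have claimB : Tendsto (fun s : ℝ => RLv γ (fun τ => C τ (F s)) t) (𝓝[>] (0:ℝ))
      (𝓝 (RLv γ (fun τ => C τ y) t)) :=
    RLv_tendsto hγ ha1 hcont hlim ht hxy
  have hGt : Tendsto G (𝓝[>] (0:ℝ)) (𝓝 x) := by
    simp only [hG]
    exact key_limit hγ ha1 hcont hlim x
  have claimC : Tendsto (fun s : ℝ => C t (G s) - (t ^ a / Real.Gamma (a + 1)) • G s)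
      (𝓝[>] (0:ℝ)) (𝓝 (C t x - (t ^ a / Real.Gamma (a + 1)) • x)) :=
    (((C t).continuous.tendsto x).comp hGt).sub (hGt.const_smul _)
  have claimB' : Tendsto (fun s : ℝ => C t (G s) - (t ^ a / Real.Gamma (a + 1)) • G s)
      (𝓝[>] (0:ℝ)) (𝓝 (RLv γ (fun τ => C τ y) t)) := by
    refine claimB.congr' ?_
    filter_upwards [self_mem_nhdsWithin] with s hs
    exact claimA s hs
  exact (tendsto_nhds_unique claimB' claimC).symm

end GenId

section ClosedAbstract

variable {X : Type*} [NormedAddCommGroup X] [NormedSpace ℝ X]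

lemma closed_abstract [CompleteSpace X] {γ a : ℝ} (hγ : 1 < γ) (ha1 : -1 < a)
    {C : ℝ → X →L[ℝ] X}
    (hcont : ∀ x : X, ContinuousOn (fun t => C t x) (Set.Ioi 0))
    (hlim : ∀ x : X, Tendsto (fun t : ℝ => (t ^ a)⁻¹ • C t x) (𝓝[>] (0:ℝ))
      (𝓝 ((Real.Gamma (a + 1))⁻¹ • x)))
    (hfunEq : ∀ t s : ℝ, 0 < t → 0 < s → ∀ x : X,
      C s (RLv γ (fun τ => C τ x) t) - RLv γ (fun τ => C τ (C t x)) s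
        = (s ^ a / Real.Gamma (a + 1)) • RLv γ (fun τ => C τ x) t
          - (t ^ a / Real.Gamma (a + 1)) • RLv γ (fun τ => C τ x) s)
    (x y : ℕ → X) (xl yl : X)
    (hmem : ∀ n, Tendsto (fun s : ℝ => Real.Gamma (γ + a + 1) • (s ^ (γ + a))⁻¹ •
      (C s (x n) - (s ^ a / Real.Gamma (a + 1)) • x n)) (𝓝[>] (0:ℝ)) (𝓝 (y n)))
    (hx : Tendsto x atTop (𝓝 xl)) (hy : Tendsto y atTop (𝓝 yl)) :
    Tendsto (fun s : ℝ => Real.Gamma (γ + a + 1) • (s ^ (γ + a))⁻¹ •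
      (C s xl - (s ^ a / Real.Gamma (a + 1)) • xl)) (𝓝[>] (0:ℝ)) (𝓝 yl) := by
  have hid : ∀ t : ℝ, 0 < t →
      C t xl - (t ^ a / Real.Gamma (a + 1)) • xl = RLv γ (fun τ => C τ yl) t := by
    intro t ht
    have hn : ∀ n, C t (x n) - (t ^ a / Real.Gamma (a + 1)) • x n
        = RLv γ (fun τ => C τ (y n)) t :=
      fun n => gen_id hγ ha1 hcont hlim hfunEq (hmem n) ht
    have hLHS : Tendsto (fun n => C t (x n) - (t ^ a / Real.Gamma (a + 1)) • x n)
        atTop (𝓝 (C t xl - (t ^ a / Real.Gamma (a + 1)) • xl)) :=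
      (((C t).continuous.tendsto xl).comp hx).sub (hx.const_smul _)
    have hRHS : Tendsto (fun n => RLv γ (fun τ => C τ (y n)) t) atTop
        (𝓝 (RLv γ (fun τ => C τ yl) t)) :=
      RLv_tendsto hγ ha1 hcont hlim ht hy
    exact tendsto_nhds_unique (hLHS.congr hn) hRHS
  have hk := key_limit hγ ha1 hcont hlim yl
  refine hk.congr' ?_
  filter_upwards [self_mem_nhdsWithin] with t ht
  rw [hid t ht]

end ClosedAbstract

theorem stmt7 {X : Type*} [NormedAddCommGroup X] [NormedSpace ℝ X] [CompleteSpace X]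
    (γ δ : ℝ) (hγ1 : 1 < γ) (hγ2 : γ < 2) (hδ0 : 0 ≤ δ) (hδ1 : δ ≤ 1)
    (C : ℝ → X →L[ℝ] X) (hC : GenFracCosine γ δ C) :
    ∀ (x y : ℕ → X) (xl yl : X),
      (∀ n, InGen γ δ C (x n) (y n)) →
      Filter.Tendsto x Filter.atTop (𝓝 xl) →
      Filter.Tendsto y Filter.atTop (𝓝 yl) →
      InGen γ δ C xl yl := by
  intro x y xl yl hmem hx hy
  have hcont := hC.strongCont
  have hlim := hC.limit
  have hfun := hC.funEq
  unfold InGen at hmem ⊢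
  set a : ℝ := γ + δ * (2 - γ) - 2 with ha
  have ha1 : -1 < a := by
    rw [ha]
    nlinarith [mul_nonneg hδ0 (by linarith : (0:ℝ) ≤ 2 - γ)]
  have e1 : 2 * γ + δ * (2 - γ) - 1 = γ + a + 1 := by rw [ha]; ring
  have e2 : 2 * γ + δ * (2 - γ) - 2 = γ + a := by rw [ha]; ring
  have e3 : γ + δ * (2 - γ) - 1 = a + 1 := by rw [ha]; ring
  rw [e3] at hlim hfun
  rw [e1, e2, e3] at hmem ⊢
  exact closed_abstract hγ1 ha1 hcont hlim hfun x y xl yl hmem hx hy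
end

section
/- The generator A of a general fractional cosine operator function of order γ ∈ (1,2) and type δ ∈ [0,1] on a Banach space X is densely defined: D(A) is dense in X. -/
open MeasureTheory Filter Topology

open intervalIntegral

lemma real_beta {a c : ℝ} (ha : 0 < a) (hc : 0 < c) :
    ∫ u in (0:ℝ)..1, (1 - u) ^ (a - 1) * u ^ (c - 1) =
      Real.Gamma a * Real.Gamma c / Real.Gamma (a + c) := by
  have key := Complex.Gamma_mul_Gamma_eq_betaIntegral (s := (c : ℂ)) (t := (a : ℂ))
    (by simpa using hc) (by simpa using ha)
  have h1 : Complex.betaIntegral (c : ℂ) (a : ℂ)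
      = ((∫ u in (0:ℝ)..1, (1 - u) ^ (a - 1) * u ^ (c - 1) : ℝ) : ℂ) := by
    rw [Complex.betaIntegral, ← intervalIntegral.integral_ofReal]
    apply intervalIntegral.integral_congr
    intro u hu
    rw [Set.uIcc_of_le (by norm_num : (0:ℝ) ≤ 1)] at hu
    obtain ⟨hu0, hu1⟩ := hu
    push_cast
    rw [Complex.ofReal_cpow (by linarith : (0:ℝ) ≤ 1 - u), Complex.ofReal_cpow hu0]
    push_cast
    ring
  rw [h1] at key
  have h2 : (c : ℂ) + (a : ℂ) = ((c + a : ℝ) : ℂ) := by push_cast; ring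
  rw [h2, Complex.Gamma_ofReal, Complex.Gamma_ofReal, Complex.Gamma_ofReal] at key
  have key2 : Real.Gamma c * Real.Gamma a
      = Real.Gamma (c + a) * ∫ u in (0:ℝ)..1, (1 - u) ^ (a - 1) * u ^ (c - 1) := by
    exact_mod_cast key
  have hG : Real.Gamma (a + c) ≠ 0 := (Real.Gamma_pos_of_pos (by linarith)).ne'
  rw [add_comm a c] at *
  field_simp
  linarith [key2]


lemma kernel_integrable_s8 {p q s : ℝ} (hp : 0 ≤ p) (hq : -1 < q) (hs : 0 ≤ s) :
    IntervalIntegrable (fun τ => (s - τ) ^ p * τ ^ q) volume 0 s := by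
  have hb : IntervalIntegrable (fun τ : ℝ => s ^ p * τ ^ q) volume 0 s :=
    (intervalIntegrable_rpow' hq).const_mul _
  refine hb.mono_fun ?_ ?_
  · have h1 : AEStronglyMeasurable (fun τ : ℝ => τ ^ q) (volume.restrict (Set.uIoc 0 s)) := by
      rw [Set.uIoc_of_le hs]
      exact (intervalIntegrable_rpow' hq (a := 0) (b := s)).1.aestronglyMeasurable
    exact (((continuous_const.sub continuous_id).rpow_const
      (fun x => Or.inr hp)).aestronglyMeasurable.restrict).mul h1
  · filter_upwards [ae_restrict_mem measurableSet_uIoc] with τ hτ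
    rw [Set.uIoc_of_le hs] at hτ
    obtain ⟨hτ0, hτs⟩ := hτ
    have h0 : (0:ℝ) ≤ s - τ := by linarith
    have h2 : (0:ℝ) ≤ τ ^ q := Real.rpow_nonneg hτ0.le q
    rw [Real.norm_eq_abs, Real.norm_eq_abs, abs_of_nonneg (mul_nonneg (Real.rpow_nonneg h0 p) h2),
      abs_of_nonneg (mul_nonneg (Real.rpow_nonneg hs p) h2)]
    exact mul_le_mul_of_nonneg_right (Real.rpow_le_rpow h0 (by linarith) hp) h2

lemma kernel_scaling {p q : ℝ} (hp : 0 ≤ p) {s : ℝ} (hs : 0 < s) :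
    ∫ τ in (0:ℝ)..s, (s - τ) ^ p * τ ^ q
      = s ^ (p + q + 1) * ∫ u in (0:ℝ)..1, (1 - u) ^ p * u ^ q := by
  have h := intervalIntegral.smul_integral_comp_mul_left
    (f := fun τ => (s - τ) ^ p * τ ^ q) (a := 0) (b := 1) s
  rw [mul_zero, mul_one] at h
  rw [← h]
  have h2 : ∫ u in (0:ℝ)..1, (s - s * u) ^ p * (s * u) ^ q
      = ∫ u in (0:ℝ)..1, s ^ (p + q) * ((1 - u) ^ p * u ^ q) := by
    apply intervalIntegral.integral_congr_ae
    filter_upwards [] with u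
    intro hu
    rw [Set.uIoc_of_le (by norm_num : (0:ℝ) ≤ 1)] at hu
    obtain ⟨hu0, hu1⟩ := hu
    have e1 : s - s * u = s * (1 - u) := by ring
    rw [e1, Real.mul_rpow hs.le (by linarith), Real.mul_rpow hs.le hu0.le,
      Real.rpow_add hs]
    ring
  rw [h2, intervalIntegral.integral_const_mul, smul_eq_mul, ← mul_assoc,
    mul_comm s (s ^ (p + q)), ← Real.rpow_add_one hs.ne' (p + q)]

lemma tendsto_RL {X : Type*} [NormedAddCommGroup X] [NormedSpace ℝ X] [CompleteSpace X]
    {γ b : ℝ} (hγ : 1 < γ) (hb : 0 < b) (g : ℝ → X) (L : X)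
    (hg : ContinuousOn g (Set.Ioi 0))
    (hlim : Tendsto (fun τ : ℝ => (τ ^ (b - 1))⁻¹ • g τ) (𝓝[>] (0:ℝ)) (𝓝 L)) :
    Tendsto (fun s : ℝ => (s ^ (γ + b - 1))⁻¹ • RLv γ g s) (𝓝[>] (0:ℝ))
      (𝓝 ((Real.Gamma b / Real.Gamma (γ + b)) • L)) := by
  have hγ1 : (0:ℝ) ≤ γ - 1 := by linarith
  have hb1 : (-1:ℝ) < b - 1 := by linarith
  set h : ℝ → X := fun τ => (τ ^ (b - 1))⁻¹ • g τ with hhdef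
  set B : ℝ := ∫ u in (0:ℝ)..1, (1 - u) ^ (γ - 1) * u ^ (b - 1) with hBdef
  have hBeta : B = Real.Gamma γ * Real.Gamma b / Real.Gamma (γ + b) :=
    real_beta (by linarith) hb
  have hGγ : 0 < Real.Gamma γ := Real.Gamma_pos_of_pos (by linarith)
  have hGb : 0 < Real.Gamma b := Real.Gamma_pos_of_pos hb
  have hGγb : 0 < Real.Gamma (γ + b) := Real.Gamma_pos_of_pos (by linarith)
  have hBpos : 0 < B := by rw [hBeta]; positivity
  have main : Tendsto (fun s : ℝ =>
      (s ^ (γ + b - 1))⁻¹ • ∫ τ in (0:ℝ)..s, (s - τ) ^ (γ - 1) • g τ)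
      (𝓝[>] (0:ℝ)) (𝓝 (B • L)) := by
    rw [Metric.tendsto_nhdsWithin_nhds]
    intro ε hε
    set ε' : ℝ := ε / (2 * (B + 1)) with hε'def
    have hB1 : (0:ℝ) < B + 1 := by linarith
    have hε' : 0 < ε' := by positivity
    obtain ⟨δ, hδ, hδprop⟩ := Metric.tendsto_nhdsWithin_nhds.mp hlim ε' hε'
    refine ⟨δ, hδ, ?_⟩
    intro s hsIoi hsδ
    have hs : (0:ℝ) < s := hsIoi
    have hsd : s < δ := by rwa [Real.dist_eq, sub_zero, abs_of_pos hs] at hsδ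
    have hclose : ∀ τ ∈ Set.Ioc (0:ℝ) s, ‖h τ - L‖ ≤ ε' := by
      intro τ hτ
      have := hδprop hτ.1
        (by rw [Real.dist_eq, sub_zero, abs_of_pos hτ.1]; linarith [hτ.2])
      rw [dist_eq_norm] at this
      exact this.le
    have ki : IntervalIntegrable (fun τ => (s - τ) ^ (γ - 1) * τ ^ (b - 1)) volume 0 s :=
      kernel_integrable_s8 hγ1 hb1 hs.le
    have hhc : ContinuousOn h (Set.Ioi 0) := by
      apply ContinuousOn.smul
      · apply ContinuousOn.inv₀
        · exact continuousOn_id.rpow_const (fun x hx => Or.inl (ne_of_gt hx))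
        · intro τ hτ
          exact (Real.rpow_pos_of_pos hτ _).ne'
      · exact hg
    have hm : AEStronglyMeasurable h (volume.restrict (Set.uIoc 0 s)) := by
      rw [Set.uIoc_of_le hs.le]
      exact (hhc.mono (fun τ hτ => hτ.1)).aestronglyMeasurable measurableSet_Ioc
    have hrw : ∫ τ in (0:ℝ)..s, (s - τ) ^ (γ - 1) • g τ
        = ∫ τ in (0:ℝ)..s, ((s - τ) ^ (γ - 1) * τ ^ (b - 1)) • h τ := by
      apply intervalIntegral.integral_congr_ae
      filter_upwards [] with τ hτ
      rw [Set.uIoc_of_le hs.le] at hτ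
      have hg' : g τ = (τ ^ (b - 1)) • h τ := by
        rw [hhdef]
        simp only
        rw [smul_inv_smul₀ (ne_of_gt (Real.rpow_pos_of_pos hτ.1 _))]
      rw [hg', smul_smul]
    have kim : AEStronglyMeasurable (fun τ => (s - τ) ^ (γ - 1) * τ ^ (b - 1))
        (volume.restrict (Set.uIoc 0 s)) := by
      have := ki.1.aestronglyMeasurable
      rwa [Set.uIoc_of_le hs.le]
    have khi : IntervalIntegrable (fun τ => ((s - τ) ^ (γ - 1) * τ ^ (b - 1)) • h τ)
        volume 0 s := by
      refine (ki.const_mul (‖L‖ + ε')).mono_fun (kim.smul hm) ?_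
      filter_upwards [ae_restrict_mem measurableSet_uIoc] with τ hτ
      rw [Set.uIoc_of_le hs.le] at hτ
      have hk0 : (0:ℝ) ≤ (s - τ) ^ (γ - 1) * τ ^ (b - 1) :=
        mul_nonneg (Real.rpow_nonneg (by linarith [hτ.2]) _)
          (Real.rpow_nonneg hτ.1.le _)
      have hL0 : (0:ℝ) ≤ ‖L‖ + ε' := by positivity
      rw [norm_smul, Real.norm_eq_abs, abs_of_nonneg hk0, Real.norm_eq_abs,
        abs_of_nonneg (mul_nonneg hL0 hk0)]
      have hhτ : ‖h τ‖ ≤ ‖L‖ + ε' := by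
        have h2 := hclose τ hτ
        have h3 : ‖h τ‖ ≤ ‖h τ - L‖ + ‖L‖ := by
          simpa using norm_add_le (h τ - L) L
        linarith
      calc ((s - τ) ^ (γ - 1) * τ ^ (b - 1)) * ‖h τ‖
          ≤ ((s - τ) ^ (γ - 1) * τ ^ (b - 1)) * (‖L‖ + ε') :=
            mul_le_mul_of_nonneg_left hhτ hk0
        _ = (‖L‖ + ε') * ((s - τ) ^ (γ - 1) * τ ^ (b - 1)) := by ring
    have kLi : IntervalIntegrable (fun τ => ((s - τ) ^ (γ - 1) * τ ^ (b - 1)) • L)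
        volume 0 s := by
      refine (ki.const_mul ‖L‖).mono_fun (kim.smul aestronglyMeasurable_const) ?_
      filter_upwards [ae_restrict_mem measurableSet_uIoc] with τ hτ
      rw [Set.uIoc_of_le hs.le] at hτ
      have hk0 : (0:ℝ) ≤ (s - τ) ^ (γ - 1) * τ ^ (b - 1) :=
        mul_nonneg (Real.rpow_nonneg (by linarith [hτ.2]) _)
          (Real.rpow_nonneg hτ.1.le _)
      rw [norm_smul, Real.norm_eq_abs, abs_of_nonneg hk0, Real.norm_eq_abs,
        abs_of_nonneg (mul_nonneg (norm_nonneg L) hk0)]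
      exact le_of_eq (mul_comm _ _)
    have hsplit : ∫ τ in (0:ℝ)..s, ((s - τ) ^ (γ - 1) * τ ^ (b - 1)) • h τ
        = (∫ τ in (0:ℝ)..s, ((s - τ) ^ (γ - 1) * τ ^ (b - 1)) • (h τ - L))
          + (∫ τ in (0:ℝ)..s, ((s - τ) ^ (γ - 1) * τ ^ (b - 1)) • L) := by
      have e : (fun τ => ((s - τ) ^ (γ - 1) * τ ^ (b - 1)) • (h τ - L))
          = fun τ => ((s - τ) ^ (γ - 1) * τ ^ (b - 1)) • h τ
            - ((s - τ) ^ (γ - 1) * τ ^ (b - 1)) • L := by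
        funext τ
        rw [smul_sub]
      rw [e, intervalIntegral.integral_sub khi kLi]
      abel
    have hscale : ∫ τ in (0:ℝ)..s, (s - τ) ^ (γ - 1) * τ ^ (b - 1)
        = s ^ (γ + b - 1) * B := by
      rw [kernel_scaling hγ1 hs, hBdef]
      congr 2
      ring
    have hIL : ∫ τ in (0:ℝ)..s, ((s - τ) ^ (γ - 1) * τ ^ (b - 1)) • L
        = (s ^ (γ + b - 1) * B) • L := by
      rw [intervalIntegral.integral_smul_const, hscale]
    have hse : (0:ℝ) < s ^ (γ + b - 1) := Real.rpow_pos_of_pos hs _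
    have hErr : ‖∫ τ in (0:ℝ)..s, ((s - τ) ^ (γ - 1) * τ ^ (b - 1)) • (h τ - L)‖
        ≤ ε' * (s ^ (γ + b - 1) * B) := by
      have h1 := intervalIntegral.norm_integral_le_abs_of_norm_le
        (f := fun τ => ((s - τ) ^ (γ - 1) * τ ^ (b - 1)) • (h τ - L))
        (g := fun τ => ε' * ((s - τ) ^ (γ - 1) * τ ^ (b - 1)))
        (μ := volume) (a := 0) (b := s) ?_ (ki.const_mul ε')
      · rw [intervalIntegral.integral_const_mul, hscale,
          abs_of_nonneg (by positivity)] at h1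
        exact h1
      · filter_upwards [ae_restrict_mem measurableSet_uIoc] with τ hτ
        rw [Set.uIoc_of_le hs.le] at hτ
        have hk0 : (0:ℝ) ≤ (s - τ) ^ (γ - 1) * τ ^ (b - 1) :=
          mul_nonneg (Real.rpow_nonneg (by linarith [hτ.2]) _)
            (Real.rpow_nonneg hτ.1.le _)
        rw [norm_smul, Real.norm_eq_abs, abs_of_nonneg hk0]
        calc ((s - τ) ^ (γ - 1) * τ ^ (b - 1)) * ‖h τ - L‖
            ≤ ((s - τ) ^ (γ - 1) * τ ^ (b - 1)) * ε' :=
              mul_le_mul_of_nonneg_left (hclose τ hτ) hk0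
          _ = ε' * ((s - τ) ^ (γ - 1) * τ ^ (b - 1)) := by ring
    rw [dist_eq_norm, hrw, hsplit, hIL, smul_add]
    have hcancel : (s ^ (γ + b - 1))⁻¹ • ((s ^ (γ + b - 1) * B) • L) = B • L := by
      rw [smul_smul]
      congr 1
      field_simp
    rw [hcancel, add_sub_cancel_right, norm_smul, Real.norm_eq_abs,
      abs_of_pos (inv_pos.mpr hse)]
    calc (s ^ (γ + b - 1))⁻¹ * ‖∫ τ in (0:ℝ)..s, ((s - τ) ^ (γ - 1) * τ ^ (b - 1)) • (h τ - L)‖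
        ≤ (s ^ (γ + b - 1))⁻¹ * (ε' * (s ^ (γ + b - 1) * B)) :=
          mul_le_mul_of_nonneg_left hErr (by positivity)
      _ = ε' * B := by field_simp
      _ ≤ ε' * (B + 1) := by nlinarith
      _ = ε / 2 := by rw [hε'def]; field_simp
      _ < ε := by linarith
  have final := main.const_smul ((Real.Gamma γ)⁻¹)
  have heq : ∀ s : ℝ, (Real.Gamma γ)⁻¹ •
      ((s ^ (γ + b - 1))⁻¹ • ∫ τ in (0:ℝ)..s, (s - τ) ^ (γ - 1) • g τ)
      = (s ^ (γ + b - 1))⁻¹ • RLv γ g s := by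
    intro s
    rw [RLv, smul_comm]
  have hconst : (Real.Gamma γ)⁻¹ • (B • L) = (Real.Gamma b / Real.Gamma (γ + b)) • L := by
    rw [smul_smul, hBeta]
    congr 1
    field_simp
  rw [hconst] at final
  exact final.congr heq

theorem stmt8 {X : Type*} [NormedAddCommGroup X] [NormedSpace ℝ X] [CompleteSpace X]
    (γ δ : ℝ) (hγ1 : 1 < γ) (hγ2 : γ < 2) (hδ0 : 0 ≤ δ) (hδ1 : δ ≤ 1)
    (C : ℝ → X →L[ℝ] X) (hC : GenFracCosine γ δ C) :
    Dense {x : X | ∃ y : X, InGen γ δ C x y} := by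
  have hb : 0 < γ + δ * (2 - γ) - 1 := by nlinarith [mul_nonneg hδ0 (by linarith : (0:ℝ) ≤ 2 - γ)]
  have hGb : 0 < Real.Gamma (γ + δ * (2 - γ) - 1) := Real.Gamma_pos_of_pos hb
  have hGγb : 0 < Real.Gamma (γ + (γ + δ * (2 - γ) - 1)) :=
    Real.Gamma_pos_of_pos (by linarith)
  have e1 : γ + δ * (2 - γ) - 2 = (γ + δ * (2 - γ) - 1) - 1 := by ring
  have e2 : 2 * γ + δ * (2 - γ) - 2 = γ + (γ + δ * (2 - γ) - 1) - 1 := by ring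
  have e3 : 2 * γ + δ * (2 - γ) - 1 = γ + (γ + δ * (2 - γ) - 1) := by ring
  -- the generic limit
  have genLimit : ∀ z : X, Tendsto (fun s : ℝ => Real.Gamma (2 * γ + δ * (2 - γ) - 1) •
      (s ^ (2 * γ + δ * (2 - γ) - 2))⁻¹ • RLv γ (fun τ => C τ z) s) (𝓝[>] (0:ℝ)) (𝓝 z) := by
    intro z
    have hlim := hC.limit z
    rw [e1] at hlim
    have base := tendsto_RL hγ1 hb (fun τ => C τ z)
      ((Real.Gamma (γ + δ * (2 - γ) - 1))⁻¹ • z) (hC.strongCont z) hlim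
    have final := base.const_smul (Real.Gamma (γ + (γ + δ * (2 - γ) - 1)))
    have hval : Real.Gamma (γ + (γ + δ * (2 - γ) - 1)) •
        (Real.Gamma (γ + δ * (2 - γ) - 1) / Real.Gamma (γ + (γ + δ * (2 - γ) - 1))) •
          (Real.Gamma (γ + δ * (2 - γ) - 1))⁻¹ • z = z := by
      rw [smul_smul, smul_smul]
      have : Real.Gamma (γ + (γ + δ * (2 - γ) - 1)) *
          (Real.Gamma (γ + δ * (2 - γ) - 1) / Real.Gamma (γ + (γ + δ * (2 - γ) - 1))) *
            (Real.Gamma (γ + δ * (2 - γ) - 1))⁻¹ = 1 := by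
        field_simp
      rw [this, one_smul]
    rw [hval] at final
    simpa only [e2, e3] using final
  -- membership of the regularized elements
  have memD : ∀ t : ℝ, 0 < t → ∀ x : X,
      ∃ y, InGen γ δ C (RLv γ (fun τ => C τ x) t) y := by
    intro t ht x
    refine ⟨C t x - (t ^ (γ + δ * (2 - γ) - 2) / Real.Gamma (γ + δ * (2 - γ) - 1)) • x, ?_⟩
    rw [InGen]
    have lim3 := (genLimit (C t x)).sub ((genLimit x).const_smul
      (t ^ (γ + δ * (2 - γ) - 2) / Real.Gamma (γ + δ * (2 - γ) - 1)))
    refine lim3.congr' ?_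
    filter_upwards [self_mem_nhdsWithin] with s hs
    have hfe := hC.funEq t s ht hs x
    have key2 : C s (RLv γ (fun τ => C τ x) t)
        - (s ^ (γ + δ * (2 - γ) - 2) / Real.Gamma (γ + δ * (2 - γ) - 1)) •
          RLv γ (fun τ => C τ x) t
        = RLv γ (fun τ => C τ (C t x)) s
          - (t ^ (γ + δ * (2 - γ) - 2) / Real.Gamma (γ + δ * (2 - γ) - 1)) •
            RLv γ (fun τ => C τ x) s := sub_eq_sub_iff_sub_eq_sub.mp hfe
    rw [key2]
    module
  -- scalar invariance of the domain
  have smulMem : ∀ (r : ℝ) (x y : X), InGen γ δ C x y → InGen γ δ C (r • x) (r • y) := by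
    intro r x y hxy
    rw [InGen] at hxy ⊢
    refine (hxy.const_smul r).congr fun s => ?_
    rw [(C s).map_smul]
    module
  -- density
  intro x
  apply mem_closure_of_tendsto (genLimit x)
  filter_upwards [self_mem_nhdsWithin] with t ht
  obtain ⟨y, hy⟩ := memD t ht x
  have h1 := smulMem ((t ^ (2 * γ + δ * (2 - γ) - 2))⁻¹) _ _ hy
  have h2 := smulMem (Real.Gamma (2 * γ + δ * (2 - γ) - 1)) _ _ h1
  exact ⟨_, h2⟩
end

section
/- Let {C_{γ,δ}(t)}_{t>0} be a general fractional cosine operator function of order γ ∈ (1,2) and type δ ∈ [0,1] with generator A. Then for every x ∈ D(A), the map t ↦ C_{γ,δ}(t)x is continuously differentiable on (0,∞), with derivative (d/dt)C_{γ,δ}(t)x = ((γ+δ(2−γ)−2)/Γ(γ+δ(2−γ)−1)) t^{γ+δ(2−γ)−3} x + J_t^{γ−1} C_{γ,δ}(t) A x. -/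
open MeasureTheory Filter Topology Set

section scalar

/-- bound of rpow on an interval, for either sign of exponent -/
lemma rpow_bound {x lo hi q : ℝ} (hlo : 0 < lo) (h1 : lo ≤ x) (h2 : x ≤ hi) :
    x ^ q ≤ max (lo ^ q) (hi ^ q) := by
  rcases le_or_gt 0 q with hq | hq
  · exact le_max_of_le_right (Real.rpow_le_rpow (hlo.le.trans h1) h2 hq)
  · exact le_max_of_le_left (Real.rpow_le_rpow_of_nonpos hlo h1 hq.le)

lemma integrableOn_rpow_Ioc {p : ℝ} (hp : -1 < p) {a b : ℝ} :
    IntegrableOn (fun τ : ℝ => τ ^ p) (Ioc a b) volume := by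
  rcases le_or_gt b a with h | h
  · simp [Ioc_eq_empty_of_le h]
  · have := (intervalIntegral.intervalIntegrable_rpow' (a := a) (b := b) hp)
    rw [intervalIntegrable_iff_integrableOn_Ioc_of_le h.le] at this
    exact this

/-- integrability of `τ ^ p * (s - τ) ^ q` on `(0, s]`. -/
lemma integrableOn_beta_scaled {p q s : ℝ} (hp : -1 < p) (hq : -1 < q) (hs : 0 < s) :
    IntegrableOn (fun τ : ℝ => τ ^ p * (s - τ) ^ q) (Ioc 0 s) volume := by
  have hmeas : AEStronglyMeasurable (fun τ : ℝ => τ ^ p * (s - τ) ^ q) volume :=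
    ((measurable_id.pow_const p).mul
      ((measurable_const.sub measurable_id).pow_const q)).aestronglyMeasurable
  have hsplit : Ioc (0:ℝ) s = Ioc 0 (s/2) ∪ Ioc (s/2) s := by
    rw [Ioc_union_Ioc_eq_Ioc (by linarith) (by linarith)]
  rw [hsplit]
  apply IntegrableOn.union
  · -- on (0, s/2]: (s-τ)^q bounded
    refine Integrable.mono' ((integrableOn_rpow_Ioc hp).const_mul (max ((s/2) ^ q) (s ^ q)))
      (hmeas.restrict) ?_
    filter_upwards [ae_restrict_mem measurableSet_Ioc] with τ hτ
    simp only [mem_Ioc] at hτ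
    have h1 : s/2 ≤ s - τ := by linarith [hτ.2]
    have h2 : s - τ ≤ s := by linarith [hτ.1]
    have hb := rpow_bound (q := q) (by linarith : (0:ℝ) < s/2) h1 h2
    rw [Real.norm_eq_abs, abs_mul, abs_of_nonneg (Real.rpow_nonneg (le_of_lt hτ.1) p),
      abs_of_nonneg (Real.rpow_nonneg (by linarith) q)]
    calc τ ^ p * (s - τ) ^ q ≤ τ ^ p * max ((s/2) ^ q) (s ^ q) :=
          mul_le_mul_of_nonneg_left hb (Real.rpow_nonneg (le_of_lt hτ.1) p)
      _ = max ((s/2) ^ q) (s ^ q) * τ ^ p := by ring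
  · -- on (s/2, s]: τ^p bounded
    have hint : IntegrableOn (fun τ : ℝ => (s - τ) ^ q) (Ioc (s/2) s) volume := by
      have h0 : IntervalIntegrable (fun x : ℝ => x ^ q) volume 0 (s/2) :=
        intervalIntegral.intervalIntegrable_rpow' hq
      have := (h0.comp_sub_left s).symm
      rw [sub_zero, show s - s/2 = s/2 by ring] at this
      rw [intervalIntegrable_iff_integrableOn_Ioc_of_le (by linarith)] at this
      exact this
    refine Integrable.mono' (hint.const_mul (max ((s/2) ^ p) (s ^ p)))
      (hmeas.restrict) ?_
    filter_upwards [ae_restrict_mem measurableSet_Ioc] with τ hτ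
    simp only [mem_Ioc] at hτ
    have hb := rpow_bound (q := p) (by linarith : (0:ℝ) < s/2) hτ.1.le hτ.2
    rw [Real.norm_eq_abs, abs_mul, abs_of_nonneg (Real.rpow_nonneg (by linarith) p),
      abs_of_nonneg (Real.rpow_nonneg (by linarith) q)]
    calc τ ^ p * (s - τ) ^ q ≤ max ((s/2) ^ p) (s ^ p) * (s - τ) ^ q :=
          mul_le_mul_of_nonneg_right hb (Real.rpow_nonneg (by linarith) q)
      _ = _ := rfl

lemma integrableOn_beta {p q : ℝ} (hp : -1 < p) (hq : -1 < q) :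
    IntegrableOn (fun σ : ℝ => σ ^ p * (1 - σ) ^ q) (Ioc 0 1) volume :=
  integrableOn_beta_scaled hp hq one_pos

/-- Euler Beta integral, real version. -/
lemma beta_value {p q : ℝ} (hp : -1 < p) (hq : -1 < q) :
    ∫ σ in (0:ℝ)..1, σ ^ p * (1 - σ) ^ q
      = Real.Gamma (p+1) * Real.Gamma (q+1) / Real.Gamma (p+q+2) := by
  have hu : 0 < ((p:ℂ)+1).re := by simp; linarith
  have hv : 0 < ((q:ℂ)+1).re := by simp; linarith
  have hbeta := Complex.Gamma_mul_Gamma_eq_betaIntegral hu hv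
  have hcast : Complex.betaIntegral ((p:ℂ)+1) ((q:ℂ)+1)
      = ((∫ σ in (0:ℝ)..1, σ ^ p * (1 - σ) ^ q : ℝ) : ℂ) := by
    rw [Complex.betaIntegral, ← intervalIntegral.integral_ofReal]
    apply intervalIntegral.integral_congr
    intro x hx
    rw [uIcc_of_le zero_le_one] at hx
    have hx0 : (0:ℝ) ≤ x := hx.1
    have hx1 : (0:ℝ) ≤ 1 - x := by linarith [hx.2]
    dsimp only
    rw [show ((p:ℂ)+1-1) = ((p:ℝ):ℂ) by ring, show ((q:ℂ)+1-1) = ((q:ℝ):ℂ) by ring,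
      show ((1:ℂ) - (x:ℂ)) = (((1 - x : ℝ)) : ℂ) by push_cast; ring,
      ← Complex.ofReal_cpow hx0, ← Complex.ofReal_cpow hx1, ← Complex.ofReal_mul]
  rw [hcast] at hbeta
  have hG : Complex.Gamma ((p:ℂ)+1) = (Real.Gamma (p+1) : ℂ) := by
    rw [← Complex.ofReal_one, ← Complex.ofReal_add, Complex.Gamma_ofReal]
  have hG' : Complex.Gamma ((q:ℂ)+1) = (Real.Gamma (q+1) : ℂ) := by
    rw [← Complex.ofReal_one, ← Complex.ofReal_add, Complex.Gamma_ofReal]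
  have hG'' : Complex.Gamma ((p:ℂ)+1+((q:ℂ)+1)) = (Real.Gamma (p+q+2) : ℂ) := by
    rw [show ((p:ℂ)+1+((q:ℂ)+1)) = ((p+q+2 : ℝ) : ℂ) by push_cast; ring, Complex.Gamma_ofReal]
  rw [hG, hG', hG''] at hbeta
  have hbeta' : Real.Gamma (p+1) * Real.Gamma (q+1)
      = Real.Gamma (p+q+2) * ∫ σ in (0:ℝ)..1, σ ^ p * (1 - σ) ^ q := by
    exact_mod_cast hbeta
  have hGpos : 0 < Real.Gamma (p+q+2) := Real.Gamma_pos_of_pos (by linarith)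
  rw [hbeta', mul_div_cancel_left₀ _ (ne_of_gt hGpos)]

end scalar

section vec

variable {X : Type*} [NormedAddCommGroup X] [NormedSpace ℝ X]

/-- scaling substitution `τ = t σ` for kernels `(t-τ)^c`. -/
lemma scale_integral (f : ℝ → X) (c t : ℝ) (ht : 0 < t) :
    ∫ τ in (0:ℝ)..t, (t - τ) ^ c • f τ
      = t ^ (c+1) • ∫ σ in (0:ℝ)..1, (1 - σ) ^ c • f (t * σ) := by
  have h1 : ∫ σ in (0:ℝ)..1, (t - t * σ) ^ c • f (t * σ)
      = t⁻¹ • ∫ τ in (0:ℝ)..t, (t - τ) ^ c • f τ := by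
    have := intervalIntegral.integral_comp_mul_left
      (fun τ => (t - τ) ^ c • f τ) (ne_of_gt ht) (a := 0) (b := 1)
    simpa using this
  have h2 : ∀ σ ∈ uIcc (0:ℝ) 1, (t - t*σ) ^ c • f (t*σ)
      = t ^ c • ((1 - σ) ^ c • f (t * σ)) := by
    intro σ hσ
    rw [uIcc_of_le zero_le_one] at hσ
    rw [show t - t*σ = t * (1-σ) by ring, Real.mul_rpow ht.le (by linarith [hσ.2]), mul_smul]
  rw [intervalIntegral.integral_congr h2, intervalIntegral.integral_smul] at h1
  have := congrArg (fun v => t • v) h1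
  rw [smul_smul, smul_smul, mul_inv_cancel₀ (ne_of_gt ht), one_smul] at this
  rw [← this, Real.rpow_add_one (ne_of_gt ht), mul_comm]

/-- scalar version: beta-type整 integral scaling. -/
lemma scale_integral_scalar (p q t : ℝ) (ht : 0 < t) :
    ∫ τ in (0:ℝ)..t, τ ^ p * (t - τ) ^ q
      = t ^ (p+q+1) * ∫ σ in (0:ℝ)..1, σ ^ p * (1 - σ) ^ q := by
  have h := scale_integral (X := ℝ) (fun τ => τ ^ p) q t ht
  simp only [smul_eq_mul] at h
  have h2 : ∀ σ ∈ uIcc (0:ℝ) 1, (1 - σ) ^ q * (t*σ) ^ p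
      = t ^ p * (σ ^ p * (1 - σ) ^ q) := by
    intro σ hσ
    rw [uIcc_of_le zero_le_one] at hσ
    rw [Real.mul_rpow ht.le hσ.1]
    ring
  rw [intervalIntegral.integral_congr h2, intervalIntegral.integral_const_mul] at h
  have h3 : ∀ τ ∈ uIcc (0:ℝ) t, τ ^ p * (t - τ) ^ q = (t - τ) ^ q * τ ^ p := by
    intro τ _; ring
  rw [intervalIntegral.integral_congr h3, h,
    show p+q+1 = (q+1)+p by ring, Real.rpow_add ht (q+1) p]
  ring


variable {u : ℝ → X} {a c M : ℝ} {L : X}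

lemma aesm_kernel_unit (hu : ContinuousOn u (Ioi 0)) (c : ℝ) {t : ℝ} (ht : 0 < t) :
    AEStronglyMeasurable (fun σ => (1 - σ) ^ c • u (t * σ)) (volume.restrict (Ioc 0 1)) := by
  apply AEStronglyMeasurable.smul
  · exact ((measurable_const.sub measurable_id).pow_const c).aestronglyMeasurable
  · refine ContinuousOn.aestronglyMeasurable ?_ measurableSet_Ioc
    refine hu.comp (continuous_const.mul continuous_id).continuousOn ?_
    intro σ hσ
    exact mul_pos ht hσ.1

lemma aesm_kernel (hu : ContinuousOn u (Ioi 0)) (c : ℝ) (s : ℝ) :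
    AEStronglyMeasurable (fun τ => (s - τ) ^ c • u τ) (volume.restrict (Ioc 0 s)) := by
  apply AEStronglyMeasurable.smul
  · exact ((measurable_const.sub measurable_id).pow_const c).aestronglyMeasurable
  · exact (hu.mono Ioc_subset_Ioi_self).aestronglyMeasurable measurableSet_Ioc

lemma int_kernel (hu : ContinuousOn u (Ioi 0)) (ha : -1 < a) (hc : -1 < c) {s : ℝ} (hs : 0 < s)
    (hbd : ∀ τ ∈ Ioc (0:ℝ) s, ‖u τ‖ ≤ M * τ ^ a) :
    IntegrableOn (fun τ => (s - τ) ^ c • u τ) (Ioc 0 s) volume := by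
  refine Integrable.mono' (((integrableOn_beta_scaled ha hc hs).const_mul M))
    (aesm_kernel hu c s) ?_
  filter_upwards [ae_restrict_mem measurableSet_Ioc] with τ hτ
  rw [norm_smul, Real.norm_eq_abs, abs_of_nonneg (Real.rpow_nonneg (by linarith [hτ.2]) c)]
  calc (s - τ) ^ c * ‖u τ‖ ≤ (s - τ) ^ c * (M * τ ^ a) :=
        mul_le_mul_of_nonneg_left (hbd τ hτ) (Real.rpow_nonneg (by linarith [hτ.2]) c)
    _ = M * (τ ^ a * (s - τ) ^ c) := by ring

lemma int_kernel_unit (hu : ContinuousOn u (Ioi 0)) (ha : -1 < a) (hc : -1 < c)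
    {t : ℝ} (ht : 0 < t) (hbd : ∀ τ ∈ Ioc (0:ℝ) t, ‖u τ‖ ≤ M * τ ^ a) (hM : 0 ≤ M) :
    IntegrableOn (fun σ => (1 - σ) ^ c • u (t * σ)) (Ioc 0 1) volume := by
  refine Integrable.mono' ((integrableOn_beta ha hc).const_mul (M * t ^ a))
    (aesm_kernel_unit hu c ht) ?_
  filter_upwards [ae_restrict_mem measurableSet_Ioc] with σ hσ
  have h1c : (0:ℝ) ≤ (1 - σ) ^ c := Real.rpow_nonneg (by linarith [hσ.2]) c
  rw [norm_smul, Real.norm_eq_abs, abs_of_nonneg h1c]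
  have htσ : t * σ ∈ Ioc (0:ℝ) t := by
    constructor
    · exact mul_pos ht hσ.1
    · calc t * σ ≤ t * 1 := mul_le_mul_of_nonneg_left hσ.2 ht.le
        _ = t := mul_one t
  calc (1 - σ) ^ c * ‖u (t * σ)‖ ≤ (1 - σ) ^ c * (M * (t * σ) ^ a) :=
        mul_le_mul_of_nonneg_left (hbd _ htσ) h1c
    _ = M * t ^ a * (σ ^ a * (1 - σ) ^ c) := by
        rw [Real.mul_rpow ht.le hσ.1.le]; ring

lemma cont_kernel_average (hu : ContinuousOn u (Ioi 0)) (ha : -1 < a) (ha0 : a ≤ 0)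
    (hc : -1 < c)
    (hbd : ∀ s : ℝ, 0 < s → ∃ M, 0 ≤ M ∧ ∀ τ ∈ Ioc (0:ℝ) s, ‖u τ‖ ≤ M * τ ^ a) :
    ContinuousOn (fun t => ∫ σ in Ioc (0:ℝ) 1, (1 - σ) ^ c • u (t * σ)) (Ioi 0) := by
  intro t₀ ht₀
  have ht₀' : (0:ℝ) < t₀ := ht₀
  refine ContinuousAt.continuousWithinAt ?_
  obtain ⟨M, hM0, hM⟩ := hbd (2 * t₀) (by linarith)
  have hbound_int : IntegrableOn
      (fun σ : ℝ => M * (t₀/2) ^ a * (σ ^ a * (1 - σ) ^ c)) (Ioc 0 1) volume :=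
    (integrableOn_beta ha hc).const_mul _
  refine MeasureTheory.tendsto_integral_filter_of_dominated_convergence
    (fun σ => M * (t₀/2) ^ a * (σ ^ a * (1 - σ) ^ c)) ?_ ?_ hbound_int ?_
  · filter_upwards [Ioi_mem_nhds ht₀'] with t ht
    exact aesm_kernel_unit hu c ht
  · filter_upwards [Ioo_mem_nhds (by linarith : t₀/2 < t₀) (by linarith : t₀ < 2*t₀)] with t ht
    filter_upwards [ae_restrict_mem measurableSet_Ioc] with σ hσ
    have ht2 : (0:ℝ) < t := lt_trans (by linarith) ht.1
    have h1c : (0:ℝ) ≤ (1 - σ) ^ c := Real.rpow_nonneg (by linarith [hσ.2]) c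
    rw [norm_smul, Real.norm_eq_abs, abs_of_nonneg h1c]
    have htσ : t * σ ∈ Ioc (0:ℝ) (2*t₀) := by
      constructor
      · exact mul_pos ht2 hσ.1
      · calc t * σ ≤ t * 1 := mul_le_mul_of_nonneg_left hσ.2 ht2.le
          _ = t := mul_one t
          _ ≤ 2*t₀ := ht.2.le
    have hta : t ^ a ≤ (t₀/2) ^ a :=
      Real.rpow_le_rpow_of_nonpos (by linarith) ht.1.le ha0
    calc (1 - σ) ^ c * ‖u (t * σ)‖ ≤ (1 - σ) ^ c * (M * (t * σ) ^ a) :=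
          mul_le_mul_of_nonneg_left (hM _ htσ) h1c
      _ = M * (σ ^ a * (1 - σ) ^ c) * t ^ a := by
          rw [Real.mul_rpow ht2.le hσ.1.le]; ring
      _ ≤ M * (σ ^ a * (1 - σ) ^ c) * (t₀/2) ^ a := by
          apply mul_le_mul_of_nonneg_left hta
          have := Real.rpow_nonneg hσ.1.le a
          positivity
      _ = M * (t₀/2) ^ a * (σ ^ a * (1 - σ) ^ c) := by ring
  · filter_upwards [ae_restrict_mem measurableSet_Ioc] with σ hσ
    have hcu : ContinuousAt u (t₀ * σ) :=
      hu.continuousAt (Ioi_mem_nhds (mul_pos ht₀' hσ.1))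
    have hmul : ContinuousAt (fun t : ℝ => t * σ) t₀ :=
      (continuous_id.mul continuous_const).continuousAt
    exact (Tendsto.comp hcu hmul).const_smul ((1 - σ) ^ c : ℝ)

lemma lim_kernel_average [CompleteSpace X] (hu : ContinuousOn u (Ioi 0)) (ha : -1 < a) (hc : -1 < c)
    (hL : Tendsto (fun τ => (τ ^ a)⁻¹ • u τ) (𝓝[>] (0:ℝ)) (𝓝 L)) :
    Tendsto (fun t => (t ^ a)⁻¹ • ∫ σ in Ioc (0:ℝ) 1, (1 - σ) ^ c • u (t * σ))
      (𝓝[>] (0:ℝ))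
      (𝓝 ((Real.Gamma (a+1) * Real.Gamma (c+1) / Real.Gamma (a+c+2)) • L)) := by
  set K := ‖L‖ + 1 with hK
  have hKpos : 0 < K := by positivity
  have hev : ∀ᶠ τ in 𝓝[>] (0:ℝ), ‖(τ ^ a)⁻¹ • u τ‖ ≤ K := by
    filter_upwards [hL.norm.eventually_lt_const (lt_add_one ‖L‖)] with τ h
    exact h.le
  obtain ⟨ε, hε, hsub⟩ := mem_nhdsGT_iff_exists_Ioo_subset.mp hev
  have hεpos : (0:ℝ) < ε := hε
  -- the transformed integrand
  set G : ℝ → ℝ → X := fun t σ => (σ ^ a * (1 - σ) ^ c) • ((t * σ) ^ a)⁻¹ • u (t * σ)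
    with hG
  have key : Tendsto (fun t => ∫ σ in Ioc (0:ℝ) 1, G t σ) (𝓝[>] (0:ℝ))
      (𝓝 (∫ σ in Ioc (0:ℝ) 1, (σ ^ a * (1 - σ) ^ c) • L)) := by
    refine MeasureTheory.tendsto_integral_filter_of_dominated_convergence
      (fun σ => σ ^ a * (1 - σ) ^ c * K) ?_ ?_
      (((integrableOn_beta ha hc).mul_const K)) ?_
    · filter_upwards [self_mem_nhdsWithin] with t (ht : (0:ℝ) < t)
      apply AEStronglyMeasurable.smul
      · exact ((measurable_id.pow_const a).mul
          ((measurable_const.sub measurable_id).pow_const c)).aestronglyMeasurable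
      · apply AEStronglyMeasurable.smul
        · exact (((measurable_const_mul t).pow_const a).inv).aestronglyMeasurable
        · refine ContinuousOn.aestronglyMeasurable ?_ measurableSet_Ioc
          refine hu.comp (continuous_const.mul continuous_id).continuousOn ?_
          intro σ hσ
          exact mul_pos ht hσ.1
    · filter_upwards [Ioo_mem_nhdsGT_of_mem ⟨le_refl (0:ℝ), hεpos⟩] with t ht
      filter_upwards [ae_restrict_mem measurableSet_Ioc] with σ hσ
      have h1c : (0:ℝ) ≤ (1 - σ) ^ c := Real.rpow_nonneg (by linarith [hσ.2]) c
      have hσa : (0:ℝ) ≤ σ ^ a := Real.rpow_nonneg hσ.1.le a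
      have htσ : t * σ ∈ Ioo (0:ℝ) ε := by
        constructor
        · exact mul_pos ht.1 hσ.1
        · calc t * σ ≤ t * 1 := mul_le_mul_of_nonneg_left hσ.2 ht.1.le
            _ = t := mul_one t
            _ < ε := ht.2
      have := hsub htσ
      rw [hG, norm_smul, Real.norm_eq_abs, abs_of_nonneg (by positivity)]
      exact mul_le_mul_of_nonneg_left this (by positivity)
    · filter_upwards [ae_restrict_mem measurableSet_Ioc] with σ hσ
      have htend : Tendsto (fun t : ℝ => t * σ) (𝓝[>] (0:ℝ)) (𝓝[>] (0:ℝ)) := by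
        apply tendsto_nhdsWithin_of_tendsto_nhds_of_eventually_within
        · have : Tendsto (fun t : ℝ => t * σ) (𝓝 (0:ℝ)) (𝓝 (0*σ)) :=
            (continuous_id.mul continuous_const).tendsto 0
          rw [zero_mul] at this
          exact this.mono_left nhdsWithin_le_nhds
        · filter_upwards [self_mem_nhdsWithin] with t (ht : (0:ℝ) < t)
          exact mul_pos ht hσ.1
      exact (hL.comp htend).const_smul _
  -- identify the two expressions
  have heq : ∀ᶠ t in 𝓝[>] (0:ℝ),
      (fun t => ∫ σ in Ioc (0:ℝ) 1, G t σ) t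
        = (t ^ a)⁻¹ • ∫ σ in Ioc (0:ℝ) 1, (1 - σ) ^ c • u (t * σ) := by
    filter_upwards [self_mem_nhdsWithin] with t (ht : (0:ℝ) < t)
    rw [← MeasureTheory.integral_smul]
    apply MeasureTheory.setIntegral_congr_fun measurableSet_Ioc
    intro σ hσ
    have hσa : σ ^ a ≠ 0 := ne_of_gt (Real.rpow_pos_of_pos hσ.1 a)
    rw [hG]
    dsimp only
    rw [Real.mul_rpow ht.le hσ.1.le, mul_inv, smul_smul, smul_smul]
    congr 1
    field_simp
  have hval : ∫ σ in Ioc (0:ℝ) 1, (σ ^ a * (1 - σ) ^ c) • L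
      = (Real.Gamma (a+1) * Real.Gamma (c+1) / Real.Gamma (a+c+2)) • L := by
    rw [integral_smul_const]
    congr 1
    rw [← intervalIntegral.integral_of_le zero_le_one, beta_value ha hc]
  rw [hval] at key
  exact key.congr' heq


/-- a function with a power-type limit at `0+` and continuity on `(0,∞)` satisfies a
global power bound on `(0,s]`. -/
lemma bound_of_lim (hwc : ContinuousOn u (Ioi 0)) (ha0 : a ≤ 0)
    (hw : Tendsto (fun τ => (τ ^ a)⁻¹ • u τ) (𝓝[>] (0:ℝ)) (𝓝 L)) {s : ℝ} (hs : 0 < s) :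
    ∃ M, 0 ≤ M ∧ ∀ τ ∈ Ioc (0:ℝ) s, ‖u τ‖ ≤ M * τ ^ a := by
  set K := ‖L‖ + 1 with hK
  have hKpos : 0 < K := by positivity
  have hev : ∀ᶠ τ in 𝓝[>] (0:ℝ), ‖(τ ^ a)⁻¹ • u τ‖ ≤ K := by
    filter_upwards [hw.norm.eventually_lt_const (lt_add_one ‖L‖)] with τ h
    exact h.le
  obtain ⟨ε, hε, hsub⟩ := mem_nhdsGT_iff_exists_Ioo_subset.mp hev
  have hεpos : (0:ℝ) < ε := hε
  -- bound on the compact part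
  obtain ⟨K₂, hK₂⟩ := (isCompact_Icc (a := ε) (b := s)).exists_bound_of_continuousOn
    (hwc.mono (fun τ hτ => lt_of_lt_of_le hεpos hτ.1))
  set M := max K (max K₂ 0 / s ^ a) with hM
  have hsa : (0:ℝ) < s ^ a := Real.rpow_pos_of_pos hs a
  have hM0 : 0 ≤ M := le_trans hKpos.le (le_max_left _ _)
  refine ⟨M, hM0, fun τ hτ => ?_⟩
  have hτa : (0:ℝ) < τ ^ a := Real.rpow_pos_of_pos hτ.1 a
  rcases lt_or_ge τ ε with hlt | hge
  · have h1 : ‖(τ ^ a)⁻¹ • u τ‖ ≤ K := hsub ⟨hτ.1, hlt⟩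
    have h2 : ‖(τ ^ a)⁻¹ • u τ‖ = (τ ^ a)⁻¹ * ‖u τ‖ := by
      rw [norm_smul, Real.norm_eq_abs, abs_inv, abs_of_pos hτa]
    rw [h2] at h1
    have h3 : ‖u τ‖ ≤ K * τ ^ a := by
      have := mul_le_mul_of_nonneg_left h1 hτa.le
      rw [← mul_assoc, mul_inv_cancel₀ (ne_of_gt hτa), one_mul] at this
      linarith [this]
    calc ‖u τ‖ ≤ K * τ ^ a := h3
      _ ≤ M * τ ^ a := mul_le_mul_of_nonneg_right (le_max_left _ _) hτa.le
  · have h1 : ‖u τ‖ ≤ max K₂ 0 := le_trans (hK₂ τ ⟨hge, hτ.2⟩) (le_max_left _ _)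
    have h2 : s ^ a ≤ τ ^ a := Real.rpow_le_rpow_of_nonpos hτ.1 hτ.2 ha0
    calc ‖u τ‖ ≤ max K₂ 0 := h1
      _ = max K₂ 0 / s ^ a * s ^ a := by field_simp
      _ ≤ max K₂ 0 / s ^ a * τ ^ a := by
          apply mul_le_mul_of_nonneg_left h2
          positivity
      _ ≤ M * τ ^ a := mul_le_mul_of_nonneg_right (le_max_right _ _) hτa.le

end vec

section op

variable {X : Type*} [NormedAddCommGroup X] [NormedSpace ℝ X]
variable {γ δ : ℝ} {C : ℝ → X →L[ℝ] X}

lemma RLv_eq (f : ℝ → X) (α : ℝ) {t : ℝ} (ht : 0 < t) :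
    RLv α f t
      = (Real.Gamma α)⁻¹ • t ^ α • ∫ σ in Ioc (0:ℝ) 1, (1 - σ) ^ (α - 1) • f (t * σ) := by
  rw [RLv, scale_integral f (α-1) t ht, sub_add_cancel,
    intervalIntegral.integral_of_le zero_le_one]

lemma expA_gt (hγ1 : 1 < γ) (hγ2 : γ < 2) (hδ0 : 0 ≤ δ) : -1 < γ + δ * (2 - γ) - 2 := by
  nlinarith [mul_nonneg hδ0 (by linarith : (0:ℝ) ≤ 2 - γ)]

lemma expA_le (hγ2 : γ < 2) (hδ1 : δ ≤ 1) : γ + δ * (2 - γ) - 2 ≤ 0 := by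
  nlinarith [mul_le_mul_of_nonneg_right hδ1 (by linarith : (0:ℝ) ≤ 2 - γ)]

lemma cbound (hC : GenFracCosine γ δ C) (hγ2 : γ < 2) (hδ1 : δ ≤ 1) (z : X) :
    ∀ s : ℝ, 0 < s →
      ∃ M, 0 ≤ M ∧ ∀ τ ∈ Ioc (0:ℝ) s, ‖C τ z‖ ≤ M * τ ^ (γ + δ * (2 - γ) - 2) :=
  fun _ hs => bound_of_lim (hC.strongCont z) (expA_le hγ2 hδ1) (hC.limit z) hs

lemma op_bound [CompleteSpace X] (hC : GenFracCosine γ δ C) (hγ2 : γ < 2) (hδ1 : δ ≤ 1)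
    {s : ℝ} (hs : 0 < s) :
    ∃ M, 0 ≤ M ∧ ∀ τ ∈ Ioc (0:ℝ) s, ‖C τ‖ ≤ M * τ ^ (γ + δ * (2 - γ) - 2) := by
  set A := γ + δ * (2 - γ) - 2 with hA
  have h : ∀ z : X, ∃ Mz : ℝ, ∀ τ : (Ioc (0:ℝ) s),
      ‖((((τ:ℝ) ^ A)⁻¹ • C τ) : X →L[ℝ] X) z‖ ≤ Mz := by
    intro z
    obtain ⟨M, hM0, hM⟩ := cbound hC hγ2 hδ1 z s hs
    refine ⟨M, fun τ => ?_⟩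
    have hτa : (0:ℝ) < (τ:ℝ) ^ A := Real.rpow_pos_of_pos τ.2.1 _
    rw [ContinuousLinearMap.smul_apply, norm_smul, Real.norm_eq_abs, abs_inv, abs_of_pos hτa]
    calc ((τ:ℝ) ^ A)⁻¹ * ‖C τ z‖ ≤ ((τ:ℝ) ^ A)⁻¹ * (M * (τ:ℝ) ^ A) :=
          mul_le_mul_of_nonneg_left (hM τ τ.2) (inv_nonneg.mpr hτa.le)
      _ = M := by field_simp
  obtain ⟨M', hM'⟩ := banach_steinhaus h
  refine ⟨max M' 0, le_max_right _ _, fun τ hτ => ?_⟩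
  have hτa : (0:ℝ) < τ ^ A := Real.rpow_pos_of_pos hτ.1 _
  have heq : C τ = (τ ^ A) • ((τ ^ A)⁻¹ • C τ) := by
    rw [smul_smul, mul_inv_cancel₀ (ne_of_gt hτa), one_smul]
  calc ‖C τ‖ = ‖(τ ^ A) • ((τ ^ A)⁻¹ • C τ)‖ := by rw [← heq]
    _ ≤ |τ ^ A| * ‖(τ ^ A)⁻¹ • C τ‖ := by
        simpa [Real.norm_eq_abs] using norm_smul_le (τ ^ A) ((τ ^ A)⁻¹ • C τ)
    _ ≤ |τ ^ A| * M' := by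
        apply mul_le_mul_of_nonneg_left (hM' ⟨τ, hτ⟩) (abs_nonneg _)
    _ ≤ max M' 0 * τ ^ A := by
        rw [abs_of_pos hτa]
        exact mul_le_mul_of_nonneg_left (le_max_left _ _) hτa.le |>.trans_eq (mul_comm _ _)

lemma RLv_lim [CompleteSpace X] (hC : GenFracCosine γ δ C)
    (hγ1 : 1 < γ) (hγ2 : γ < 2) (hδ0 : 0 ≤ δ) (hδ1 : δ ≤ 1) (z : X) :
    Tendsto (fun s : ℝ => Real.Gamma (2*γ + δ*(2-γ) - 1) • (s ^ (2*γ + δ*(2-γ) - 2))⁻¹ •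
      RLv γ (fun τ => C τ z) s) (𝓝[>] (0:ℝ)) (𝓝 z) := by
  set A := γ + δ * (2 - γ) - 2 with hA
  have hA1 : -1 < A := expA_gt hγ1 hγ2 hδ0
  have hγ0 : (0:ℝ) < γ := by linarith
  have e1 : γ + δ * (2 - γ) - 1 = A + 1 := by rw [hA]; ring
  have hlim : Tendsto (fun τ : ℝ => (τ ^ A)⁻¹ • C τ z) (𝓝[>] (0:ℝ))
      (𝓝 ((Real.Gamma (A+1))⁻¹ • z)) := by
    have h0 := hC.limit z
    rw [e1, ← hA] at h0
    exact h0
  have h := lim_kernel_average (hC.strongCont z) hA1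
    (by linarith : (-1:ℝ) < γ - 1) hlim
  have h2 := h.const_smul (Real.Gamma (2*γ + δ*(2-γ) - 1) / Real.Gamma γ)
  have hGγ : 0 < Real.Gamma γ := Real.Gamma_pos_of_pos hγ0
  have hGA : 0 < Real.Gamma (A+1) := Real.Gamma_pos_of_pos (by linarith)
  have hGb : 0 < Real.Gamma (2*γ + δ*(2-γ) - 1) := by
    apply Real.Gamma_pos_of_pos
    nlinarith [mul_nonneg hδ0 (by linarith : (0:ℝ) ≤ 2 - γ)]
  have hval : (Real.Gamma (2*γ + δ*(2-γ) - 1) / Real.Gamma γ) •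
      ((Real.Gamma (A+1) * Real.Gamma (γ-1+1) / Real.Gamma (A+(γ-1)+2)) •
        ((Real.Gamma (A+1))⁻¹ • z)) = z := by
    rw [smul_smul, smul_smul]
    have e2 : γ - 1 + 1 = γ := by ring
    have e3 : A + (γ-1) + 2 = 2*γ + δ*(2-γ) - 1 := by rw [hA]; ring
    rw [e2, e3]
    have : Real.Gamma (2*γ + δ*(2-γ) - 1) / Real.Gamma γ *
        (Real.Gamma (A+1) * Real.Gamma γ / Real.Gamma (2*γ + δ*(2-γ) - 1)) *
        (Real.Gamma (A+1))⁻¹ = 1 := by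
      field_simp
    rw [this, one_smul]
  rw [hval] at h2
  apply h2.congr'
  filter_upwards [self_mem_nhdsWithin] with t (ht : (0:ℝ) < t)
  have htγ : (0:ℝ) < t ^ γ := Real.rpow_pos_of_pos ht _
  have htA : (0:ℝ) < t ^ A := Real.rpow_pos_of_pos ht _
  rw [RLv_eq (fun τ => C τ z) γ ht]
  rw [smul_smul, smul_smul, smul_smul, smul_smul]
  congr 1
  have e4 : t ^ (2*γ + δ*(2-γ) - 2) = t ^ γ * t ^ A := by
    rw [← Real.rpow_add ht, hA]; ring_nf
  rw [e4]
  field_simp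

lemma repr_lemma [CompleteSpace X] (hC : GenFracCosine γ δ C)
    (hγ1 : 1 < γ) (hγ2 : γ < 2) (hδ0 : 0 ≤ δ) (hδ1 : δ ≤ 1) {x y : X}
    (hxy : InGen γ δ C x y) {s : ℝ} (hs : 0 < s) :
    C s x - (s ^ (γ + δ * (2 - γ) - 2) / Real.Gamma (γ + δ * (2 - γ) - 1)) • x
      = RLv γ (fun τ => C τ y) s := by
  have hA1 : -1 < γ + δ * (2 - γ) - 2 := expA_gt hγ1 hγ2 hδ0
  have hγc : (-1:ℝ) < γ - 1 := by linarith
  have hγG : 0 < Real.Gamma γ := Real.Gamma_pos_of_pos (by linarith)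
  set q : ℝ → X := fun t => Real.Gamma (2*γ + δ*(2-γ) - 1) •
    (t ^ (2*γ + δ*(2-γ) - 2))⁻¹ • RLv γ (fun τ => C τ x) t with hqdef
  set z : ℝ → X := fun t => Real.Gamma (2 * γ + δ * (2 - γ) - 1) •
    (t ^ (2 * γ + δ * (2 - γ) - 2))⁻¹ •
      (C t x - (t ^ (γ + δ * (2 - γ) - 2) / Real.Gamma (γ + δ * (2 - γ) - 1)) • x)
    with hzdef
  have hq : Tendsto q (𝓝[>] (0:ℝ)) (𝓝 x) := RLv_lim hC hγ1 hγ2 hδ0 hδ1 x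
  have hz : Tendsto z (𝓝[>] (0:ℝ)) (𝓝 y) := hxy
  -- the key identity, valid for every `t > 0`
  have key : ∀ t : ℝ, 0 < t →
      C s (q t) - (s ^ (γ + δ * (2 - γ) - 2) / Real.Gamma (γ + δ * (2 - γ) - 1)) • q t
        = (Real.Gamma γ)⁻¹ • ∫ τ in Ioc (0:ℝ) s, (s - τ) ^ (γ-1) • C τ (z t) := by
    intro t ht
    have hfe := hC.funEq t s ht hs x
    obtain ⟨M1, hM10, hM1⟩ := cbound hC hγ2 hδ1 (C t x) s hs
    obtain ⟨M2, hM20, hM2⟩ := cbound hC hγ2 hδ1 x s hs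
    have i1 : IntervalIntegrable (fun τ => (s - τ) ^ (γ-1) • C τ (C t x)) volume 0 s := by
      rw [intervalIntegrable_iff_integrableOn_Ioc_of_le hs.le]
      exact int_kernel (hC.strongCont (C t x)) hA1 hγc hs hM1
    have i2 : IntervalIntegrable (fun τ => (s - τ) ^ (γ-1) • C τ x) volume 0 s := by
      rw [intervalIntegrable_iff_integrableOn_Ioc_of_le hs.le]
      exact int_kernel (hC.strongCont x) hA1 hγc hs hM2
    set c : ℝ := t ^ (γ + δ * (2 - γ) - 2) / Real.Gamma (γ + δ * (2 - γ) - 1) with hc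
    have i2' : IntervalIntegrable (fun τ => c • ((s - τ) ^ (γ-1) • C τ x)) volume 0 s :=
      i2.smul c
    -- linearity step
    have lin : RLv γ (fun τ => C τ (C t x)) s - c • RLv γ (fun τ => C τ x) s
        = RLv γ (fun τ => C τ (C t x - c • x)) s := by
      rw [RLv, RLv, RLv]
      rw [smul_comm c, ← smul_sub]
      congr 1
      rw [← intervalIntegral.integral_smul, ← intervalIntegral.integral_sub i1 i2']
      apply intervalIntegral.integral_congr
      intro τ _
      dsimp only
      rw [map_sub, _root_.map_smul, smul_comm c, ← smul_sub]
    -- rearranged functional equation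
    have eq1 : C s (RLv γ (fun τ => C τ x) t)
        - (s ^ (γ + δ * (2 - γ) - 2) / Real.Gamma (γ + δ * (2 - γ) - 1)) •
            RLv γ (fun τ => C τ x) t
        = RLv γ (fun τ => C τ (C t x - c • x)) s := by
      rw [← lin]
      exact sub_eq_sub_iff_sub_eq_sub.mp hfe
    -- multiply by `r`
    set r : ℝ := Real.Gamma (2*γ + δ*(2-γ) - 1) * (t ^ (2*γ + δ*(2-γ) - 2))⁻¹ with hr
    have hqt : q t = r • RLv γ (fun τ => C τ x) t := by
      rw [hqdef]; dsimp only; rw [smul_smul]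
    have hzt : z t = r • (C t x - c • x) := by
      rw [hzdef]; dsimp only; rw [smul_smul]
    have rhseq : r • RLv γ (fun τ => C τ (C t x - c • x)) s
        = (Real.Gamma γ)⁻¹ • ∫ τ in Ioc (0:ℝ) s, (s - τ) ^ (γ-1) • C τ (z t) := by
      rw [RLv, smul_comm r, ← intervalIntegral.integral_smul,
        ← intervalIntegral.integral_of_le hs.le]
      congr 1
      apply intervalIntegral.integral_congr
      intro τ _
      dsimp only
      rw [smul_comm r, ← _root_.map_smul, ← hzt]
    have eq2 := congrArg (fun v => r • v) eq1
    rw [smul_sub, ← _root_.map_smul, smul_comm r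
        (s ^ (γ + δ * (2 - γ) - 2) / Real.Gamma (γ + δ * (2 - γ) - 1)),
      ← hqt, rhseq] at eq2
    exact eq2
  -- limits on both sides
  have hlhs : Tendsto (fun t => C s (q t)
      - (s ^ (γ + δ * (2 - γ) - 2) / Real.Gamma (γ + δ * (2 - γ) - 1)) • q t) (𝓝[>] (0:ℝ))
      (𝓝 (C s x - (s ^ (γ + δ * (2 - γ) - 2) / Real.Gamma (γ + δ * (2 - γ) - 1)) • x)) :=
    (((C s).continuous.tendsto x).comp hq).sub (hq.const_smul _)
  have hdct : Tendsto (fun t => ∫ τ in Ioc (0:ℝ) s, (s - τ) ^ (γ-1) • C τ (z t))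
      (𝓝[>] (0:ℝ)) (𝓝 (∫ τ in Ioc (0:ℝ) s, (s - τ) ^ (γ-1) • C τ y)) := by
    obtain ⟨Mo, hMo0, hMo⟩ := op_bound hC hγ2 hδ1 hs
    refine MeasureTheory.tendsto_integral_filter_of_dominated_convergence
      (fun τ => (Mo * (‖y‖+1)) * (τ ^ (γ + δ * (2 - γ) - 2) * (s - τ) ^ (γ-1)))
      ?_ ?_ ((integrableOn_beta_scaled hA1 hγc hs).const_mul _) ?_
    · exact Eventually.of_forall (fun t => aesm_kernel (hC.strongCont (z t)) (γ-1) s)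
    · have hybd : ∀ᶠ t in 𝓝[>] (0:ℝ), ‖z t‖ ≤ ‖y‖ + 1 := by
        filter_upwards [hz.norm.eventually_lt_const (lt_add_one ‖y‖)] with t h
        exact h.le
      filter_upwards [hybd] with t hty
      filter_upwards [ae_restrict_mem measurableSet_Ioc] with τ hτ
      have hkc : (0:ℝ) ≤ (s - τ) ^ (γ-1) := Real.rpow_nonneg (by linarith [hτ.2]) _
      have hτE : (0:ℝ) < τ ^ (γ + δ * (2 - γ) - 2) := Real.rpow_pos_of_pos hτ.1 _
      rw [norm_smul, Real.norm_eq_abs, abs_of_nonneg hkc]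
      have h1 : ‖C τ (z t)‖ ≤ ‖C τ‖ * ‖z t‖ := (C τ).le_opNorm _
      have h2 : ‖C τ‖ * ‖z t‖ ≤ (Mo * τ ^ (γ + δ * (2 - γ) - 2)) * (‖y‖+1) := by
        apply mul_le_mul (hMo τ hτ) hty (norm_nonneg _)
        positivity
      calc (s-τ)^(γ-1) * ‖C τ (z t)‖
          ≤ (s-τ)^(γ-1) * ((Mo * τ ^ (γ + δ * (2 - γ) - 2)) * (‖y‖+1)) :=
            mul_le_mul_of_nonneg_left (h1.trans h2) hkc
        _ = (Mo * (‖y‖+1)) * (τ ^ (γ + δ * (2 - γ) - 2) * (s - τ) ^ (γ-1)) := by ring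
    · refine Eventually.of_forall (fun τ => ?_)
      exact (((C τ).continuous.tendsto y).comp hz).const_smul _
  have hrhs := hdct.const_smul ((Real.Gamma γ)⁻¹)
  have keyev : (fun t => C s (q t)
      - (s ^ (γ + δ * (2 - γ) - 2) / Real.Gamma (γ + δ * (2 - γ) - 1)) • q t)
      =ᶠ[𝓝[>] (0:ℝ)]
      (fun t => (Real.Gamma γ)⁻¹ • ∫ τ in Ioc (0:ℝ) s, (s - τ) ^ (γ-1) • C τ (z t)) := by
    filter_upwards [self_mem_nhdsWithin] with t (ht : (0:ℝ) < t)
    exact key t ht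
  have huniq := tendsto_nhds_unique (hlhs.congr' keyev) hrhs
  rw [huniq, RLv, intervalIntegral.integral_of_le hs.le]

lemma RLv_cont (hC : GenFracCosine γ δ C)
    (hγ1 : 1 < γ) (hγ2 : γ < 2) (hδ0 : 0 ≤ δ) (hδ1 : δ ≤ 1) (z : X) :
    ContinuousOn (fun t => RLv (γ-1) (fun τ => C τ z) t) (Ioi 0) := by
  have hA1 : -1 < γ + δ * (2 - γ) - 2 := expA_gt hγ1 hγ2 hδ0
  have hc : (-1:ℝ) < γ - 1 - 1 := by linarith
  have hJ := cont_kernel_average (hC.strongCont z) hA1 (expA_le hγ2 hδ1) hc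
    (cbound hC hγ2 hδ1 z)
  have hpow : ContinuousOn (fun t : ℝ => t ^ (γ-1)) (Ioi 0) := fun t ht =>
    (Real.continuousAt_rpow_const t _ (Or.inl (ne_of_gt ht))).continuousWithinAt
  have hcont := (hpow.smul hJ).const_smul ((Real.Gamma (γ-1))⁻¹)
  apply hcont.congr
  intro t ht
  exact RLv_eq (fun τ => C τ z) (γ-1) ht

lemma RLv_fubini [CompleteSpace X] (hC : GenFracCosine γ δ C)
    (hγ1 : 1 < γ) (hγ2 : γ < 2) (hδ0 : 0 ≤ δ) (hδ1 : δ ≤ 1) (z : X) {t : ℝ} (ht : 0 < t) :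
    ∫ u in (0:ℝ)..t, RLv (γ-1) (fun τ => C τ z) u = RLv γ (fun τ => C τ z) t := by
  have hA1 : -1 < γ + δ * (2 - γ) - 2 := expA_gt hγ1 hγ2 hδ0
  have hc2 : (-1:ℝ) < γ - 1 - 1 := by linarith
  have hγ1G : 0 < Real.Gamma (γ-1) := Real.Gamma_pos_of_pos (by linarith)
  obtain ⟨M, hM0, hM⟩ := cbound hC hγ2 hδ1 z t ht
  have husm : AEStronglyMeasurable (fun τ => C τ z) (volume.restrict (Ioc 0 t)) :=
    ((hC.strongCont z).mono Ioc_subset_Ioi_self).aestronglyMeasurable measurableSet_Ioc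
  set μ := volume.restrict (Ioc (0:ℝ) t) with hμ
  set k : ℝ × ℝ → X :=
    fun p => if p.2 < p.1 then (p.1 - p.2) ^ (γ-1-1) • C p.2 z else 0 with hk
  -- measurability of `k`
  have hkm : AEStronglyMeasurable k (μ.prod μ) := by
    have h1 : AEStronglyMeasurable
        (fun p : ℝ×ℝ => (p.1 - p.2) ^ (γ-1-1) • C p.2 z) (μ.prod μ) := by
      apply AEStronglyMeasurable.smul
      · exact ((measurable_fst.sub measurable_snd).pow_const _).aestronglyMeasurable
      · exact husm.comp_snd
    have hset : MeasurableSet {p : ℝ×ℝ | p.2 < p.1} :=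
      measurableSet_lt measurable_snd measurable_fst
    have hke : k = Set.indicator {p : ℝ×ℝ | p.2 < p.1}
        (fun p => (p.1 - p.2) ^ (γ-1-1) • C p.2 z) := by
      funext p
      by_cases h : p.2 < p.1 <;> simp [hk, h, Set.indicator_apply, Set.mem_setOf_eq]
    rw [hke]
    exact h1.indicator hset
  -- slicewise integrability
  have hFi : ∀ s ∈ Ioc (0:ℝ) t,
      IntegrableOn (fun τ => (s - τ) ^ (γ-1-1) • C τ z) (Ioc 0 s) volume := by
    intro s hsm
    exact int_kernel (hC.strongCont z) hA1 hc2 hsm.1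
      (fun τ hτ => hM τ ⟨hτ.1, hτ.2.trans hsm.2⟩)
  have hslice : ∀ s ∈ Ioc (0:ℝ) t,
      (fun τ => k (s, τ)) = (Iio s).indicator (fun τ => (s - τ) ^ (γ-1-1) • C τ z) := by
    intro s _
    funext τ
    by_cases h : τ < s <;> simp [hk, h, Set.indicator_apply, mem_Iio]
  have hss : ∀ s ∈ Ioc (0:ℝ) t, Iio s ∩ Ioc (0:ℝ) t = Ioo 0 s := by
    intro s hsm
    ext τ
    simp only [mem_inter_iff, mem_Iio, mem_Ioc, mem_Ioo]
    constructor
    · rintro ⟨h1, h2, h3⟩; exact ⟨h2, h1⟩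
    · rintro ⟨h1, h2⟩; exact ⟨h2, h1, h2.le.trans hsm.2⟩
  have hint_i : ∀ s ∈ Ioc (0:ℝ) t, Integrable (fun τ => k (s, τ)) μ := by
    intro s hsm
    rw [hslice s hsm, hμ, integrable_indicator_iff measurableSet_Iio, IntegrableOn,
      Measure.restrict_restrict measurableSet_Iio, hss s hsm]
    exact (hFi s hsm).mono_set Ioo_subset_Ioc_self
  -- integrability on the product
  set Bc : ℝ := ∫ σ in (0:ℝ)..1, σ ^ (γ + δ * (2 - γ) - 2) * (1 - σ) ^ (γ-1-1) with hBc
  have hBc0 : 0 ≤ Bc := by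
    rw [hBc, intervalIntegral.integral_of_le zero_le_one]
    apply setIntegral_nonneg measurableSet_Ioc
    intro σ hσ
    exact mul_nonneg (Real.rpow_nonneg hσ.1.le _)
      (Real.rpow_nonneg (by linarith [hσ.2]) _)
  have hkint : Integrable k (μ.prod μ) := by
    rw [MeasureTheory.integrable_prod_iff hkm]
    constructor
    · filter_upwards [ae_restrict_mem measurableSet_Ioc] with s hsm
      exact hint_i s hsm
    · refine Integrable.mono'
        (g := fun s => (M * Bc) * s ^ ((γ + δ * (2 - γ) - 2) + (γ-1-1) + 1)) ?_ ?_ ?_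
      · exact (integrableOn_rpow_Ioc (by linarith)).const_mul _
      · exact hkm.norm.integral_prod_right'
      · filter_upwards [ae_restrict_mem measurableSet_Ioc] with s hsm
        have hnorm_eq : (fun τ => ‖k (s, τ)‖)
            = (Iio s).indicator (fun τ => ‖(s - τ) ^ (γ-1-1) • C τ z‖) := by
          funext τ
          rw [congrFun (hslice s hsm) τ, norm_indicator_eq_indicator_norm]
        have h1 : ∫ τ, ‖k (s, τ)‖ ∂μ
            = ∫ τ in Ioo (0:ℝ) s, ‖(s - τ) ^ (γ-1-1) • C τ z‖ := by
          rw [hnorm_eq, hμ, integral_indicator measurableSet_Iio,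
            Measure.restrict_restrict measurableSet_Iio, hss s hsm]
        have hbd_int : IntegrableOn
            (fun τ : ℝ => M * (τ ^ (γ + δ * (2 - γ) - 2) * (s - τ) ^ (γ-1-1)))
            (Ioc 0 s) volume := (integrableOn_beta_scaled hA1 hc2 hsm.1).const_mul M
        have h2 : ∫ τ in Ioo (0:ℝ) s, ‖(s - τ) ^ (γ-1-1) • C τ z‖
            ≤ ∫ τ in Ioc (0:ℝ) s,
                M * (τ ^ (γ + δ * (2 - γ) - 2) * (s - τ) ^ (γ-1-1)) := by
          have step1 : ∫ τ in Ioo (0:ℝ) s, ‖(s - τ) ^ (γ-1-1) • C τ z‖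
              ≤ ∫ τ in Ioc (0:ℝ) s, ‖(s - τ) ^ (γ-1-1) • C τ z‖ := by
            apply setIntegral_mono_set (hFi s hsm).norm
            · filter_upwards with τ using norm_nonneg _
            · exact HasSubset.Subset.eventuallyLE Ioo_subset_Ioc_self
          refine step1.trans ?_
          apply setIntegral_mono_on (hFi s hsm).norm hbd_int measurableSet_Ioc
          intro τ hτ
          have hkc : (0:ℝ) ≤ (s - τ) ^ (γ-1-1) := Real.rpow_nonneg (by linarith [hτ.2]) _
          rw [norm_smul, Real.norm_eq_abs, abs_of_nonneg hkc]
          calc (s - τ) ^ (γ-1-1) * ‖C τ z‖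
              ≤ (s - τ) ^ (γ-1-1) * (M * τ ^ (γ + δ * (2 - γ) - 2)) :=
                mul_le_mul_of_nonneg_left (hM τ ⟨hτ.1, hτ.2.trans hsm.2⟩) hkc
            _ = M * (τ ^ (γ + δ * (2 - γ) - 2) * (s - τ) ^ (γ-1-1)) := by ring
        have h3 : ∫ τ in Ioc (0:ℝ) s,
              M * (τ ^ (γ + δ * (2 - γ) - 2) * (s - τ) ^ (γ-1-1))
            = (M * Bc) * s ^ ((γ + δ * (2 - γ) - 2) + (γ-1-1) + 1) := by
          rw [MeasureTheory.integral_const_mul,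
            ← intervalIntegral.integral_of_le hsm.1.le,
            scale_integral_scalar _ _ s hsm.1, ← hBc]
          ring
        rw [Real.norm_eq_abs, h1,
          abs_of_nonneg (integral_nonneg (fun τ => norm_nonneg _))]
        rw [← h3]
        exact h2
  -- the double integral, both ways
  have hγeq : Real.Gamma γ = (γ-1) * Real.Gamma (γ-1) := by
    have h := Real.Gamma_add_one (s := γ-1) (by intro h; rw [sub_eq_zero] at h; linarith)
    rw [sub_add_cancel] at h
    exact h
  have hswap := MeasureTheory.integral_integral_swap (f := fun s τ => k (s, τ)) hkint
  have hL : ∫ s, (∫ τ, k (s, τ) ∂μ) ∂μ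
      = Real.Gamma (γ-1) • ∫ s in Ioc (0:ℝ) t, RLv (γ-1) (fun τ => C τ z) s := by
    rw [← integral_smul]
    apply integral_congr_ae
    filter_upwards [ae_restrict_mem measurableSet_Ioc] with s hsm
    rw [hslice s hsm, hμ, integral_indicator measurableSet_Iio,
      Measure.restrict_restrict measurableSet_Iio, hss s hsm,
      ← integral_Ioc_eq_integral_Ioo]
    rw [RLv, smul_smul, mul_inv_cancel₀ (ne_of_gt hγ1G), one_smul,
      intervalIntegral.integral_of_le hsm.1.le]
  have hR : ∫ τ, (∫ s, k (s, τ) ∂μ) ∂μ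
      = ((γ-1)⁻¹ * Real.Gamma γ) • RLv γ (fun τ => C τ z) t := by
    have hcong : ∀ τ ∈ Ioc (0:ℝ) t,
        (∫ s, k (s, τ) ∂μ) = ((γ-1)⁻¹ * (t - τ) ^ (γ-1)) • C τ z := by
      intro τ hτm
      have hksl : (fun s => k (s, τ))
          = (Ioi τ).indicator (fun s => (s - τ) ^ (γ-1-1) • C τ z) := by
        funext s'
        by_cases h : τ < s' <;> simp [hk, h, Set.indicator_apply, mem_Ioi]
      rw [hksl, hμ, integral_indicator measurableSet_Ioi,
        Measure.restrict_restrict measurableSet_Ioi]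
      have hIcap : Ioi τ ∩ Ioc (0:ℝ) t = Ioc τ t := by
        ext s'
        simp only [mem_inter_iff, mem_Ioi, mem_Ioc]
        constructor
        · rintro ⟨h1, _, h3⟩; exact ⟨h1, h3⟩
        · rintro ⟨h1, h2⟩; exact ⟨h1, hτm.1.trans h1, h2⟩
      rw [hIcap, integral_smul_const]
      congr 1
      rw [← intervalIntegral.integral_of_le hτm.2,
        intervalIntegral.integral_comp_sub_right (fun x => x ^ (γ-1-1)) τ, sub_self,
        integral_rpow (Or.inl hc2),
        Real.zero_rpow (by intro h; rw [show γ-1-1+1 = γ-1 by ring] at h; rw [sub_eq_zero] at h; linarith),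
        show γ-1-1+1 = γ-1 by ring]
      ring
    calc ∫ τ, (∫ s, k (s, τ) ∂μ) ∂μ
        = ∫ τ in Ioc (0:ℝ) t, ((γ-1)⁻¹ * (t - τ) ^ (γ-1)) • C τ z := by
          apply integral_congr_ae
          filter_upwards [ae_restrict_mem measurableSet_Ioc] with τ hτm
          exact hcong τ hτm
      _ = (γ-1)⁻¹ • ∫ τ in Ioc (0:ℝ) t, (t - τ) ^ (γ-1) • C τ z := by
          rw [← integral_smul]
          apply setIntegral_congr_fun measurableSet_Ioc
          intro τ _
          dsimp only
          rw [mul_smul]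
      _ = ((γ-1)⁻¹ * Real.Gamma γ) • RLv γ (fun τ => C τ z) t := by
          rw [RLv, intervalIntegral.integral_of_le ht.le, smul_smul]
          congr 1
          rw [mul_assoc, mul_inv_cancel₀ (ne_of_gt (Real.Gamma_pos_of_pos
            (by linarith : (0:ℝ) < γ))), mul_one]
  rw [hL, hR] at hswap
  have hcoef : ((γ-1)⁻¹ * Real.Gamma γ) = Real.Gamma (γ-1) := by
    rw [hγeq, ← mul_assoc, inv_mul_cancel₀ (by intro h; rw [sub_eq_zero] at h; linarith), one_mul]
  rw [hcoef] at hswap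
  have := smul_right_injective X (ne_of_gt hγ1G) hswap
  rw [intervalIntegral.integral_of_le ht.le]
  exact this
end op

theorem stmt9 {X : Type*} [NormedAddCommGroup X] [NormedSpace ℝ X] [CompleteSpace X]
    (γ δ : ℝ) (hγ1 : 1 < γ) (hγ2 : γ < 2) (hδ0 : 0 ≤ δ) (hδ1 : δ ≤ 1)
    (C : ℝ → X →L[ℝ] X) (hC : GenFracCosine γ δ C) :
    ∀ x y : X, InGen γ δ C x y →
      (∀ t : ℝ, 0 < t → HasDerivAt (fun s => C s x)
        (((γ + δ * (2 - γ) - 2) / Real.Gamma (γ + δ * (2 - γ) - 1)) •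
            (t ^ (γ + δ * (2 - γ) - 3)) • x
          + RLv (γ - 1) (fun τ => C τ y) t) t) ∧
      ContinuousOn (fun t => deriv (fun s => C s x) t) (Set.Ioi 0) := by
  intro x y hxy
  have hA1 : -1 < γ + δ * (2 - γ) - 2 := expA_gt hγ1 hγ2 hδ0
  have hc2 : (-1:ℝ) < γ - 1 - 1 := by linarith
  have hγ1G : 0 < Real.Gamma (γ-1) := Real.Gamma_pos_of_pos (by linarith)
  have hGA : 0 < Real.Gamma (γ + δ * (2 - γ) - 1) := Real.Gamma_pos_of_pos (by linarith)
  set g : ℝ → X := fun u => RLv (γ-1) (fun τ => C τ y) u with hg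
  have hgc : ContinuousOn g (Ioi 0) := RLv_cont hC hγ1 hγ2 hδ0 hδ1 y
  -- interval integrability of g on (0, b] for every b > 0
  have hgint : ∀ b : ℝ, 0 < b → IntervalIntegrable g volume 0 b := by
    intro b hb
    obtain ⟨M, hM0, hM⟩ := cbound hC hγ2 hδ1 y b hb
    set Bc : ℝ := ∫ σ in Ioc (0:ℝ) 1, σ ^ (γ + δ * (2 - γ) - 2) * (1 - σ) ^ (γ-1-1)
      with hBc
    have hBc0 : 0 ≤ Bc := by
      rw [hBc]
      apply setIntegral_nonneg measurableSet_Ioc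
      intro σ hσ
      exact mul_nonneg (Real.rpow_nonneg hσ.1.le _)
        (Real.rpow_nonneg (by linarith [hσ.2]) _)
    rw [intervalIntegrable_iff_integrableOn_Ioc_of_le hb.le]
    refine Integrable.mono'
      (g := fun s => ((Real.Gamma (γ-1))⁻¹ * (M * Bc))
        * s ^ (γ - 1 + (γ + δ * (2 - γ) - 2)))
      ((integrableOn_rpow_Ioc (by linarith)).const_mul _)
      ((hgc.mono Ioc_subset_Ioi_self).aestronglyMeasurable measurableSet_Ioc) ?_
    filter_upwards [ae_restrict_mem measurableSet_Ioc] with s hs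
    rw [hg]
    dsimp only
    rw [RLv_eq (fun τ => C τ y) (γ-1) hs.1]
    rw [norm_smul, norm_smul, Real.norm_eq_abs, Real.norm_eq_abs,
      abs_of_nonneg (inv_nonneg.mpr hγ1G.le),
      abs_of_nonneg (Real.rpow_nonneg hs.1.le _)]
    have hJb : ‖∫ σ in Ioc (0:ℝ) 1, (1-σ) ^ (γ-1-1) • C (s*σ) y‖
        ≤ (M * s ^ (γ + δ * (2 - γ) - 2)) * Bc := by
      have hIb : Integrable
          (fun σ : ℝ => (M * s ^ (γ + δ * (2 - γ) - 2))
            * (σ ^ (γ + δ * (2 - γ) - 2) * (1-σ) ^ (γ-1-1)))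
          (volume.restrict (Ioc (0:ℝ) 1)) := (integrableOn_beta hA1 hc2).const_mul _
      refine (norm_integral_le_of_norm_le hIb ?_).trans_eq ?_
      swap
      · rw [MeasureTheory.integral_const_mul, ← hBc]
      filter_upwards [ae_restrict_mem measurableSet_Ioc] with σ hσ
      have h1c : (0:ℝ) ≤ (1 - σ) ^ (γ-1-1) := Real.rpow_nonneg (by linarith [hσ.2]) _
      rw [norm_smul, Real.norm_eq_abs, abs_of_nonneg h1c]
      have hsσ : s * σ ∈ Ioc (0:ℝ) b := by
        constructor
        · exact mul_pos hs.1 hσ.1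
        · calc s * σ ≤ s * 1 := mul_le_mul_of_nonneg_left hσ.2 hs.1.le
            _ = s := mul_one s
            _ ≤ b := hs.2
      calc (1-σ) ^ (γ-1-1) * ‖C (s*σ) y‖
          ≤ (1-σ) ^ (γ-1-1) * (M * (s*σ) ^ (γ + δ * (2 - γ) - 2)) :=
            mul_le_mul_of_nonneg_left (hM _ hsσ) h1c
        _ = M * s ^ (γ + δ * (2 - γ) - 2) *
            (σ ^ (γ + δ * (2 - γ) - 2) * (1-σ) ^ (γ-1-1)) := by
            rw [Real.mul_rpow hs.1.le hσ.1.le]; ring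
    calc (Real.Gamma (γ-1))⁻¹ * (s ^ (γ-1) *
          ‖∫ σ in Ioc (0:ℝ) 1, (1-σ) ^ (γ-1-1) • C (s*σ) y‖)
        ≤ (Real.Gamma (γ-1))⁻¹ * (s ^ (γ-1) *
            ((M * s ^ (γ + δ * (2 - γ) - 2)) * Bc)) := by
          apply mul_le_mul_of_nonneg_left _ (inv_nonneg.mpr hγ1G.le)
          exact mul_le_mul_of_nonneg_left hJb (Real.rpow_nonneg hs.1.le _)
      _ = ((Real.Gamma (γ-1))⁻¹ * (M * Bc)) * s ^ (γ - 1 + (γ + δ * (2 - γ) - 2)) := by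
          rw [Real.rpow_add hs.1]
          ring
  -- the derivative statement
  have hder : ∀ t : ℝ, 0 < t → HasDerivAt (fun s => C s x)
      (((γ + δ * (2 - γ) - 2) / Real.Gamma (γ + δ * (2 - γ) - 1)) •
          (t ^ (γ + δ * (2 - γ) - 3)) • x
        + RLv (γ - 1) (fun τ => C τ y) t) t := by
    intro t ht
    have hFTC : HasDerivAt (fun u => ∫ v in (0:ℝ)..u, g v) (g t) t := by
      apply intervalIntegral.integral_hasDerivAt_right (hgint t ht)
      · exact ⟨Ioi 0, Ioi_mem_nhds ht, hgc.aestronglyMeasurable measurableSet_Ioi⟩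
      · exact hgc.continuousAt (Ioi_mem_nhds ht)
    have hpow : HasDerivAt
        (fun s : ℝ => (s ^ (γ + δ * (2 - γ) - 2) / Real.Gamma (γ + δ * (2 - γ) - 1)) • x)
        (((γ + δ * (2 - γ) - 2) * t ^ (γ + δ * (2 - γ) - 2 - 1)
          / Real.Gamma (γ + δ * (2 - γ) - 1)) • x) t := by
      have h1 : HasDerivAt (fun s : ℝ => s ^ (γ + δ * (2 - γ) - 2))
          ((γ + δ * (2 - γ) - 2) * t ^ (γ + δ * (2 - γ) - 2 - 1)) t :=
        Real.hasDerivAt_rpow_const (Or.inl (ne_of_gt ht))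
      exact (h1.div_const _).smul_const x
    have hsum := hpow.add hFTC
    have hev : (fun s => C s x) =ᶠ[𝓝 t]
        fun s => (s ^ (γ + δ * (2 - γ) - 2) / Real.Gamma (γ + δ * (2 - γ) - 1)) • x
          + ∫ v in (0:ℝ)..s, g v := by
      filter_upwards [Ioi_mem_nhds ht] with s (hs : (0:ℝ) < s)
      have hrepr := repr_lemma hC hγ1 hγ2 hδ0 hδ1 hxy hs
      have hfub := RLv_fubini hC hγ1 hγ2 hδ0 hδ1 y hs
      rw [← hfub] at hrepr
      exact sub_eq_iff_eq_add'.mp hrepr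
    have hderiv := hsum.congr_of_eventuallyEq hev
    have hmatch : ((γ + δ * (2 - γ) - 2) / Real.Gamma (γ + δ * (2 - γ) - 1)) •
          (t ^ (γ + δ * (2 - γ) - 3)) • x
        = (((γ + δ * (2 - γ) - 2) * t ^ (γ + δ * (2 - γ) - 2 - 1)
            / Real.Gamma (γ + δ * (2 - γ) - 1))) • x := by
      rw [smul_smul, show γ + δ * (2 - γ) - 3 = γ + δ * (2 - γ) - 2 - 1 from by ring]
      congr 1
      ring
    rw [hmatch]
    exact hderiv
  refine ⟨hder, ?_⟩
  have hDcont : ContinuousOn (fun t =>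
      ((γ + δ * (2 - γ) - 2) / Real.Gamma (γ + δ * (2 - γ) - 1)) •
          (t ^ (γ + δ * (2 - γ) - 3)) • x
        + RLv (γ - 1) (fun τ => C τ y) t) (Ioi 0) := by
    apply ContinuousOn.add
    · apply ContinuousOn.const_smul
      apply ContinuousOn.smul _ continuousOn_const
      intro t ht
      exact (Real.continuousAt_rpow_const t _ (Or.inl (ne_of_gt ht))).continuousWithinAt
    · exact RLv_cont hC hγ1 hγ2 hδ0 hδ1 y
  exact hDcont.congr (fun t ht => (hder t ht).deriv)
end
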